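/- arXiv:math/0602574 — 9 statements merged into one kernel-verified Lean document; each statement's English description precedes it below -/
import Mathlib

section
/- If $k$ and $m$ are nonnegative integers and $\mathcal{F}$ is a collection of subsets of a set $X$, then $\mathrm{st}^k\,\mathrm{st}^m\,\mathcal{F} = \mathrm{st}^{2km + m + k}\,\mathcal{F}$. -/
open Set ContinuousMap
open scoped ENNReal

namespace NobelingPaper

/-! Stars of indexed collections of sets. -/

/-- The star of a set `A` in an indexed collection `F`: the union of `A` with all
elements of `F` that intersect `A`. -/
def starSet {X ι : Type} (F : ι → Set X) (A : Set X) : Set X :=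
  A ∪ ⋃ i ∈ {i | (F i ∩ A).Nonempty}, F i

/-- The star of the collection `F` in the collection `H`. -/
def starIn {X ι κ : Type} (H : κ → Set X) (F : ι → Set X) : ι → Set X :=
  fun i => starSet H (F i)

/-- The `k`-th star of `F` in `H`. -/
def starInPow {X ι κ : Type} (H : κ → Set X) (F : ι → Set X) : ℕ → ι → Set X
  | 0 => F
  | k + 1 => starIn H (starInPow H F k)

/-- The `m`-th star of a collection: `st^m F = st_F (st^(m-1) F)`. -/
def starPow {X ι : Type} (F : ι → Set X) : ℕ → ι → Set X
  | 0 => F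
  | m + 1 => starIn F (starPow F m)

section Aux

variable {X ι : Type} (F : ι → Set X)

lemma mem_starSet {A : Set X} {x : X} :
    x ∈ starSet F A ↔ x ∈ A ∨ ∃ j, (F j ∩ A).Nonempty ∧ x ∈ F j := by
  simp [starSet]

lemma subset_starSet (A : Set X) : A ⊆ starSet F A := subset_union_left

lemma subset_iterate_starSet (m : ℕ) (A : Set X) : A ⊆ (starSet F)^[m] A := by
  induction m with
  | zero => simp
  | succ p ih =>
    rw [Function.iterate_succ_apply']
    exact ih.trans (subset_starSet F _)

lemma starSet_inter_aux {A B : Set X} (h : (starSet F B ∩ A).Nonempty) :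
    (B ∩ starSet F A).Nonempty := by
  obtain ⟨x, hxS, hxA⟩ := h
  rcases (mem_starSet F).1 hxS with hxB | ⟨j, hjB, hxj⟩
  · exact ⟨x, hxB, subset_starSet F A hxA⟩
  · obtain ⟨y, hyj, hyB⟩ := hjB
    exact ⟨y, hyB, (mem_starSet F).2 (Or.inr ⟨j, ⟨x, hxj, hxA⟩, hyj⟩)⟩

lemma starSet_inter_comm (A B : Set X) :
    (starSet F B ∩ A).Nonempty ↔ (B ∩ starSet F A).Nonempty := by
  constructor
  · exact starSet_inter_aux F
  · intro h
    rw [inter_comm]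
    exact (starSet_inter_aux F (by rwa [inter_comm] at h))

lemma iterate_starSet_inter_comm (m : ℕ) (A B : Set X) :
    ((starSet F)^[m] B ∩ A).Nonempty ↔ (B ∩ (starSet F)^[m] A).Nonempty := by
  induction m generalizing A B with
  | zero => simp
  | succ p ih =>
    rw [Function.iterate_succ_apply', starSet_inter_comm, ih,
      ← Function.iterate_succ_apply, Function.iterate_succ_apply']

lemma starSet_union (A B : Set X) :
    starSet F (A ∪ B) = starSet F A ∪ starSet F B := by
  ext x
  simp only [mem_starSet, mem_union, inter_union_distrib_left, union_nonempty]
  constructor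
  · rintro ((h|h) | ⟨j, (hj|hj), hx⟩)
    · exact Or.inl (Or.inl h)
    · exact Or.inr (Or.inl h)
    · exact Or.inl (Or.inr ⟨j, hj, hx⟩)
    · exact Or.inr (Or.inr ⟨j, hj, hx⟩)
  · rintro ((h|⟨j,hj,hx⟩) | (h|⟨j,hj,hx⟩))
    · exact Or.inl (Or.inl h)
    · exact Or.inr ⟨j, Or.inl hj, hx⟩
    · exact Or.inl (Or.inr h)
    · exact Or.inr ⟨j, Or.inr hj, hx⟩

lemma starSet_biUnion {κ : Type*} (s : Set κ) (B : κ → Set X) :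
    starSet F (⋃ l ∈ s, B l) = ⋃ l ∈ s, starSet F (B l) := by
  ext x
  simp only [mem_starSet, mem_iUnion, exists_prop]
  constructor
  · rintro (⟨l, hl, hx⟩ | ⟨j, ⟨y, hyj, hy⟩, hxj⟩)
    · exact ⟨l, hl, Or.inl hx⟩
    · simp only [mem_iUnion, exists_prop] at hy
      obtain ⟨l, hl, hyl⟩ := hy
      exact ⟨l, hl, Or.inr ⟨j, ⟨y, hyj, hyl⟩, hxj⟩⟩
  · rintro ⟨l, hl, hx | ⟨j, ⟨y, hyj, hyl⟩, hxj⟩⟩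
    · exact Or.inl ⟨l, hl, hx⟩
    · exact Or.inr ⟨j, ⟨y, hyj, by simp only [mem_iUnion, exists_prop]; exact ⟨l, hl, hyl⟩⟩, hxj⟩

/-- Expansion: `S^[p+1] B = B ∪ ⋃ {S^[p] (F l) : F l meets B}`. -/
lemma iterate_starSet_eq (p : ℕ) (B : Set X) :
    (starSet F)^[p+1] B
      = B ∪ ⋃ l ∈ {l | (F l ∩ B).Nonempty}, (starSet F)^[p] (F l) := by
  induction p generalizing B with
  | zero => simp [starSet]
  | succ p ih =>
    rw [Function.iterate_succ_apply', ih, starSet_union, starSet_biUnion]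
    simp only [← Function.iterate_succ_apply']
    have h1 : starSet F B = B ∪ ⋃ l ∈ {l | (F l ∩ B).Nonempty}, F l := rfl
    rw [h1, union_assoc]
    congr 1
    rw [union_eq_right]
    exact iUnion₂_subset fun l hl =>
      (subset_iterate_starSet F (p + 1) (F l)).trans
        (subset_iUnion₂ (s := fun l (_ : l ∈ {l | (F l ∩ B).Nonempty}) =>
          (starSet F)^[p+1] (F l)) l hl)

/-- The key step: starring once in `st^m F` is the same as `2m+1` stars in `F`. -/
lemma starSet_iterate_eq (m : ℕ) (A : Set X) :
    starSet (fun i => (starSet F)^[m] (F i)) A = (starSet F)^[2*m+1] A := by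
  have hU : starSet (fun i => (starSet F)^[m] (F i)) A
      = A ∪ ⋃ l ∈ {l | (F l ∩ (starSet F)^[m] A).Nonempty}, (starSet F)^[m] (F l) := by
    have : {l | ((starSet F)^[m] (F l) ∩ A).Nonempty}
        = {l | (F l ∩ (starSet F)^[m] A).Nonempty} := by
      ext l
      exact iterate_starSet_inter_comm F m A (F l)
    rw [starSet, this]
  have hR : (starSet F)^[2*m+1] A
      = (starSet F)^[m] A
        ∪ ⋃ l ∈ {l | (F l ∩ (starSet F)^[m] A).Nonempty}, (starSet F)^[m] (F l) := by
    have h2 : 2*m+1 = (m+1) + m := by ring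
    rw [h2, Function.iterate_add_apply, iterate_starSet_eq]
  rw [hU, hR]
  apply Subset.antisymm
  · exact union_subset ((subset_iterate_starSet F m A).trans subset_union_left)
      subset_union_right
  · apply union_subset _ subset_union_right
    -- S^[m] A ⊆ A ∪ ⋃ ...
    cases m with
    | zero => exact subset_union_left
    | succ p =>
      refine Subset.trans (iterate_starSet_eq F p A).subset ?_
      apply union_subset subset_union_left
      apply iUnion₂_subset
      intro l hl
      have hl' : l ∈ {l | (F l ∩ (starSet F)^[p+1] A).Nonempty} := by
        obtain ⟨y, hy1, hy2⟩ := hl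
        exact ⟨y, hy1, subset_iterate_starSet F (p+1) A hy2⟩
      have hmono : (starSet F)^[p] (F l) ⊆ (starSet F)^[p+1] (F l) := by
        rw [Function.iterate_succ_apply']
        exact subset_starSet F _
      exact (hmono.trans (subset_iUnion₂ (s := fun l (_ : l ∈ {l | (F l ∩ (starSet F)^[p+1] A).Nonempty}) => (starSet F)^[p+1] (F l)) l hl')).trans subset_union_right

lemma starPow_eq_iterate (m : ℕ) (i : ι) :
    starPow F m i = (starSet F)^[m] (F i) := by
  induction m with
  | zero => rfl
  | succ p ih =>
    show starSet F (starPow F p i) = _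
    rw [ih]
    exact (Function.iterate_succ_apply' _ _ _).symm

lemma starPow_starPow_aux (m k : ℕ) (i : ι) :
    starPow (starPow F m) k i = (starSet F)^[(2*m+1)*k + m] (F i) := by
  induction k with
  | zero => simp [starPow, starPow_eq_iterate]
  | succ k ih =>
    show starSet (starPow F m) (starPow (starPow F m) k i) = _
    have hF : starPow F m = fun i => (starSet F)^[m] (F i) := by
      funext j; exact starPow_eq_iterate F m j
    rw [ih, hF, starSet_iterate_eq, ← Function.iterate_add_apply]
    congr 1
    ring

end Aux

/-- `st^k (st^m F) = st^(2km + m + k) F`. -/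
theorem starPow_starPow {X ι : Type} (F : ι → Set X) (k m : ℕ) :
    starPow (starPow F m) k = starPow F (2 * k * m + m + k) := by
  funext i
  rw [starPow_starPow_aux, starPow_eq_iterate]
  congr 1
  ring

end NobelingPaper
end

section
/- The nerve of the cover of a simplicial complex $K$ by barycentric stars of its vertices is isomorphic to $K$: a set of vertices of $K$ spans a simplex of $K$ if and only if their barycentric stars have non-empty intersection. -/
open Set ContinuousMap
open scoped ENNReal

namespace NobelingPaper

/-- An abstract simplicial complex on a vertex type `V`: a collection of non-empty
finite sets of vertices, closed under passing to non-empty subsets. -/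
structure ASC (V : Type) where
  faces : Set (Finset V)
  nonempty_of_mem : ∀ s ∈ faces, s.Nonempty
  down_closed : ∀ s ∈ faces, ∀ t ⊆ s, t.Nonempty → t ∈ faces

/-- The set of vertices of a complex. -/
def ASC.vertices {V : Type} (K : ASC V) : Set V := {v | ({v} : Finset V) ∈ K.faces}

/-- The geometric realization of an abstract simplicial complex, as a subset of
`ℓ∞(V)`; its subspace topology is the metric topology of the complex.  A point is a
convex combination of the vertices of some face. -/
def realization {V : Type} (K : ASC V) : Set (lp (fun _ : V => ℝ) ∞) :=
  {x | ∃ s ∈ K.faces, (∀ v, 0 ≤ x v) ∧ (∀ v, v ∉ s → x v = 0) ∧ ∑ v ∈ s, x v = 1}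

/-- The barycentric star of a vertex `v`: the union of all simplices of the first
barycentric subdivision that contain `v`; equivalently, the set of points of the
realization whose `v`-th barycentric coordinate is maximal. -/
def bst {V : Type} (K : ASC V) (v : V) : Set (lp (fun _ : V => ℝ) ∞) :=
  {x | x ∈ realization K ∧ ∀ w, x w ≤ x v}

/-- The nerve of the cover of a simplicial complex `K` by the barycentric stars of
its vertices is isomorphic to `K`: a set of vertices of `K` spans a simplex if and
only if their barycentric stars have a common point. -/
theorem nerve_bst_iso {V : Type} (K : ASC V) (s : Finset V) (hs : s.Nonempty)
    (hv : ∀ v ∈ s, ({v} : Finset V) ∈ K.faces) :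
    s ∈ K.faces ↔ (⋂ v ∈ s, bst K v).Nonempty := by
  classical
  constructor
  · intro hsK
    set c : ℝ := (s.card : ℝ)⁻¹ with hc
    have hcard : (0 : ℝ) < s.card := by
      exact_mod_cast Finset.card_pos.mpr hs
    have hc0 : 0 ≤ c := inv_nonneg.mpr hcard.le
    set f : ∀ _ : V, ℝ := fun v => if v ∈ s then c else 0 with hf
    have hmem : Memℓp f ∞ := by
      apply memℓp_infty
      refine ⟨c, ?_⟩
      rintro r ⟨v, rfl⟩
      simp only [hf]
      by_cases h : v ∈ s <;> simp [h, abs_of_nonneg hc0, hc0]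
    set x : lp (fun _ : V => ℝ) ∞ := ⟨f, hmem⟩ with hx
    refine ⟨x, ?_⟩
    simp only [Set.mem_iInter]
    intro v hvs
    have hxval : ∀ w, x w = if w ∈ s then c else 0 := fun w => rfl
    have hreal : x ∈ realization K := by
      refine ⟨s, hsK, ?_, ?_, ?_⟩
      · intro w; rw [hxval]; by_cases h : w ∈ s <;> simp [h, hc0]
      · intro w hw; rw [hxval]; simp [hw]
      · have h1 : ∑ w ∈ s, x w = ∑ w ∈ s, c :=
          Finset.sum_congr rfl (fun w hw => by rw [hxval, if_pos hw])
        rw [h1, Finset.sum_const, nsmul_eq_mul, hc]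
        exact mul_inv_cancel₀ hcard.ne'
    refine ⟨hreal, ?_⟩
    intro w
    rw [hxval, hxval]
    simp only [hvs, if_true]
    by_cases h : w ∈ s <;> simp [h, hc0]
  · rintro ⟨x, hx⟩
    simp only [Set.mem_iInter] at hx
    obtain ⟨v₀, hv₀⟩ := hs
    obtain ⟨⟨t, htK, hnn, hsupp, hsum⟩, hmax⟩ := hx v₀ hv₀
    -- some w ∈ t has x w > 0
    have hpos : 0 < x v₀ := by
      by_contra h
      push_neg at h
      have hx0 : x v₀ = 0 := le_antisymm h (hnn v₀)
      have : (∑ w ∈ t, x w) = 0 := by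
        apply Finset.sum_eq_zero
        intro w hw
        exact le_antisymm (hx0 ▸ hmax w) (hnn w)
      rw [hsum] at this; norm_num at this
    have hsub : s ⊆ t := by
      intro v hvs
      obtain ⟨_, hmaxv⟩ := hx v hvs
      by_contra hvt
      have : x v = 0 := hsupp v hvt
      have : x v₀ ≤ 0 := this ▸ hmaxv v₀
      exact absurd hpos (not_lt.mpr this)
    exact K.down_closed t htK s hsub ⟨v₀, hv₀⟩

end NobelingPaper
end

section
/- Every non-empty intersection of barycentric stars of vertices of a simplicial complex is contractible. More precisely, if vertices $v_1,\dots,v_k$ of a simplicial complex $K$ span a simplex $\delta$, then $\bigcap_{j=1}^k \mathrm{bst}\,v_j$ is the full subcomplex of the first barycentric subdivision of $K$ spanned by the barycenters of faces containing $\delta$, which is a cone with apex the barycenter of $\delta$ and hence contractible. -/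
open Set ContinuousMap
open scoped ENNReal

namespace NobelingPaper

/-- The barycenter of a face, as a point of `ℓ∞(V)`. -/
noncomputable def bary {V : Type} (s : Finset V) : lp (fun _ : V => ℝ) ∞ :=
  letI := Classical.decEq V
  ⟨fun v => if v ∈ s then ((s.card : ℝ))⁻¹ else 0, by
    apply memℓp_infty
    refine ⟨((s.card : ℝ))⁻¹, ?_⟩
    rintro r ⟨v, rfl⟩
    simp only [Real.norm_eq_abs]
    split_ifs
    · rw [abs_of_nonneg (by positivity)]
    · simpa using (by positivity : (0 : ℝ) ≤ ((s.card : ℝ))⁻¹)⟩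

lemma bary_apply {V : Type} (s : Finset V) (v : V) :
    bary s v = (letI := Classical.decEq V; if v ∈ s then ((s.card : ℝ))⁻¹ else 0) := rfl

lemma bary_apply_mem {V : Type} {s : Finset V} {v : V} (h : v ∈ s) :
    bary s v = ((s.card : ℝ))⁻¹ := by rw [bary_apply]; exact if_pos h

lemma bary_apply_not_mem {V : Type} {s : Finset V} {v : V} (h : v ∉ s) :
    bary s v = 0 := by rw [bary_apply]; exact if_neg h

/-- If the vertices of `δ` span a simplex of `K`, then the intersection of their
barycentric stars is non-empty (it is a cone with apex the barycenter of `δ`) and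
contractible. -/
theorem iInter_bst_contractible {V : Type} (K : ASC V) (δ : Finset V)
    (hδ : δ ∈ K.faces) :
    bary δ ∈ (⋂ v ∈ δ, bst K v) ∧
      ContractibleSpace (⋂ v ∈ δ, bst K v) := by
  have hδne : δ.Nonempty := K.nonempty_of_mem δ hδ
  have hcard : (0 : ℝ) < δ.card := by exact_mod_cast hδne.card_pos
  -- barycenter is in the intersection
  have hmem : bary δ ∈ (⋂ v ∈ δ, bst K v) := by
    simp only [mem_iInter]
    intro v hv
    refine ⟨⟨δ, hδ, ?_, ?_, ?_⟩, ?_⟩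
    · intro w
      rw [bary_apply]; split_ifs <;> positivity
    · intro w hw; exact bary_apply_not_mem hw
    · have h : ∀ w ∈ δ, bary δ w = ((δ.card : ℝ))⁻¹ := fun w hw => bary_apply_mem hw
      rw [Finset.sum_congr rfl h]
      simp [Finset.sum_const, mul_inv_cancel₀ hcard.ne']
    · intro w
      rw [bary_apply_mem hv, bary_apply]
      split_ifs with h
      · exact le_refl _
      · positivity
  refine ⟨hmem, ?_⟩
  -- star convexity
  have hstar : StarConvex ℝ (bary δ) (⋂ v ∈ δ, bst K v) := by
    intro x hx a b ha hb hab
    simp only [mem_iInter] at hx ⊢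
    intro v hv
    obtain ⟨⟨s, hs, hpos, hsupp, hsum⟩, hmax⟩ := hx v hv
    -- δ ⊆ s
    have hδs : δ ⊆ s := by
      intro u hu
      obtain ⟨⟨s', hs', hpos', hsupp', hsum'⟩, hmax'⟩ := hx u hu
      by_contra hus
      have hxu : x u = 0 := hsupp u hus
      have : ∑ w ∈ s, x w = 0 := by
        apply Finset.sum_eq_zero
        intro w hw
        exact le_antisymm (hxu ▸ hmax' w) (hpos w)
      rw [hsum] at this; norm_num at this
    have key : ∀ w, (a • bary δ + b • x) w = a * bary δ w + b * x w := by
      intro w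
      rw [lp.coeFn_add, lp.coeFn_smul, lp.coeFn_smul]
      rfl
    refine ⟨⟨s, hs, ?_, ?_, ?_⟩, ?_⟩
    · intro w
      rw [key]
      have := hpos w
      have : (0:ℝ) ≤ bary δ w := by rw [bary_apply]; split_ifs <;> positivity
      have := hpos w
      positivity
    · intro w hw
      rw [key, hsupp w hw, bary_apply_not_mem (fun h => hw (hδs h))]
      ring
    · rw [Finset.sum_congr rfl (fun w _ => key w), Finset.sum_add_distrib,
        ← Finset.mul_sum, ← Finset.mul_sum, hsum]
      have : ∑ w ∈ s, bary δ w = 1 := by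
        have h : ∀ w ∈ δ, bary δ w = ((δ.card : ℝ))⁻¹ := fun w hw => bary_apply_mem hw
        have h0 : ∀ w ∈ s, w ∉ δ → bary δ w = 0 := fun w _ hw => bary_apply_not_mem hw
        rw [← Finset.sum_subset hδs h0, Finset.sum_congr rfl h]
        simp [Finset.sum_const, mul_inv_cancel₀ hcard.ne']
      rw [this]; linarith
    · intro w
      rw [key, key]
      have h1 : bary δ w ≤ bary δ v := by
        rw [bary_apply_mem hv, bary_apply]
        split_ifs
        · exact le_refl _
        · positivity
      have h2 := hmax w
      nlinarith
  exact hstar.contractibleSpace ⟨_, hmem⟩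

end NobelingPaper
end

section
/- Carrier theorem: Let $C: \mathcal{F} \to \mathcal{G}$ be a carrier, where $\mathcal{F}$ is a closed, locally finite, locally finite-dimensional cover of a space $X$ and $\mathcal{G}$ is a collection of subsets of a space $Y$ each non-empty intersection of whose elements appearing as a value $\bigcap_{A\in\mathcal{A}} C(A)$ is an absolute extensor for $X$. Then every map $f$ defined on a closed subset of $X$ and carried by $C$ extends to a map of all of $X$ that is also carried by $C$. -/
open Set ContinuousMap
open scoped ENNReal

namespace NobelingPaper

/-- A subset `S` of `Y` is an absolute extensor for the space `Z`: every map from a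
closed subset of `Z` into `S` extends over all of `Z` to a map into `S`. -/
def IsAbsExtFor (Z : Type) [TopologicalSpace Z] {Y : Type} [TopologicalSpace Y]
    (S : Set Y) : Prop :=
  ∀ (A : Set Z), IsClosed A → ∀ f : C(A, Y), (∀ a, f a ∈ S) →
    ∃ g : C(Z, Y), (∀ z, g z ∈ S) ∧ ∀ a : A, g a = f a

/-- A cover is locally finite dimensional: its nerve is a locally finite-dimensional
simplicial complex. -/
def LocFinDimCover {X ι : Type} (F : ι → Set X) : Prop :=
  ∀ i : ι, ∃ n : ℕ, ∀ J : Finset ι, i ∈ J → (⋂ j ∈ J, F j).Nonempty → J.card ≤ n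

set_option linter.unusedSectionVars false

section CarrierAux

variable {X Y ι : Type} [TopologicalSpace X] [TopologicalSpace Y]

/-- The closed set associated to a finite subfamily of the cover. -/
def Zint (F : ι → Set X) (J : Finset ι) : Set X := ⋂ i ∈ J, F i

lemma Zint_closed (F : ι → Set X) (hclosed : ∀ i, IsClosed (F i)) (J : Finset ι) :
    IsClosed (Zint F J) :=
  isClosed_biInter fun i _ => hclosed i

lemma Zint_anti (F : ι → Set X) {J J' : Finset ι} (h : J ⊆ J') : Zint F J' ⊆ Zint F J := by
  intro x hx
  simp only [Zint, mem_iInter] at hx ⊢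
  exact fun i hi => hx i (h hi)

lemma locallyFinite_Zint (F : ι → Set X) (hlocfin : LocallyFinite F) :
    LocallyFinite (Zint F) := by
  intro x
  obtain ⟨U, hU, hfin⟩ := hlocfin x
  refine ⟨U, hU, ?_⟩
  refine Set.Finite.subset (Finset.finite_toSet hfin.toFinset.powerset) ?_
  rintro J ⟨y, hyZ, hyU⟩
  simp only [Finset.coe_powerset, mem_preimage, mem_setOf_eq, Finset.coe_subset,
    Finset.mem_coe, Finset.mem_powerset]
  intro i hi
  rw [Finset.mem_coe, Set.Finite.mem_toFinset]
  have : y ∈ F i := by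
    simp only [Zint, mem_iInter] at hyZ
    exact hyZ i hi
  exact ⟨y, this, hyU⟩

/-- A partial carried extension: a map carried by `C` and extending `f`, defined
(continuously) on the union of `D` with the pieces `Zint F J` for `J` in an
upward-closed family `S` of finsets. -/
structure PE (F : ι → Set X) (C : ι → Set Y) (D : Set X) (f : C(D, Y)) where
  S : Set (Finset ι)
  g : X → Y
  up : ∀ J ∈ S, ∀ J' : Finset ι, J ⊆ J' → J' ∈ S
  cont : ContinuousOn g (D ∪ ⋃ J ∈ S, Zint F J)
  carried : ∀ i : ι, ∀ x : X, x ∈ D ∪ ⋃ J ∈ S, Zint F J → x ∈ F i → g x ∈ C i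
  eqf : ∀ x : D, g (x : X) = f x

variable {F : ι → Set X} {C : ι → Set Y} {D : Set X} {f : C(D, Y)}

/-- The domain of a partial extension. -/
def PE.dom (p : PE F C D f) : Set X := D ∪ ⋃ J ∈ p.S, Zint F J

lemma PE.dom_mono {p q : PE F C D f} (h : p.S ⊆ q.S) : p.dom ⊆ q.dom :=
  union_subset_union_right D (biUnion_subset_biUnion_left h)

lemma PE.subset_dom_left (p : PE F C D f) : D ⊆ p.dom := subset_union_left

lemma PE.Zint_subset_dom (p : PE F C D f) {J : Finset ι} (hJ : J ∈ p.S) :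
    Zint F J ⊆ p.dom :=
  (subset_biUnion_of_mem hJ).trans subset_union_right

lemma PE.cont' (p : PE F C D f) : ContinuousOn p.g p.dom := p.cont

lemma PE.carried' (p : PE F C D f) : ∀ i : ι, ∀ x : X, x ∈ p.dom → x ∈ F i → p.g x ∈ C i :=
  p.carried

instance : Preorder (PE F C D f) where
  le p q := p.S ⊆ q.S ∧ EqOn p.g q.g p.dom
  le_refl p := ⟨subset_rfl, eqOn_refl _ _⟩
  le_trans p q r hpq hqr :=
    ⟨hpq.1.trans hqr.1, fun x hx => (hpq.2 hx).trans (hqr.2 (PE.dom_mono hpq.1 hx))⟩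

end CarrierAux


/-- **Carrier theorem.**  Let `C : F → G` be a carrier, where `F` is a closed,
locally finite, locally finite-dimensional cover of `X` and every non-empty
intersection of values of `C` is an absolute extensor for `X`.  Then every map
defined on a closed subset of `X` and carried by `C` extends to a map of the entire
space, also carried by `C`. -/
theorem carrier_theorem {X Y ι : Type} [TopologicalSpace X] [TopologicalSpace Y]
    (F : ι → Set X) (C : ι → Set Y)
    (hcover : (⋃ i, F i) = univ) (hclosed : ∀ i, IsClosed (F i))
    (hlocfin : LocallyFinite F) (hlfd : LocFinDimCover F)
    (hcarrier : ∀ J : Set ι, (⋂ i ∈ J, F i).Nonempty → (⋂ i ∈ J, C i).Nonempty)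
    (hAE : ∀ J : Set ι, (⋂ i ∈ J, F i).Nonempty → IsAbsExtFor X (⋂ i ∈ J, C i))
    (D : Set X) (hD : IsClosed D) (f : C(D, Y))
    (hf : ∀ (i : ι) (x : D), (x : X) ∈ F i → f x ∈ C i) :
    ∃ g : C(X, Y), (∀ (i : ι) (x : X), x ∈ F i → g x ∈ C i) ∧ ∀ x : D, g x = f x := by
  -- Trivial case: empty space
  rcases isEmpty_or_nonempty X with hX | hX
  · have hcont : Continuous (fun x : X => (isEmptyElim x : Y)) := by
      rw [continuous_def]; intro s _
      rw [Set.eq_empty_of_isEmpty ((fun x : X => (isEmptyElim x : Y)) ⁻¹' s)]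
      exact isOpen_empty
    exact ⟨⟨fun x => isEmptyElim x, hcont⟩, fun i x => isEmptyElim x,
      fun x => isEmptyElim (x : X)⟩
  -- `Y` is nonempty
  obtain ⟨y₀, -⟩ : (⋂ i ∈ (∅ : Set ι), C i).Nonempty := by
    refine hcarrier ∅ ?_
    simp only [mem_empty_iff_false, iInter_of_empty, iInter_univ]
    exact univ_nonempty
  have hZcl : ∀ J : Finset ι, IsClosed (Zint F J) := Zint_closed F hclosed
  have hZlf : LocallyFinite (Zint F) := locallyFinite_Zint F hlocfin
  -- domains of partial extensions are closed
  have hdomcl : ∀ p : PE F C D f, IsClosed p.dom := by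
    intro p
    refine hD.union ?_
    rw [biUnion_eq_iUnion]
    exact ((hZlf.comp_injective Subtype.val_injective).isClosed_iUnion fun J => hZcl _)
  -- the bottom partial extension, defined on `D` only
  have hg₀ : ∃ p₀ : PE F C D f, p₀.S = ∅ := by
    classical
    refine ⟨⟨∅, fun x => if h : x ∈ D then f ⟨x, h⟩ else y₀, by simp, ?_, ?_, ?_⟩, rfl⟩
    · have : ContinuousOn (fun x => if h : x ∈ D then f ⟨x, h⟩ else y₀) D := by
        rw [continuousOn_iff_continuous_restrict]
        have : D.domRestrict (fun x => if h : x ∈ D then f ⟨x, h⟩ else y₀) = ⇑f := by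
          funext a; simp [a.2]
        rw [this]; exact f.continuous
      simpa using this
    · intro i x hx hxF
      simp only [mem_empty_iff_false, iUnion_of_empty, iUnion_empty, union_empty] at hx
      simpa [hx] using hf i ⟨x, hx⟩ hxF
    · intro x; simp [x.2]
  obtain ⟨p₀, -⟩ := hg₀
  -- Zorn's lemma
  have hchain : ∀ c : Set (PE F C D f), IsChain (· ≤ ·) c → BddAbove c := by
    intro c hc
    rcases eq_empty_or_nonempty c with rfl | ⟨p₁, hp₁⟩
    · exact ⟨p₀, fun p hp => absurd hp (notMem_empty p)⟩
    classical
    set Sc : Set (Finset ι) := ⋃ p ∈ c, PE.S p with hSc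
    set gc : X → Y := fun x =>
      if h : ∃ p ∈ c, x ∈ PE.dom p then (Classical.choose h).g x else p₁.g x with hgc
    have hcons : ∀ p ∈ c, ∀ x ∈ PE.dom p, gc x = p.g x := by
      intro p hp x hx
      have hex : ∃ p ∈ c, x ∈ PE.dom p := ⟨p, hp, hx⟩
      rw [hgc]; simp only [dif_pos hex]
      obtain ⟨hqc, hqx⟩ := Classical.choose_spec hex
      set q := Classical.choose hex
      rcases eq_or_ne p q with rfl | hne
      · rfl
      · rcases hc.total hp hqc with h | h
        · exact (h.2 hx).symm
        · exact h.2 hqx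
    have hdomc : ∀ x, x ∈ D ∪ ⋃ J ∈ Sc, Zint F J →
        ∃ p ∈ c, x ∈ PE.dom p ∧ gc x = p.g x := by
      intro x hx
      rcases hx with hx | hx
      · exact ⟨p₁, hp₁, PE.subset_dom_left p₁ hx, hcons p₁ hp₁ x (PE.subset_dom_left p₁ hx)⟩
      · simp only [mem_iUnion, exists_prop] at hx
        obtain ⟨J, hJ, hxJ⟩ := hx
        simp only [hSc, mem_iUnion, exists_prop] at hJ
        obtain ⟨p, hpc, hJp⟩ := hJ
        have hxd : x ∈ PE.dom p := PE.Zint_subset_dom p hJp hxJ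
        exact ⟨p, hpc, hxd, hcons p hpc x hxd⟩
    refine ⟨⟨Sc, gc, ?_, ?_, ?_, ?_⟩, ?_⟩
    · -- upward closed
      intro J hJ J' hJJ'
      simp only [hSc, mem_iUnion, exists_prop] at hJ ⊢
      obtain ⟨p, hpc, hJp⟩ := hJ
      exact ⟨p, hpc, p.up J hJp J' hJJ'⟩
    · -- continuity
      have hset : D ∪ ⋃ J ∈ Sc, Zint F J =
          ⋃ o : Option {J // J ∈ Sc}, (Option.elim' D (fun J => Zint F J.1)) o := by
        rw [iUnion_option, biUnion_eq_iUnion]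
        rfl
      rw [hset]
      refine LocallyFinite.continuousOn_iUnion ?_ ?_ ?_
      · exact ((hZlf.comp_injective Subtype.val_injective).option_elim' D)
      · rintro (_ | J)
        · exact hD
        · exact hZcl _
      · rintro (_ | J)
        · refine (p₁.cont'.mono (PE.subset_dom_left p₁)).congr ?_
          intro x hx
          exact hcons p₁ hp₁ x (PE.subset_dom_left p₁ hx)
        · obtain ⟨J, hJ⟩ := J
          simp only [hSc, mem_iUnion, exists_prop] at hJ
          obtain ⟨p, hpc, hJp⟩ := hJ
          refine (p.cont'.mono (PE.Zint_subset_dom p hJp)).congr ?_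
          intro x hx
          exact hcons p hpc x (PE.Zint_subset_dom p hJp hx)
    · -- carried
      intro i x hx hxF
      obtain ⟨p, hpc, hxd, hgx⟩ := hdomc x hx
      rw [hgx]
      exact p.carried' i x hxd hxF
    · -- extends f
      intro x
      rw [hcons p₁ hp₁ x (PE.subset_dom_left p₁ x.2)]
      exact p₁.eqf x
    · -- upper bound
      intro p hp
      constructor
      · intro J hJ
        simp only [hSc, mem_iUnion, exists_prop]
        exact ⟨p, hp, hJ⟩
      · intro x hx
        exact (hcons p hp x hx).symm
  obtain ⟨m, hm⟩ := zorn_le hchain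
  -- the maximal partial extension is defined everywhere
  have hdomuniv : m.dom = univ := by
    by_contra hne
    obtain ⟨x, hx⟩ : ∃ x, x ∉ m.dom := by
      by_contra h
      push_neg at h
      exact hne (eq_univ_of_forall h)
    classical
    -- the finite set of indices containing x
    have hJ₀fin : {i | x ∈ F i}.Finite := by
      obtain ⟨U, hU, hfin⟩ := hlocfin x
      refine hfin.subset fun i hi => ⟨x, hi, mem_of_mem_nhds hU⟩
    set J₀ : Finset ι := hJ₀fin.toFinset with hJ₀
    have hJ₀mem : ∀ i, i ∈ J₀ ↔ x ∈ F i := by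
      intro i; rw [hJ₀, Set.Finite.mem_toFinset]; rfl
    have hxZ : ∀ J : Finset ι, (J ⊆ J₀) → x ∈ Zint F J := by
      intro J hJ
      simp only [Zint, mem_iInter]
      exact fun i hi => (hJ₀mem i).1 (hJ hi)
    obtain ⟨i₀, hi₀⟩ : ∃ i, x ∈ F i := by
      have := hcover ▸ mem_univ x
      simpa using this
    have hi₀J₀ : i₀ ∈ J₀ := (hJ₀mem i₀).2 hi₀
    obtain ⟨n, hn⟩ := hlfd i₀
    -- the candidate finsets
    set T : Set (Finset ι) := {J | J₀ ⊆ J ∧ (Zint F J).Nonempty ∧ J ∉ m.S} with hT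
    have hJ₀T : J₀ ∈ T := by
      refine ⟨subset_rfl, ⟨x, hxZ J₀ subset_rfl⟩, ?_⟩
      intro hJ₀S
      exact hx (PE.Zint_subset_dom m hJ₀S (hxZ J₀ subset_rfl))
    have hTcard : ∀ J ∈ T, J.card ≤ n := by
      intro J hJ
      exact hn J (hJ.1 hi₀J₀) hJ.2.1
    -- choose a maximal-cardinality element of T
    obtain ⟨J, hJT, hJmax⟩ : ∃ J ∈ T, ∀ J' ∈ T, J.card ≤ J'.card → J.card = J'.card := by
      refine (Set.Finite.exists_maximalFor' Finset.card T ?_ ⟨J₀, hJ₀T⟩).imp fun J hJ =>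
        ⟨hJ.1, fun J' hJ' h => le_antisymm h (hJ.2 hJ' h)⟩
      refine (Set.finite_Icc 0 n).subset ?_
      rintro k ⟨J, hJ, rfl⟩
      exact ⟨Nat.zero_le _, hTcard J hJ⟩
    -- every strictly bigger finset with nonempty intersection is already in m.S
    have hsup : ∀ J' : Finset ι, J ⊆ J' → J' ≠ J → (Zint F J').Nonempty → J' ∈ m.S := by
      intro J' hJJ' hne' hZne
      by_contra hJ'S
      have hJ'T : J' ∈ T := ⟨hJT.1.trans hJJ', hZne, hJ'S⟩
      have hlt : J.card < J'.card :=
        Finset.card_lt_card (HasSubset.Subset.ssubset_of_ne hJJ' (Ne.symm hne'))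
      exact absurd (hJmax J' hJ'T hlt.le) hlt.ne
    -- extend over Zint F J using the absolute extensor property
    set B : Set X := m.dom with hB
    have hBcl : IsClosed B := hdomcl m
    have hA : IsClosed (B ∩ Zint F J) := hBcl.inter (hZcl J)
    have hZJne : (⋂ i ∈ (↑J : Set ι), F i).Nonempty := by
      rw [Finset.set_biInter_coe]; exact hJT.2.1
    have hZJeq : (⋂ i ∈ (↑J : Set ι), F i) = Zint F J := Finset.set_biInter_coe J F
    have hcontr : ContinuousOn m.g (B ∩ Zint F J) := m.cont'.mono inter_subset_left
    obtain ⟨g', hg'mem, hg'eq⟩ :=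
      hAE (↑J) hZJne (B ∩ Zint F J) hA ⟨(B ∩ Zint F J).restrict m.g, hcontr.restrict⟩
      (by
        rintro ⟨a, haB, haZ⟩
        simp only [Set.restrict_apply, mem_iInter]
        intro i hi
        have haF : a ∈ F i := by
          simp only [Zint, mem_iInter] at haZ
          exact haZ i (Finset.mem_coe.1 hi)
        exact m.carried' i a haB haF)
    -- the new, strictly bigger partial extension
    set S' : Set (Finset ι) := m.S ∪ {J' | J ⊆ J'} with hS'
    have hdomq : D ∪ ⋃ J' ∈ S', Zint F J' = B ∪ Zint F J := by
      apply Subset.antisymm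
      · rintro z (hz | hz)
        · exact Or.inl (PE.subset_dom_left m hz)
        · simp only [mem_iUnion, exists_prop] at hz
          obtain ⟨J', hJ', hzJ'⟩ := hz
          rcases hJ' with hJ' | hJ'
          · exact Or.inl (PE.Zint_subset_dom m hJ' hzJ')
          · exact Or.inr (Zint_anti F hJ' hzJ')
      · apply union_subset
        · exact union_subset_union_right D (biUnion_subset_biUnion_left subset_union_left)
        · refine subset_union_of_subset_right ?_ D
          exact subset_biUnion_of_mem (Or.inr (by simp : J ∈ {J' | J ⊆ J'}))
    set gq : X → Y := fun z => if z ∈ B then m.g z else g' z with hgq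
    have hgqB : EqOn gq m.g B := fun z hz => if_pos hz
    have hgqZ : EqOn gq (⇑g') (Zint F J) := by
      intro z hz
      by_cases hzB : z ∈ B
      · have := hg'eq ⟨z, hzB, hz⟩
        simp only [Set.restrict_apply] at this
        simp only [hgq, if_pos hzB]
        exact this.symm
      · simp [hgq, if_neg hzB]
    have hup : ∀ J' ∈ S', ∀ J'' : Finset ι, J' ⊆ J'' → J'' ∈ S' := by
      rintro J' (hJ' | hJ') J'' hJ'J''
      · exact Or.inl (m.up J' hJ' J'' hJ'J'')
      · exact Or.inr (hJ'.trans hJ'J'')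
    have hcontq : ContinuousOn gq (D ∪ ⋃ J' ∈ S', Zint F J') := by
      rw [hdomq]
      rw [Set.union_eq_iUnion]
      refine LocallyFinite.continuousOn_iUnion (locallyFinite_of_finite _) ?_ ?_
      · intro b; cases b
        · exact hZcl J
        · exact hBcl
      · intro b; cases b
        · exact (g'.continuous.continuousOn).congr hgqZ
        · exact ((m.cont' : ContinuousOn m.g m.dom)).congr hgqB
    have hcarrq : ∀ i : ι, ∀ z : X, z ∈ D ∪ ⋃ J' ∈ S', Zint F J' → z ∈ F i → gq z ∈ C i := by
      intro i z hz hzF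
      rw [hdomq] at hz
      by_cases hzB : z ∈ B
      · rw [hgqB hzB]
        exact m.carried' i z hzB hzF
      · have hzZ : z ∈ Zint F J := by
          rcases hz with hz | hz
          · exact absurd hz hzB
          · exact hz
        rw [hgqZ hzZ]
        by_cases hiJ : i ∈ J
        · have := hg'mem z
          simp only [mem_iInter] at this
          exact this i (Finset.mem_coe.2 hiJ)
        · exfalso
          have hzZ' : z ∈ Zint F (insert i J) := by
            simp only [Zint, mem_iInter, Finset.mem_insert]
            rintro j (rfl | hj)
            · exact hzF
            · simp only [Zint, mem_iInter] at hzZ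
              exact hzZ j hj
          have : insert i J ∈ m.S :=
            hsup (insert i J) (Finset.subset_insert i J)
              (fun h => hiJ (h ▸ Finset.mem_insert_self i J))
              ⟨z, hzZ'⟩
          exact hzB (PE.Zint_subset_dom m this hzZ')
    have heqfq : ∀ z : D, gq (z : X) = f z := by
      intro z
      have : (z : X) ∈ B := PE.subset_dom_left m z.2
      rw [hgqB this]
      exact m.eqf z
    let q : PE F C D f := ⟨S', gq, hup, hcontq, hcarrq, heqfq⟩
    -- contradiction with maximality
    have hmq : m ≤ q := by
      constructor
      · exact (subset_union_left : m.S ⊆ S')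
      · intro z hz
        exact (hgqB hz).symm
    have hqm := hm hmq
    have hJS : J ∈ m.S := hqm.1 (Or.inr (by simp : J ∈ {J' | J ⊆ J'}))
    exact hJT.2.2 hJS
  refine ⟨⟨m.g, ?_⟩, ?_, m.eqf⟩
  · rw [← continuousOn_univ]
    rw [← hdomuniv]
    exact m.cont'
  · intro i z hzF
    exact m.carried' i z (hdomuniv ▸ mem_univ z) hzF


end NobelingPaper
end

section
/- If a closed cover $\mathcal{G}$ of a space $Y$ is regular for $X \times [0,1]$ (i.e. it is a locally finite, locally finite-dimensional closed cover whose non-empty intersections are absolute extensors for $X\times[0,1]$), then any two $\mathcal{G}$-close maps from $X$ into $Y$ are $\mathcal{G}$-homotopic; moreover, the homotopy can be chosen so that whenever the endpoints of one of its paths lie in an element of $\mathcal{G}$, the entire path lies in that element. -/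
open Set ContinuousMap
open scoped ENNReal Classical

namespace NobelingPaper

section Aux

variable {X Y ι : Type} [TopologicalSpace X] [TopologicalSpace Y]

/-- Points whose images under both `f` and `g` lie in every `G i`, `i ∈ J`. -/
def Cset (G : ι → Set Y) (f g : C(X, Y)) (J : Finset ι) : Set X :=
  {x | ∀ i ∈ J, f x ∈ G i ∧ g x ∈ G i}

variable {G : ι → Set Y} {f g : C(X, Y)}

lemma Cset_anti {J J' : Finset ι} (h : J ⊆ J') : Cset G f g J' ⊆ Cset G f g J :=
  fun x hx i hi => hx i (h hi)

lemma mem_Cset_union {J J' : Finset ι} {x : X} :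
    x ∈ Cset G f g (J ∪ J') ↔ x ∈ Cset G f g J ∧ x ∈ Cset G f g J' := by
  constructor
  · intro h
    exact ⟨fun i hi => h i (Finset.mem_union_left _ hi),
      fun i hi => h i (Finset.mem_union_right _ hi)⟩
  · rintro ⟨h1, h2⟩ i hi
    rcases Finset.mem_union.mp hi with h | h
    exacts [h1 i h, h2 i h]

lemma isClosed_Cset (hclosed : ∀ i, IsClosed (G i)) (J : Finset ι) :
    IsClosed (Cset G f g J) := by
  have : Cset G f g J = ⋂ i ∈ J, (f ⁻¹' G i ∩ g ⁻¹' G i) := by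
    ext x
    simp [Cset]
  rw [this]
  exact isClosed_biInter fun i _ =>
    ((hclosed i).preimage f.continuous).inter ((hclosed i).preimage g.continuous)

lemma locallyFinite_Cset (hlocfin : LocallyFinite G) :
    LocallyFinite fun J : Finset ι => Cset G f g J := by
  intro x
  obtain ⟨V, hV, hVfin⟩ := hlocfin (f x)
  refine ⟨f ⁻¹' V, f.continuous.continuousAt.preimage_mem_nhds hV, ?_⟩
  have hsub : {J : Finset ι | (Cset G f g J ∩ f ⁻¹' V).Nonempty} ⊆
      (fun J : Finset ι => (J : Set ι)) ⁻¹' {t : Set ι | t ⊆ {i | (G i ∩ V).Nonempty}} := by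
    rintro J ⟨x', hx', hx'V⟩ i hi
    exact ⟨f x', (hx' i hi).1, hx'V⟩
  exact (Set.Finite.preimage (fun a _ b _ h => Finset.coe_injective h)
    hVfin.finite_subsets).subset hsub

/-- The "good" simplices: nonempty finite sets of indices whose associated
coincidence set is nonempty. -/
def Sgood (G : ι → Set Y) (f g : C(X, Y)) : Set (Finset ι) :=
  {J | J.Nonempty ∧ (Cset G f g J).Nonempty}

/-- The recursion relation: `J` is a predecessor of `K` iff `K ⊂ J`. -/
def rel (G : ι → Set Y) (f g : C(X, Y)) (J K : Sgood G f g) : Prop := K.1 ⊂ J.1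

lemma GJ_nonempty {J : Finset ι} (hJ : (Cset G f g J).Nonempty) :
    (⋂ i ∈ J, G i).Nonempty := by
  obtain ⟨x, hx⟩ := hJ
  exact ⟨f x, Set.mem_iInter₂.mpr fun i hi => (hx i hi).1⟩

lemma wf_rel (hlfd : LocFinDimCover G) : WellFounded (rel G f g) := by
  constructor
  rintro ⟨K, hKne, hKC⟩
  obtain ⟨i₀, hi₀⟩ := hKne
  obtain ⟨n, hn⟩ := hlfd i₀
  have key : ∀ m (J : Sgood G f g), i₀ ∈ J.1 → n ≤ J.1.card + m →
      Acc (rel G f g) J := by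
    intro m
    induction m with
    | zero =>
      rintro J hi hcard
      constructor
      rintro ⟨J', hJ'⟩ hlt
      exfalso
      have h1 : J'.card ≤ n := hn J' (hlt.subset hi) (GJ_nonempty hJ'.2)
      have h2 : J.1.card < J'.card := Finset.card_lt_card hlt
      omega
    | succ m ih =>
      rintro J hi hcard
      constructor
      rintro ⟨J', hJ'⟩ hlt
      have h1 : J'.card ≤ n := hn J' (hlt.subset hi) (GJ_nonempty hJ'.2)
      have h2 : J.1.card < J'.card := Finset.card_lt_card hlt
      refine ih ⟨J', hJ'⟩ (hlt.subset hi) ?_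
      show n ≤ J'.card + m
      omega
  exact key n ⟨K, ⟨i₀, hi₀⟩, hKC⟩ hi₀ (by omega)


/-- The glued partial homotopy over the union of all coincidence sets of simplices
strictly above `K`, together with the two endpoint slabs over `Cset K`. -/
lemma glued (hclosed : ∀ i, IsClosed (G i)) (hlocfin : LocallyFinite G)
    (K : Finset ι)
    (prev : ∀ J : Finset ι, J ∈ Sgood G f g → K ⊂ J → C(X × unitInterval, Y))
    (ha : ∀ J hJ hK (z : X × unitInterval), prev J hJ hK z ∈ ⋂ i ∈ J, G i)
    (hb : ∀ J hJ hK, ∀ x ∈ Cset G f g J,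
      prev J hJ hK (x, 0) = f x ∧ prev J hJ hK (x, 1) = g x)
    (hcoh : ∀ J₁ h₁ k₁ J₂ h₂ k₂ (x : X), x ∈ Cset G f g J₁ → x ∈ Cset G f g J₂ →
      ∀ t, prev J₁ h₁ k₁ (x, t) = prev J₂ h₂ k₂ (x, t)) :
    ∃ (F : X × unitInterval → Y) (A : Set (X × unitInterval)),
      IsClosed A ∧ ContinuousOn F A ∧
      (Cset G f g K ×ˢ ({0, 1} : Set unitInterval) ⊆ A) ∧
      (∀ (J : Finset ι) (hJ : J ∈ Sgood G f g) (hK : K ⊂ J),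
        Cset G f g J ×ˢ (univ : Set unitInterval) ⊆ A) ∧
      (∀ z ∈ A, F z ∈ ⋂ i ∈ K, G i) ∧
      (∀ x ∈ Cset G f g K, F (x, 0) = f x ∧ F (x, 1) = g x) ∧
      (∀ (J : Finset ι) (hJ : J ∈ Sgood G f g) (hK : K ⊂ J),
        ∀ x ∈ Cset G f g J, ∀ t, F (x, t) = prev J hJ hK (x, t)) := by
  classical
  set U : Set X :=
    ⋃ J : {J : Finset ι // J ∈ Sgood G f g ∧ K ⊂ J}, Cset G f g J.1 with hU
  set F : X × unitInterval → Y := fun z =>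
    if h : z.1 ∈ U then
      prev (Set.mem_iUnion.mp h).choose.1 (Set.mem_iUnion.mp h).choose.2.1
        (Set.mem_iUnion.mp h).choose.2.2 z
    else if z.2 = 1 then g z.1 else f z.1 with hF
  have hFeq : ∀ J hJ hK (z : X × unitInterval), z.1 ∈ Cset G f g J →
      F z = prev J hJ hK z := by
    intro J hJ hK z hz
    have hU' : z.1 ∈ U := Set.mem_iUnion.mpr ⟨⟨J, hJ, hK⟩, hz⟩
    simp only [hF, dif_pos hU']
    exact hcoh _ _ _ J hJ hK z.1 (Set.mem_iUnion.mp hU').choose_spec hz z.2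
  have hne01 : (0 : unitInterval) ≠ 1 := fun h => by
    have := congrArg Subtype.val h
    norm_num at this
  have hF0 : ∀ x ∈ Cset G f g K, F (x, 0) = f x := by
    intro x hx
    by_cases h : x ∈ U
    · obtain ⟨J, hJ⟩ := Set.mem_iUnion.mp h
      rw [hFeq J.1 J.2.1 J.2.2 (x, 0) hJ]
      exact (hb J.1 J.2.1 J.2.2 x hJ).1
    · simp only [hF]
      rw [dif_neg h, if_neg hne01]
  have hF1 : ∀ x ∈ Cset G f g K, F (x, 1) = g x := by
    intro x hx
    by_cases h : x ∈ U
    · obtain ⟨J, hJ⟩ := Set.mem_iUnion.mp h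
      rw [hFeq J.1 J.2.1 J.2.2 (x, 1) hJ]
      exact (hb J.1 J.2.1 J.2.2 x hJ).2
    · simp only [hF]
      rw [dif_neg h]
      simp
  -- the closed pieces
  set B : {J : Finset ι // J ∈ Sgood G f g ∧ K ⊂ J} ⊕ Bool → Set (X × unitInterval) :=
    Sum.elim (fun J => Cset G f g J.1 ×ˢ (univ : Set unitInterval))
      (fun b => Cset G f g K ×ˢ ({if b then 1 else 0} : Set unitInterval)) with hB
  have hBlf : LocallyFinite B := by
    apply LocallyFinite.sumElim
    · have h1 : LocallyFinite fun J : {J : Finset ι // J ∈ Sgood G f g ∧ K ⊂ J} =>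
          Cset G f g J.1 :=
        (locallyFinite_Cset hlocfin).comp_injective Subtype.val_injective
      have := h1.preimage_continuous (continuous_fst (X := X) (Y := unitInterval))
      simpa [Set.prod_univ] using this
    · exact locallyFinite_of_finite _
  have hBcl : ∀ b, IsClosed (B b) := by
    rintro (J | b)
    · exact (isClosed_Cset hclosed J.1).prod isClosed_univ
    · exact (isClosed_Cset hclosed K).prod isClosed_singleton
  refine ⟨F, ⋃ b, B b, hBlf.isClosed_iUnion hBcl, ?_, ?_, ?_, ?_, fun x hx => ⟨hF0 x hx, hF1 x hx⟩,
    fun J hJ hK x hx t => hFeq J hJ hK (x, t) hx⟩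
  · -- continuity
    apply hBlf.continuousOn_iUnion hBcl
    rintro (J | b)
    · refine ((prev J.1 J.2.1 J.2.2).continuous.continuousOn).congr ?_
      intro z hz
      exact hFeq J.1 J.2.1 J.2.2 z hz.1
    · cases b
      · refine ((f.continuous.comp continuous_fst).continuousOn).congr ?_
        rintro ⟨x, t⟩ ⟨hx, ht⟩
        have ht0 : t = 0 := by simpa using ht
        subst ht0
        exact hF0 x hx
      · refine ((g.continuous.comp continuous_fst).continuousOn).congr ?_
        rintro ⟨x, t⟩ ⟨hx, ht⟩
        have ht1 : t = 1 := by simpa using ht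
        subst ht1
        exact hF1 x hx
  · -- endpoint slabs are contained
    rintro ⟨x, t⟩ ⟨hx, ht⟩
    simp only [Set.mem_insert_iff, Set.mem_singleton_iff] at ht
    rcases ht with ht | ht
    · subst ht
      exact Set.mem_iUnion.mpr ⟨Sum.inr false, hx, by simp⟩
    · subst ht
      exact Set.mem_iUnion.mpr ⟨Sum.inr true, hx, by simp⟩
  · -- simplex slabs are contained
    intro J hJ hK
    exact Set.subset_iUnion B (Sum.inl ⟨J, hJ, hK⟩)
  · -- values lie in the carrier
    intro z hz
    obtain ⟨b, hb'⟩ := Set.mem_iUnion.mp hz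
    match b with
    | Sum.inl J =>
      rw [hFeq J.1 J.2.1 J.2.2 z hb'.1]
      exact Set.mem_iInter₂.mpr fun i hi =>
        Set.mem_iInter₂.mp (ha J.1 J.2.1 J.2.2 z) i (J.2.2.subset hi)
    | Sum.inr b =>
      obtain ⟨hz1, hz2⟩ := hb'
      cases b
      · have hz2' : z.2 = (0 : unitInterval) := by simpa using hz2
        have hzz : z = (z.1, (0 : unitInterval)) := Prod.ext rfl hz2'
        rw [hzz, hF0 z.1 hz1]
        exact Set.mem_iInter₂.mpr fun i hi => (hz1 i hi).1
      · have hz2' : z.2 = (1 : unitInterval) := by simpa using hz2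
        have hzz : z = (z.1, (1 : unitInterval)) := Prod.ext rfl hz2'
        rw [hzz, hF1 z.1 hz1]
        exact Set.mem_iInter₂.mpr fun i hi => (hz1 i hi).2


/-- The specification of the partial homotopy attached to a simplex `K`, relative to
the partial homotopies already attached to all simplices strictly above `K`. -/
def Spec (G : ι → Set Y) (f g : C(X, Y)) (K : Finset ι)
    (prev : ∀ J : Finset ι, J ∈ Sgood G f g → K ⊂ J → C(X × unitInterval, Y))
    (h : C(X × unitInterval, Y)) : Prop :=
  (∀ z, h z ∈ ⋂ i ∈ K, G i) ∧
  (∀ x ∈ Cset G f g K, h (x, 0) = f x ∧ h (x, 1) = g x) ∧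
  (∀ (J : Finset ι) (hJ : J ∈ Sgood G f g) (hK : K ⊂ J),
    ∀ x ∈ Cset G f g J, ∀ t, h (x, t) = prev J hJ hK (x, t))

lemma exists_step (hclosed : ∀ i, IsClosed (G i)) (hlocfin : LocallyFinite G)
    (hAE : ∀ J : Set ι, (⋂ i ∈ J, G i).Nonempty →
      IsAbsExtFor (X × unitInterval) (⋂ i ∈ J, G i))
    (K : Finset ι) (hK : K ∈ Sgood G f g)
    (prev : ∀ J : Finset ι, J ∈ Sgood G f g → K ⊂ J → C(X × unitInterval, Y))
    (ha : ∀ J hJ hKJ (z : X × unitInterval), prev J hJ hKJ z ∈ ⋂ i ∈ J, G i)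
    (hb : ∀ J hJ hKJ, ∀ x ∈ Cset G f g J,
      prev J hJ hKJ (x, 0) = f x ∧ prev J hJ hKJ (x, 1) = g x)
    (hcoh : ∀ J₁ h₁ k₁ J₂ h₂ k₂ (x : X), x ∈ Cset G f g J₁ → x ∈ Cset G f g J₂ →
      ∀ t, prev J₁ h₁ k₁ (x, t) = prev J₂ h₂ k₂ (x, t)) :
    ∃ h, Spec G f g K prev h := by
  obtain ⟨F, A, hAcl, hFc, hsub01, hsubJ, hmem, hend, hprevF⟩ :=
    glued hclosed hlocfin K prev ha hb hcoh
  have hIeq : (⋂ i ∈ (K : Set ι), G i) = ⋂ i ∈ K, G i := by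
    simp
  have hGK : (⋂ i ∈ (K : Set ι), G i).Nonempty := by
    rw [hIeq]
    exact GJ_nonempty hK.2
  obtain ⟨h', hmem', heq'⟩ := hAE (K : Set ι) hGK A hAcl
    ⟨A.restrict F, continuousOn_iff_continuous_restrict.mp hFc⟩
    (fun a => by rw [hIeq]; exact hmem a a.2)
  refine ⟨h', fun z => hIeq ▸ hmem' z, ?_, ?_⟩
  · intro x hx
    have h0 : ((x, (0 : unitInterval)) : X × unitInterval) ∈ A :=
      hsub01 ⟨hx, by simp⟩
    have h1 : ((x, (1 : unitInterval)) : X × unitInterval) ∈ A :=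
      hsub01 ⟨hx, by simp⟩
    constructor
    · rw [heq' ⟨(x, 0), h0⟩]
      exact (hend x hx).1
    · rw [heq' ⟨(x, 1), h1⟩]
      exact (hend x hx).2
  · intro J hJ hKJ x hx t
    have hxt : ((x, t) : X × unitInterval) ∈ A := hsubJ J hJ hKJ ⟨hx, trivial⟩
    rw [heq' ⟨(x, t), hxt⟩]
    exact hprevF J hJ hKJ x hx t

/-- The recursion step. -/
noncomputable def Hstep (G : ι → Set Y) (f g : C(X, Y)) (K : Sgood G f g)
    (prev : ∀ J : Sgood G f g, rel G f g J K → C(X × unitInterval, Y)) :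
    C(X × unitInterval, Y) :=
  if hex : ∃ h, Spec G f g K.1 (fun J hJ hK => prev ⟨J, hJ⟩ hK) h then hex.choose
  else ContinuousMap.const _ (f K.2.2.choose)

/-- The coherent family of partial homotopies, one for each simplex of the nerve. -/
noncomputable def Hhat (G : ι → Set Y) (f g : C(X, Y)) (hlfd : LocFinDimCover G) :
    Sgood G f g → C(X × unitInterval, Y) :=
  (wf_rel hlfd).fix (Hstep G f g)

lemma coh_aux (Hh : Sgood G f g → C(X × unitInterval, Y))
    (J₁ : Finset ι) (h₁ : J₁ ∈ Sgood G f g) (J₂ : Finset ι) (h₂ : J₂ ∈ Sgood G f g)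
    (hs₁ : ∀ (J : Finset ι) (hJ : J ∈ Sgood G f g), J₁ ⊂ J →
      ∀ x ∈ Cset G f g J, ∀ t, Hh ⟨J₁, h₁⟩ (x, t) = Hh ⟨J, hJ⟩ (x, t))
    (hs₂ : ∀ (J : Finset ι) (hJ : J ∈ Sgood G f g), J₂ ⊂ J →
      ∀ x ∈ Cset G f g J, ∀ t, Hh ⟨J₂, h₂⟩ (x, t) = Hh ⟨J, hJ⟩ (x, t))
    (x : X) (hx₁ : x ∈ Cset G f g J₁) (hx₂ : x ∈ Cset G f g J₂) (t : unitInterval) :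
    Hh ⟨J₁, h₁⟩ (x, t) = Hh ⟨J₂, h₂⟩ (x, t) := by
  have hx₃ : x ∈ Cset G f g (J₁ ∪ J₂) := mem_Cset_union.mpr ⟨hx₁, hx₂⟩
  have hJ₃ : J₁ ∪ J₂ ∈ Sgood G f g :=
    ⟨Finset.Nonempty.mono Finset.subset_union_left h₁.1, ⟨x, hx₃⟩⟩
  have e₁ : Hh ⟨J₁, h₁⟩ (x, t) = Hh ⟨J₁ ∪ J₂, hJ₃⟩ (x, t) := by
    rcases eq_or_ne J₁ (J₁ ∪ J₂) with he | hne
    · rw [show (⟨J₁, h₁⟩ : Sgood G f g) = ⟨J₁ ∪ J₂, hJ₃⟩ from Subtype.ext he]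
    · exact hs₁ _ hJ₃ (Finset.ssubset_iff_subset_ne.mpr ⟨Finset.subset_union_left, hne⟩)
        x hx₃ t
  have e₂ : Hh ⟨J₂, h₂⟩ (x, t) = Hh ⟨J₁ ∪ J₂, hJ₃⟩ (x, t) := by
    rcases eq_or_ne J₂ (J₁ ∪ J₂) with he | hne
    · rw [show (⟨J₂, h₂⟩ : Sgood G f g) = ⟨J₁ ∪ J₂, hJ₃⟩ from Subtype.ext he]
    · exact hs₂ _ hJ₃ (Finset.ssubset_iff_subset_ne.mpr ⟨Finset.subset_union_right, hne⟩)
        x hx₃ t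
  exact e₁.trans e₂.symm

lemma Hhat_spec (hclosed : ∀ i, IsClosed (G i)) (hlocfin : LocallyFinite G)
    (hlfd : LocFinDimCover G)
    (hAE : ∀ J : Set ι, (⋂ i ∈ J, G i).Nonempty →
      IsAbsExtFor (X × unitInterval) (⋂ i ∈ J, G i)) :
    ∀ K : Sgood G f g, Spec G f g K.1
      (fun J hJ _ => Hhat G f g hlfd ⟨J, hJ⟩) (Hhat G f g hlfd K) := by
  intro K
  induction K using (wf_rel hlfd).induction with
  | _ K IH =>
  have hcoh : ∀ J₁ h₁ (k₁ : K.1 ⊂ J₁) J₂ h₂ (k₂ : K.1 ⊂ J₂) (x : X),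
      x ∈ Cset G f g J₁ → x ∈ Cset G f g J₂ → ∀ t,
      Hhat G f g hlfd ⟨J₁, h₁⟩ (x, t) = Hhat G f g hlfd ⟨J₂, h₂⟩ (x, t) := by
    intro J₁ h₁ k₁ J₂ h₂ k₂ x hx₁ hx₂ t
    exact coh_aux (Hhat G f g hlfd) J₁ h₁ J₂ h₂
      (fun J hJ hss => (IH ⟨J₁, h₁⟩ k₁).2.2 J hJ hss)
      (fun J hJ hss => (IH ⟨J₂, h₂⟩ k₂).2.2 J hJ hss) x hx₁ hx₂ t
  have hex : ∃ h, Spec G f g K.1 (fun J hJ _ => Hhat G f g hlfd ⟨J, hJ⟩) h :=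
    exists_step hclosed hlocfin hAE K.1 K.2 _
      (fun J hJ hK z => (IH ⟨J, hJ⟩ hK).1 z)
      (fun J hJ hK x hx => (IH ⟨J, hJ⟩ hK).2.1 x hx) hcoh
  have heq : Hhat G f g hlfd K = Hstep G f g K (fun J _ => Hhat G f g hlfd J) :=
    WellFounded.fix_eq _ _ _
  rw [heq]
  unfold Hstep
  rw [dif_pos hex]
  exact hex.choose_spec

end Aux

/-- If a closed cover `G` of `Y` is regular for `X × [0,1]`, then any two `G`-close
maps `X → Y` are `G`-homotopic, by a homotopy all of whose paths that start and end
in an element of `G` lie entirely in that element. -/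
theorem carried_homotopy {X Y ι : Type} [TopologicalSpace X] [TopologicalSpace Y]
    (G : ι → Set Y) (hcover : (⋃ i, G i) = univ) (hclosed : ∀ i, IsClosed (G i))
    (hlocfin : LocallyFinite G) (hlfd : LocFinDimCover G)
    (hAE : ∀ J : Set ι, (⋂ i ∈ J, G i).Nonempty →
      IsAbsExtFor (X × unitInterval) (⋂ i ∈ J, G i))
    (f g : C(X, Y)) (hclose : ∀ x, ∃ i, f x ∈ G i ∧ g x ∈ G i) :
    ∃ H : ContinuousMap.Homotopy f g,
      (∀ x, ∃ i, ∀ t : unitInterval, H (t, x) ∈ G i) ∧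
      ∀ (i : ι) (x : X), f x ∈ G i → g x ∈ G i → ∀ t : unitInterval, H (t, x) ∈ G i := by
  classical
  have hspec := Hhat_spec (G := G) (f := f) (g := g) hclosed hlocfin hlfd hAE
  have hcoh : ∀ (J₁ : Finset ι) (h₁ : J₁ ∈ Sgood G f g) (k₁ : (∅ : Finset ι) ⊂ J₁)
      (J₂ : Finset ι) (h₂ : J₂ ∈ Sgood G f g) (k₂ : (∅ : Finset ι) ⊂ J₂) (x : X),
      x ∈ Cset G f g J₁ → x ∈ Cset G f g J₂ → ∀ t,
      Hhat G f g hlfd ⟨J₁, h₁⟩ (x, t) = Hhat G f g hlfd ⟨J₂, h₂⟩ (x, t) :=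
    fun J₁ h₁ _ J₂ h₂ _ x hx₁ hx₂ t =>
      coh_aux (Hhat G f g hlfd) J₁ h₁ J₂ h₂
        (fun J hJ hss => (hspec ⟨J₁, h₁⟩).2.2 J hJ hss)
        (fun J hJ hss => (hspec ⟨J₂, h₂⟩).2.2 J hJ hss) x hx₁ hx₂ t
  obtain ⟨F, A, hAcl, hFc, hsub01, hsubJ, hmem, hend, hprevF⟩ :=
    glued (G := G) (f := f) (g := g) hclosed hlocfin ∅
      (fun J hJ _ => Hhat G f g hlfd ⟨J, hJ⟩)
      (fun J hJ hK z => (hspec ⟨J, hJ⟩).1 z)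
      (fun J hJ hK x hx => (hspec ⟨J, hJ⟩).2.1 x hx) hcoh
  have hCK : ∀ x : X, x ∈ Cset G f g (∅ : Finset ι) := fun x i hi =>
    absurd hi (Finset.notMem_empty i)
  have hsingle : ∀ (i : ι) (x : X), f x ∈ G i → g x ∈ G i →
      x ∈ Cset G f g {i} ∧ ({i} : Finset ι) ∈ Sgood G f g := by
    intro i x hfi hgi
    have hxC : x ∈ Cset G f g {i} := by
      intro j hj
      rw [Finset.mem_singleton] at hj
      subst hj
      exact ⟨hfi, hgi⟩
    exact ⟨hxC, ⟨⟨i, Finset.mem_singleton_self i⟩, ⟨x, hxC⟩⟩⟩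
  have hss : ∀ i : ι, (∅ : Finset ι) ⊂ {i} :=
    fun i => Finset.empty_ssubset.mpr ⟨i, Finset.mem_singleton_self i⟩
  have hAuniv : ∀ z : X × unitInterval, z ∈ A := by
    intro z
    obtain ⟨i, hfi, hgi⟩ := hclose z.1
    obtain ⟨hxC, hSg⟩ := hsingle i z.1 hfi hgi
    exact hsubJ {i} hSg (hss i) ⟨hxC, trivial⟩
  have hFcont : Continuous F := by
    rw [← continuousOn_univ]
    intro z _
    exact (hFc z (hAuniv z)).mono (fun w _ => hAuniv w)
  have hkey : ∀ (i : ι) (x : X), f x ∈ G i → g x ∈ G i → ∀ t : unitInterval,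
      F (x, t) ∈ G i := by
    intro i x hfi hgi t
    obtain ⟨hxC, hSg⟩ := hsingle i x hfi hgi
    rw [hprevF {i} hSg (hss i) x hxC t]
    exact Set.mem_iInter₂.mp ((hspec ⟨{i}, hSg⟩).1 (x, t)) i (Finset.mem_singleton_self i)
  refine ⟨⟨⟨fun p => F (p.2, p.1), hFcont.comp (continuous_snd.prodMk continuous_fst)⟩,
    fun x => (hend x (hCK x)).1, fun x => (hend x (hCK x)).2⟩, ?_, ?_⟩
  · intro x
    obtain ⟨i, hfi, hgi⟩ := hclose x
    exact ⟨i, fun t => hkey i x hfi hgi t⟩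
  · intro i x hfi hgi t
    exact hkey i x hfi hgi t


end NobelingPaper
end

section
/- For every open subset $U$ of $\mathbb{R}^{2n+1}$, the inclusion of $U \cap \nu^n$ into $U$ is a weak $n$-homotopy equivalence, where $\nu^n$ is the set of points of $\mathbb{R}^{2n+1}$ with at most $n$ rational coordinates. -/
open Set ContinuousMap
open scoped ENNReal

namespace NobelingPaper

/-- The map induced on homotopy groups by a continuous map. -/
noncomputable def inducedPi {X Y : Type} [TopologicalSpace X] [TopologicalSpace Y]
    (φ : C(X, Y)) (N : Type) (x : X) :
    HomotopyGroup N X x → HomotopyGroup N Y (φ x) :=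
  Quotient.map
    (fun p => ⟨φ.comp p.1, fun y hy => by
      simp only [ContinuousMap.comp_apply]
      rw [p.2 y hy]⟩)
    (fun p q h => h.elim fun H => Nonempty.intro (H.compContinuousMap φ))

/-- `φ` is a weak `n`-homotopy equivalence: it induces bijections on all homotopy
groups of dimension less than `n`, at every base point. -/
def IsWeakNHomotopyEquiv (n : ℕ) {X Y : Type} [TopologicalSpace X] [TopologicalSpace Y]
    (φ : C(X, Y)) : Prop :=
  ∀ k, k < n → ∀ x : X, Function.Bijective (inducedPi φ (Fin k) x)

/-- The `n`-dimensional Nöbeling space: the set of points of `ℝ^(2n+1)` with at most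
`n` rational coordinates. -/
def nobeling (n : ℕ) : Set (Fin (2 * n + 1) → ℝ) :=
  {x | ({i | ∃ q : ℚ, x i = (q : ℝ)}).ncard ≤ n}



open MeasureTheory
open scoped NNReal unitInterval Topology

/-- Every continuous real-valued function on a compact metric space is uniformly
approximable by Lipschitz functions (inf-convolution). -/
theorem exists_lipschitz_approx {X : Type} [MetricSpace X] [CompactSpace X] [Nonempty X]
    (f : C(X, ℝ)) {ε : ℝ} (hε : 0 < ε) :
    ∃ (K : ℝ≥0) (g : X → ℝ), LipschitzWith K g ∧ ∀ x, |g x - f x| ≤ ε := by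
  obtain ⟨δ, hδ, hmod⟩ := (Metric.uniformContinuous_iff.1
    (CompactSpace.uniformContinuous_of_continuous f.continuous)) ε hε
  set M : ℝ := ‖f‖ with hM
  have hMnn : 0 ≤ M := norm_nonneg _
  have hfb : ∀ x, |f x| ≤ M := fun x => f.norm_coe_le_norm x
  set Kr : ℝ := (2 * M + 1) / δ with hKr
  have hKrnn : 0 ≤ Kr := by positivity
  set K : ℝ≥0 := ⟨Kr, hKrnn⟩ with hK
  set g : X → ℝ := fun x => ⨅ y, (f y + Kr * dist x y) with hg
  have hbdd : ∀ x, BddBelow (Set.range fun y => f y + Kr * dist x y) := by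
    intro x
    refine ⟨-M, ?_⟩
    rintro r ⟨y, rfl⟩
    have h1 := (abs_le.1 (hfb y)).1
    have h2 : 0 ≤ Kr * dist x y := mul_nonneg hKrnn dist_nonneg
    show -M ≤ f y + Kr * dist x y
    linarith
  have hgle : ∀ x, g x ≤ f x := by
    intro x
    have := ciInf_le (hbdd x) x
    simpa using this
  have hge : ∀ x, f x - ε ≤ g x := by
    intro x
    refine le_ciInf fun y => ?_
    rcases lt_or_ge (dist x y) δ with h | h
    · have := hmod (show dist y x < δ by rwa [dist_comm])
      have h2 : |f y - f x| < ε := by rwa [Real.dist_eq] at this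
      have := (abs_lt.1 h2).1
      nlinarith [mul_nonneg hKrnn (dist_nonneg (x := x) (y := y))]
    · have h1 : Kr * δ ≤ Kr * dist x y := by
        apply mul_le_mul_of_nonneg_left h hKrnn
      have h2 : Kr * δ = 2 * M + 1 := by
        rw [hKr]; field_simp
      have := (abs_le.1 (hfb y)).1
      have := (abs_le.1 (hfb x)).2
      nlinarith
  have hlip : LipschitzWith K g := by
    apply LipschitzWith.of_dist_le_mul
    intro x x'
    have key : ∀ u v : X, g u ≤ g v + Kr * dist u v := by
      intro u v
      have : ∀ y, g u ≤ (f y + Kr * dist v y) + Kr * dist u v := by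
        intro y
        calc g u ≤ f y + Kr * dist u y := ciInf_le (hbdd u) y
        _ ≤ f y + Kr * (dist u v + dist v y) := by
              have := dist_triangle u v y
              nlinarith
        _ = (f y + Kr * dist v y) + Kr * dist u v := by ring
      have h2 : g u - Kr * dist u v ≤ g v := by
        refine le_ciInf fun y => ?_
        linarith [this y]
      linarith
    have hcoe : (K : ℝ) = Kr := rfl
    rw [Real.dist_eq, abs_sub_le_iff, hcoe]
    have h1 := key x x'
    have h2 := key x' x
    rw [dist_comm x' x] at h2
    constructor <;> linarith
  exact ⟨K, g, hlip, fun x => by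
    rw [abs_sub_le_iff]
    constructor
    · linarith [hgle x]
    · linarith [hge x]⟩

/-- The domain `X` is "small": every Lipschitz image in `ℝ^(n+1)` is volume-null. -/
def NullLip (n : ℕ) (X : Type) [MetricSpace X] : Prop :=
  ∀ (K : ℝ≥0) (p : X → (Fin (n + 1) → ℝ)), LipschitzWith K p →
    volume (Set.range p) = 0

theorem nullLip_cube {n k : ℕ} (hk : k ≤ n) : NullLip n (Fin k → I) := by
  intro K p hp
  have hdim : dimH (Set.range p) ≤ (k : ℝ≥0∞) := by
    refine (hp.dimH_range_le).trans ?_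
    set e : (Fin k → I) → (Fin k → ℝ) := fun y i => (y i : ℝ) with he
    have hiso : Isometry e := fun y z => rfl
    calc dimH (univ : Set (Fin k → I)) = dimH (e '' univ) := (hiso.dimH_image _).symm
      _ ≤ dimH (univ : Set (Fin k → ℝ)) := dimH_mono (subset_univ _)
      _ = (k : ℝ≥0∞) := by
          rw [Real.dimH_univ_pi]
          simp
  have hlt : dimH (Set.range p) < ((n + 1 : ℝ≥0) : ℝ≥0∞) := by
    refine hdim.trans_lt ?_
    norm_cast
    omega
  have h0 : (μH[((n + 1 : ℝ≥0) : ℝ)] : Measure (Fin (n+1) → ℝ)) (Set.range p) = 0 :=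
    hausdorffMeasure_of_dimH_lt hlt
  have hvol : (volume : Measure (Fin (n+1) → ℝ)) = μH[((n + 1 : ℝ≥0) : ℝ)] := by
    rw [← MeasureTheory.hausdorffMeasure_pi_real (ι := Fin (n+1))]
    norm_num
  rw [hvol]
  exact h0

theorem nullLip_of_lipschitz_surj {n : ℕ} {X Y : Type} [MetricSpace X] [MetricSpace Y]
    {r : X → Y} {Kr : ℝ≥0} (hr : LipschitzWith Kr r) (hsurj : Function.Surjective r)
    (hX : NullLip n X) : NullLip n Y := by
  intro K p hp
  have : Set.range p = Set.range (p ∘ r) := by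
    rw [Set.range_comp, hsurj.range_eq, Set.image_univ]
  rw [this]
  exact hX _ _ (hp.comp hr)

theorem nullLip_prod {n k : ℕ} (hk : k + 1 ≤ n) : NullLip n (I × (Fin k → I)) := by
  set r : (Fin (k+1) → I) → I × (Fin k → I) := fun y => (y 0, fun i => y i.succ) with hr
  have hlip : LipschitzWith 1 r := by
    have h1 : LipschitzWith 1 (fun y : Fin (k+1) → I => y 0) := LipschitzWith.eval 0
    have h2 : LipschitzWith 1 (fun (y : Fin (k+1) → I) (i : Fin k) => y i.succ) := by
      apply LipschitzWith.of_edist_le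
      intro f g
      rw [edist_pi_def, edist_pi_def]
      apply Finset.sup_le
      intro i _
      exact Finset.le_sup (f := fun j => edist (f j) (g j)) (Finset.mem_univ i.succ)
    simpa using h1.prodMk h2
  have hsurj : Function.Surjective r := by
    rintro ⟨t, y⟩
    refine ⟨Fin.cons t y, ?_⟩
    simp [hr]
  exact nullLip_of_lipschitz_surj hlip hsurj (nullLip_cube hk)

/-- Unstable-value lemma: a continuous map from a "small" compact space to `ℝ^(n+1)`
can be uniformly approximated by maps avoiding `0`. -/
theorem exists_nonvanishing_approx {n : ℕ} {X : Type} [MetricSpace X] [CompactSpace X]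
    [Nonempty X] (hX : NullLip n X) (h : C(X, Fin (n + 1) → ℝ)) {ε : ℝ} (hε : 0 < ε) :
    ∃ h' : C(X, Fin (n + 1) → ℝ), dist h h' ≤ ε ∧ ∀ y, h' y ≠ 0 := by
  have hε2 : 0 < ε / 2 := by linarith
  have happrox : ∀ j : Fin (n + 1), ∃ (K : ℝ≥0) (g : X → ℝ), LipschitzWith K g ∧
      ∀ x, |g x - h x j| ≤ ε / 2 := fun j =>
    exists_lipschitz_approx ⟨fun y => h y j, (continuous_apply j).comp h.continuous⟩ hε2
  choose K g hlip happ using happrox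
  set K₀ : ℝ≥0 := Finset.univ.sup K with hK₀
  set p : X → (Fin (n + 1) → ℝ) := fun y j => g j y with hp
  have hplip : LipschitzWith K₀ p := by
    apply LipschitzWith.of_dist_le_mul
    intro a b
    rcases le_or_gt ((K₀ : ℝ) * dist a b) 0 with h0 | h0
    · have : ∀ j, dist (p a j) (p b j) ≤ (K₀ : ℝ) * dist a b := by
        intro j
        calc dist (p a j) (p b j) ≤ (K j : ℝ) * dist a b := (hlip j).dist_le_mul a b
        _ ≤ (K₀ : ℝ) * dist a b := by
            apply mul_le_mul_of_nonneg_right _ dist_nonneg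
            exact_mod_cast Finset.le_sup (Finset.mem_univ j)
      exact (dist_pi_le_iff (le_trans (dist_nonneg.trans (this ⟨0, Nat.succ_pos n⟩)) le_rfl)).2 this
    · refine (dist_pi_le_iff h0.le).2 fun j => ?_
      calc dist (p a j) (p b j) ≤ (K j : ℝ) * dist a b := (hlip j).dist_le_mul a b
      _ ≤ (K₀ : ℝ) * dist a b := by
          apply mul_le_mul_of_nonneg_right _ dist_nonneg
          exact_mod_cast Finset.le_sup (Finset.mem_univ j)
  have hnull : volume (Set.range p) = 0 := hX K₀ p hplip
  have hballpos : 0 < volume (Metric.ball (0 : Fin (n+1) → ℝ) (ε / 2)) :=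
    Metric.measure_ball_pos _ _ hε2
  have hnotsub : ¬ Metric.ball (0 : Fin (n+1) → ℝ) (ε / 2) ⊆ Set.range p := by
    intro hsub
    exact absurd (le_trans (measure_mono hsub) hnull.le) (by simpa using hballpos.ne')
  obtain ⟨v, hvball, hvnot⟩ := Set.not_subset.1 hnotsub
  refine ⟨⟨fun y => p y - v, (hplip.continuous).sub continuous_const⟩, ?_, ?_⟩
  · rw [ContinuousMap.dist_le hε.le]
    intro y
    calc dist (h y) (p y - v) ≤ dist (h y) (p y) + dist (p y) (p y - v) := dist_triangle _ _ _
    _ ≤ ε / 2 + ε / 2 := by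
        gcongr
        · refine (dist_pi_le_iff hε2.le).2 fun j => ?_
          rw [Real.dist_eq, abs_sub_comm]
          exact happ j y
        · rw [dist_eq_norm]
          simp only [sub_sub_cancel]
          have : dist v 0 < ε / 2 := Metric.mem_ball.1 hvball
          rw [dist_zero_right] at this
          exact this.le
    _ = ε := by ring
  · intro y hy0
    apply hvnot
    refine ⟨y, ?_⟩
    have : p y - v = 0 := hy0
    exact (sub_eq_zero.1 this).symm ▸ rfl

/-- Key density step: within the space of maps agreeing with `f` on `B` and `ε`-close to
`f`, maps avoiding the rational affine plane determined by `(s, q)` are dense. -/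
theorem compress_density {n : ℕ} {X : Type} [MetricSpace X] [CompactSpace X] [Nonempty X]
    (hX : NullLip n X) {B : Set X} (hB : IsClosed B)
    (f : C(X, Fin (2 * n + 1) → ℝ)) {ε : ℝ} (hε : 0 < ε)
    (hfB : ∀ y ∈ B, f y ∈ nobeling n)
    (s : Finset (Fin (2 * n + 1))) (hs : s.card = n + 1) (q : Fin (2 * n + 1) → ℚ)
    (G : C(X, Fin (2 * n + 1) → ℝ)) (hGB : ∀ y ∈ B, G y = f y) (hGf : dist G f ≤ ε)
    {δ : ℝ} (hδ : 0 < δ) :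
    ∃ G' : C(X, Fin (2 * n + 1) → ℝ), (∀ y ∈ B, G' y = f y) ∧ dist G' f ≤ ε ∧
      (∀ y, ∃ i ∈ s, G' y i ≠ (q i : ℝ)) ∧ dist G' G < δ := by
  classical
  set E := (Fin (2 * n + 1) → ℝ)
  -- Step 1 : pull `G` slightly towards `f`.
  set m : ℝ := min (δ / 2) ε with hm
  have hm0 : 0 < m := lt_min (by linarith) hε
  have hmε : m ≤ ε := min_le_right _ _
  have hmδ : m ≤ δ / 2 := min_le_left _ _
  set c : ℝ := m / ε with hc
  have hc0 : 0 ≤ c := by positivity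
  have hc1 : c ≤ 1 := by rw [hc]; exact div_le_one_of_le₀ hmε hε.le
  set G₁ : C(X, E) := G + c • (f - G) with hG₁
  have hG₁y : ∀ y, G₁ y = G y + c • (f y - G y) := fun y => by
    simp [hG₁]
  have hG₁B : ∀ y ∈ B, G₁ y = f y := by
    intro y hy
    rw [hG₁y y, hGB y hy]
    simp
  have hG₁f : dist G₁ f ≤ ε - m := by
    rw [ContinuousMap.dist_le (by linarith)]
    intro y
    have hyd : dist (G y) (f y) ≤ ε := le_trans (ContinuousMap.dist_apply_le_dist y) hGf
    have hid : G₁ y - f y = (1 - c) • (G y - f y) := by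
      rw [hG₁y y]; module
    rw [dist_eq_norm, hid, norm_smul, Real.norm_eq_abs, abs_of_nonneg (by linarith)]
    have h1 : ‖G y - f y‖ ≤ ε := by rwa [← dist_eq_norm]
    have h2 : (1 - c) * ‖G y - f y‖ ≤ (1 - c) * ε := by
      apply mul_le_mul_of_nonneg_left h1 (by linarith)
    have h3 : (1 - c) * ε = ε - m := by
      rw [hc]; field_simp
    linarith
  have hG₁G : dist G₁ G ≤ m := by
    rw [ContinuousMap.dist_le hm0.le]
    intro y
    have hyd : dist (G y) (f y) ≤ ε := le_trans (ContinuousMap.dist_apply_le_dist y) hGf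
    have hid : G₁ y - G y = c • (f y - G y) := by rw [hG₁y y]; module
    rw [dist_eq_norm, hid, norm_smul, Real.norm_eq_abs, abs_of_nonneg hc0]
    have h1 : ‖f y - G y‖ ≤ ε := by rw [← dist_eq_norm, dist_comm]; exact hyd
    calc c * ‖f y - G y‖ ≤ c * ε := mul_le_mul_of_nonneg_left h1 hc0
    _ = m := by rw [hc]; field_simp
  -- the enumeration of `s`
  set es : Fin (n + 1) → Fin (2 * n + 1) := fun j => ((s.orderIsoOfFin hs) j : Fin (2 * n + 1))
    with hes
  have hes_mem : ∀ j, es j ∈ s := fun j => ((s.orderIsoOfFin hs) j).2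
  have hes_inj : Function.Injective es :=
    fun a b hab => (s.orderIsoOfFin hs).injective (Subtype.coe_injective hab)
  have hes_surj : ∀ i ∈ s, ∃ j, es j = i := by
    intro i hi
    exact ⟨(s.orderIsoOfFin hs).symm ⟨i, hi⟩, by
      simp only [hes, OrderIso.apply_symm_apply]⟩
  -- the defect map `h`
  set h : C(X, Fin (n + 1) → ℝ) :=
    ⟨fun y j => G₁ y (es j) - (q (es j) : ℝ),
      continuous_pi fun j => ((continuous_apply (es j)).comp G₁.continuous).sub
        continuous_const⟩ with hh
  have hhy : ∀ y j, h y j = G₁ y (es j) - (q (es j) : ℝ) := fun y j => rfl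
  -- lower bound for `‖h‖` on `B`
  have hBnz : ∀ y ∈ B, h y ≠ 0 := by
    intro y hy hzero
    have hall : ∀ j, f y (es j) = (q (es j) : ℝ) := by
      intro j
      have h0 : h y j = 0 := by rw [hzero]; rfl
      rw [hhy, hG₁B y hy] at h0
      linarith [h0]
    have hsub : (↑s : Set (Fin (2 * n + 1))) ⊆ {i | ∃ r : ℚ, f y i = (r : ℝ)} := by
      intro i hi
      obtain ⟨j, rfl⟩ := hes_surj i hi
      exact ⟨q (es j), hall j⟩
    have h1 : (↑s : Set (Fin (2 * n + 1))).ncard ≤ n :=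
      le_trans (Set.ncard_le_ncard hsub (Set.toFinite _)) (hfB y hy)
    rw [Set.ncard_coe_finset, hs] at h1
    omega
  have hηex : ∃ η > 0, ∀ y ∈ B, η ≤ ‖h y‖ := by
    rcases B.eq_empty_or_nonempty with hBe | hBne
    · exact ⟨1, one_pos, by simp [hBe]⟩
    · obtain ⟨y₀, hy₀B, hmin⟩ := hB.isCompact.exists_isMinOn hBne
        ((h.continuous.norm).continuousOn)
      refine ⟨‖h y₀‖, norm_pos_iff.2 (hBnz y₀ hy₀B), ?_⟩
      intro y hy
      exact hmin hy
  obtain ⟨η, hη0, hηB⟩ := hηex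
  set ε₀ : ℝ := min (min (δ / 4) (η / 2)) m with hε₀
  have hε₀0 : 0 < ε₀ := lt_min (lt_min (by linarith) (by linarith)) hm0
  have hε₀δ : ε₀ ≤ δ / 4 := le_trans (min_le_left _ _) (min_le_left _ _)
  have hε₀η : ε₀ ≤ η / 2 := le_trans (min_le_left _ _) (min_le_right _ _)
  have hε₀m : ε₀ ≤ m := min_le_right _ _
  -- nonvanishing approximation of h
  obtain ⟨h', hh'd, hh'ne⟩ := exists_nonvanishing_approx hX h (by positivity : (0:ℝ) < ε₀ / 2)
  have hd' : ∀ y, dist (h y) (h' y) ≤ ε₀ / 2 :=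
    fun y => le_trans (ContinuousMap.dist_apply_le_dist y) hh'd
  -- the cut-off
  set χ : X → ℝ := fun y => max 0 (min 1 (2 - ‖h y‖ / ε₀)) with hχ
  have hχcont : Continuous χ := by
    apply continuous_const.max
    apply continuous_const.min
    exact continuous_const.sub ((h.continuous.norm).div_const _)
  have hχ0 : ∀ y, 0 ≤ χ y := fun y => le_max_left _ _
  have hχ1 : ∀ y, χ y ≤ 1 := fun y => max_le zero_le_one (min_le_left _ _)
  have hχeq1 : ∀ y, ‖h y‖ ≤ ε₀ → χ y = 1 := by
    intro y hy
    have : (1:ℝ) ≤ 2 - ‖h y‖ / ε₀ := by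
      have : ‖h y‖ / ε₀ ≤ 1 := div_le_one_of_le₀ hy hε₀0.le
      linarith
    simp [hχ, min_eq_left this, max_eq_right zero_le_one]
  have hχeq0 : ∀ y, 2 * ε₀ ≤ ‖h y‖ → χ y = 0 := by
    intro y hy
    have h1 : 2 - ‖h y‖ / ε₀ ≤ 0 := by
      have : (2:ℝ) ≤ ‖h y‖ / ε₀ := (le_div_iff₀ hε₀0).2 (by linarith)
      linarith
    have h2 : min 1 (2 - ‖h y‖ / ε₀) ≤ 0 := le_trans (min_le_right _ _) h1
    simp [hχ, max_eq_left h2]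
  -- the corrected defect map
  set h'' : X → (Fin (n + 1) → ℝ) := fun y => h y + χ y • (h' y - h y) with hh''
  have hh''cont : Continuous h'' :=
    h.continuous.add (hχcont.smul (h'.continuous.sub h.continuous))
  have hh''ne : ∀ y, h'' y ≠ 0 := by
    intro y
    by_cases hcase : ‖h y‖ ≤ ε₀
    · rw [hh'']
      simp only [hχeq1 y hcase, one_smul]
      simpa using hh'ne y
    · push_neg at hcase
      have hdiff : ‖h'' y - h y‖ ≤ ε₀ / 2 := by
        rw [hh'']
        simp only [add_sub_cancel_left]
        rw [norm_smul, Real.norm_eq_abs, abs_of_nonneg (hχ0 y)]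
        calc χ y * ‖h' y - h y‖ ≤ 1 * ‖h' y - h y‖ :=
          mul_le_mul_of_nonneg_right (hχ1 y) (norm_nonneg _)
        _ = ‖h' y - h y‖ := one_mul _
        _ ≤ ε₀ / 2 := by rw [← dist_eq_norm, dist_comm]; exact hd' y
      have := abs_norm_sub_norm_le (h'' y) (h y)
      have h1 : ‖h y‖ - ‖h'' y‖ ≤ ε₀ / 2 := by
        have := (abs_le.1 this).1; linarith
      have : 0 < ‖h'' y‖ := by linarith
      exact norm_pos_iff.1 this
  have hh''B : ∀ y ∈ B, h'' y = h y := by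
    intro y hy
    have hz : χ y = 0 := hχeq0 y (le_trans (by linarith) (hηB y hy))
    show h y + χ y • (h' y - h y) = h y
    rw [hz]; simp
  have hh''close : ∀ y, ‖h'' y - h y‖ ≤ ε₀ / 2 := by
    intro y
    rw [hh'']
    simp only [add_sub_cancel_left]
    rw [norm_smul, Real.norm_eq_abs, abs_of_nonneg (hχ0 y)]
    calc χ y * ‖h' y - h y‖ ≤ 1 * ‖h' y - h y‖ :=
      mul_le_mul_of_nonneg_right (hχ1 y) (norm_nonneg _)
    _ = ‖h' y - h y‖ := one_mul _
    _ ≤ ε₀ / 2 := by rw [← dist_eq_norm, dist_comm]; exact hd' y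
  -- reconstruct the perturbation in the big space
  set Δ : X → E := fun y i => ∑ j : Fin (n + 1),
      if es j = i then (h'' y j - h y j) else 0 with hΔ
  have hΔcont : Continuous Δ := by
    apply continuous_pi
    intro i
    apply continuous_finset_sum
    intro j _
    by_cases hji : es j = i
    · simp only [hji, if_true]
      exact (((continuous_apply j).comp hh''cont).sub
        ((continuous_apply j).comp h.continuous))
    · simp [hji]
      exact continuous_const
  have hΔes : ∀ y j, Δ y (es j) = h'' y j - h y j := by
    intro y j
    show (∑ j' : Fin (n + 1), if es j' = es j then (h'' y j' - h y j') else 0) = _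
    rw [Finset.sum_eq_single j]
    · simp
    · intro b _ hbj
      have : es b ≠ es j := fun hc => hbj (hes_inj hc)
      simp [this]
    · intro hj
      exact absurd (Finset.mem_univ j) hj
  have hΔbound : ∀ y i, |Δ y i| ≤ ε₀ / 2 := by
    intro y i
    by_cases hir : ∃ j, es j = i
    · obtain ⟨j, rfl⟩ := hir
      rw [hΔes y j]
      calc |h'' y j - h y j| = ‖(h'' y - h y) j‖ := by simp [Real.norm_eq_abs]
      _ ≤ ‖h'' y - h y‖ := norm_le_pi_norm _ j
      _ ≤ ε₀ / 2 := hh''close y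
    · push_neg at hir
      have hzz : Δ y i = 0 := by
        show (∑ j : Fin (n + 1), if es j = i then (h'' y j - h y j) else 0) = 0
        apply Finset.sum_eq_zero
        intro j _
        simp [hir j]
      rw [hzz, abs_zero]
      positivity
  have hΔB : ∀ y ∈ B, Δ y = 0 := by
    intro y hy
    funext i
    show (∑ j : Fin (n + 1), if es j = i then (h'' y j - h y j) else 0) = 0
    apply Finset.sum_eq_zero
    intro j _
    rw [hh''B y hy]
    simp
  set G' : C(X, E) := G₁ + ⟨Δ, hΔcont⟩ with hG'
  have hG'y : ∀ y, G' y = G₁ y + Δ y := fun y => rfl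
  have hG'G₁ : dist G' G₁ ≤ ε₀ / 2 := by
    rw [ContinuousMap.dist_le (by positivity)]
    intro y
    rw [dist_eq_norm]
    have : G' y - G₁ y = Δ y := by rw [hG'y]; abel
    rw [this]
    rw [pi_norm_le_iff_of_nonneg (by positivity)]
    intro i
    rw [Real.norm_eq_abs]
    exact hΔbound y i
  refine ⟨G', ?_, ?_, ?_, ?_⟩
  · intro y hy
    rw [hG'y, hΔB y hy, hG₁B y hy]
    simp
  · calc dist G' f ≤ dist G' G₁ + dist G₁ f := dist_triangle _ _ _
    _ ≤ ε₀ / 2 + (ε - m) := add_le_add hG'G₁ hG₁f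
    _ ≤ ε := by linarith
  · intro y
    obtain ⟨j, hj⟩ := Function.ne_iff.1 (hh''ne y)
    refine ⟨es j, hes_mem j, ?_⟩
    show G₁ y (es j) + Δ y (es j) ≠ (q (es j) : ℝ)
    rw [hΔes y j]
    intro hcon
    apply hj
    have h0 : h y j = G₁ y (es j) - (q (es j) : ℝ) := hhy y j
    have : G₁ y (es j) + (h'' y j - h y j) = (q (es j) : ℝ) := hcon
    rw [h0] at this
    show h'' y j = (0 : Fin (n+1) → ℝ) j
    simp only [Pi.zero_apply]
    linarith [this]
  · calc dist G' G ≤ dist G' G₁ + dist G₁ G := dist_triangle _ _ _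
    _ ≤ ε₀ / 2 + m := add_le_add hG'G₁ hG₁G
    _ < δ := by linarith [hε₀δ, hmδ, hε₀0]
  
/-- The compression lemma: a map into `ℝ^(2n+1)` from a "small" compact space, sending a
closed set `B` into the Nöbeling space, can be uniformly approximated rel `B` by maps into
the Nöbeling space. -/
theorem compress {n : ℕ} {X : Type} [MetricSpace X] [CompactSpace X] [Nonempty X]
    (hX : NullLip n X) {B : Set X} (hB : IsClosed B)
    (f : C(X, Fin (2 * n + 1) → ℝ)) {ε : ℝ} (hε : 0 < ε)
    (hfB : ∀ y ∈ B, f y ∈ nobeling n) :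
    ∃ g : C(X, Fin (2 * n + 1) → ℝ), dist g f ≤ ε ∧ (∀ y ∈ B, g y = f y) ∧
      ∀ y, g y ∈ nobeling n := by
  classical
  set E := (Fin (2 * n + 1) → ℝ)
  set S : Set C(X, E) := {G | (∀ y ∈ B, G y = f y) ∧ dist G f ≤ ε} with hS
  have hSclosed : IsClosed S := by
    have h1 : IsClosed {G : C(X, E) | ∀ y ∈ B, G y = f y} := by
      have heq : {G : C(X, E) | ∀ y ∈ B, G y = f y} = ⋂ y ∈ B, {G | G y = f y} := by
        ext G; simp
      rw [heq]
      exact isClosed_biInter fun y _ =>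
        isClosed_eq (continuous_eval_const y) continuous_const
    have h2 : IsClosed {G : C(X, E) | dist G f ≤ ε} :=
      isClosed_le (continuous_id.dist continuous_const) continuous_const
    exact h1.inter h2
  have hfS : f ∈ S := ⟨fun y _ => rfl, by simp [dist_self, hε.le]⟩
  haveI : Nonempty ↥S := ⟨⟨f, hfS⟩⟩
  haveI : CompleteSpace ↥S := hSclosed.completeSpace_coe
  -- the countable family of open dense sets
  set ι := {t : Finset (Fin (2 * n + 1)) // t.card = n + 1} × (Fin (2 * n + 1) → ℚ) with hι
  set 𝒢 : ι → Set C(X, E) := fun sq =>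
    {G | ∀ y, ∃ i ∈ sq.1.1, G y i ≠ (sq.2 i : ℝ)} with h𝒢
  have hopen : ∀ sq, IsOpen (𝒢 sq) := by
    intro sq
    have hZ : IsClosed {z : E | ∀ i ∈ sq.1.1, z i = (sq.2 i : ℝ)} := by
      have heq : {z : E | ∀ i ∈ sq.1.1, z i = (sq.2 i : ℝ)} =
          ⋂ i ∈ sq.1.1, {z : E | z i = (sq.2 i : ℝ)} := by ext z; simp
      rw [heq]
      exact isClosed_biInter fun i _ => isClosed_eq (continuous_apply i) continuous_const
    have heq : 𝒢 sq = {G : C(X, E) |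
        Set.MapsTo G univ {z : E | ∀ i ∈ sq.1.1, z i = (sq.2 i : ℝ)}ᶜ} := by
      ext G
      simp only [h𝒢, Set.mem_setOf_eq, Set.MapsTo, Set.mem_univ, forall_true_left,
        Set.mem_compl_iff, Set.mem_setOf_eq]
      constructor
      · intro hG y
        obtain ⟨i, hi, hne⟩ := hG y
        intro hall
        exact hne (hall i hi)
      · intro hG y
        by_contra hcon
        push_neg at hcon
        exact (hG (x := y)) fun i hi => hcon i hi
    rw [heq]
    exact ContinuousMap.isOpen_setOf_mapsTo isCompact_univ hZ.isOpen_compl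
  have hdense : ∀ sq, Dense (Subtype.val ⁻¹' 𝒢 sq : Set ↥S) := by
    intro sq
    rw [Metric.dense_iff]
    intro G r hr
    obtain ⟨G', hG'B, hG'f, hG'𝒢, hG'G⟩ :=
      compress_density hX hB f hε hfB sq.1.1 sq.1.2 sq.2 G.1 G.2.1 G.2.2 hr
    refine ⟨⟨G', hG'B, hG'f⟩, ?_, hG'𝒢⟩
    rw [Metric.mem_ball, Subtype.dist_eq]
    exact hG'G
  have hopen' : ∀ sq, IsOpen (Subtype.val ⁻¹' 𝒢 sq : Set ↥S) :=
    fun sq => (hopen sq).preimage continuous_subtype_val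
  have hD : Dense (⋂ sq, (Subtype.val ⁻¹' 𝒢 sq : Set ↥S)) :=
    dense_iInter_of_isOpen hopen' hdense
  obtain ⟨Goo, hGoo⟩ := hD.nonempty
  rw [Set.mem_iInter] at hGoo
  refine ⟨Goo.1, Goo.2.2, Goo.2.1, ?_⟩
  intro y
  by_contra hcon
  unfold nobeling at hcon
  rw [Set.mem_setOf_eq, not_le] at hcon
  set R : Set (Fin (2 * n + 1)) := {i | ∃ r : ℚ, Goo.1 y i = (r : ℝ)} with hR
  have hRcard : n + 1 ≤ R.toFinset.card := by
    rw [← Set.ncard_eq_toFinset_card']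
    omega
  obtain ⟨t, htsub, htcard⟩ := Finset.exists_subset_card_eq hRcard
  set q : Fin (2 * n + 1) → ℚ := fun i =>
    if hi : i ∈ R then hi.choose else 0 with hq
  have := hGoo ⟨⟨t, htcard⟩, q⟩
  rw [Set.mem_preimage] at this
  obtain ⟨i, hit, hne⟩ := this y
  have hiR : i ∈ R := Set.mem_toFinset.1 (htsub hit)
  apply hne
  rw [hq]
  simp only [dif_pos hiR]
  exact hiR.choose_spec

theorem boundary_closed (k : ℕ) : IsClosed (Cube.boundary (Fin k)) := by
  have heq : Cube.boundary (Fin k) =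
      ⋃ i, ({y : Fin k → I | y i = 0} ∪ {y : Fin k → I | y i = 1}) := by
    ext y; simp [Cube.boundary]
  rw [heq]
  exact isClosed_iUnion_of_finite fun i =>
    (isClosed_eq (continuous_apply i) continuous_const).union
      (isClosed_eq (continuous_apply i) continuous_const)

/-- For every open subset `U` of `ℝ^(2n+1)`, the inclusion of `U ∩ νⁿ` into `U` is
a weak `n`-homotopy equivalence. -/
theorem nobeling_inclusion_weak_equiv (n : ℕ) (U : Set (Fin (2 * n + 1) → ℝ))
    (hU : IsOpen U) :
    IsWeakNHomotopyEquiv n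
      (⟨Set.inclusion (inter_subset_left : U ∩ nobeling n ⊆ U),
        continuous_inclusion inter_subset_left⟩ : C((U ∩ nobeling n : Set _), U)) := by
  intro k hk x
  set φ : C((U ∩ nobeling n : Set _), U) :=
    ⟨Set.inclusion (inter_subset_left : U ∩ nobeling n ⊆ U),
      continuous_inclusion inter_subset_left⟩ with hφ
  constructor
  · -- injectivity
    intro A B' hAB
    revert hAB
    refine Quotient.inductionOn₂ A B' ?_
    intro a b hab
    have hrel := Quotient.exact hab
    obtain ⟨H⟩ := hrel
    -- the underlying homotopy as a map into ℝ^(2n+1)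
    set F : C(I × (Fin k → I), Fin (2 * n + 1) → ℝ) :=
      ⟨fun z => ((H z : ↥U) : Fin (2 * n + 1) → ℝ),
        continuous_subtype_val.comp H.continuous⟩ with hF
    set B : Set (I × (Fin k → I)) :=
      {z | z.1 = 0 ∨ z.1 = 1 ∨ z.2 ∈ Cube.boundary (Fin k)} with hBdef
    have hBclosed : IsClosed B := by
      have heq : B = ({z : I × (Fin k → I) | z.1 = 0} ∪
          ({z : I × (Fin k → I) | z.1 = 1} ∪
            {z : I × (Fin k → I) | z.2 ∈ Cube.boundary (Fin k)})) := by
        rfl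
      rw [heq]
      exact (isClosed_eq continuous_fst continuous_const).union
        ((isClosed_eq continuous_fst continuous_const).union
          ((boundary_closed k).preimage continuous_snd))
    have hval : ∀ w : ↥(U ∩ nobeling n), ((φ w : ↥U) : Fin (2 * n + 1) → ℝ) = (w : _) := by
      intro w; rfl
    have hFB : ∀ z ∈ B, F z ∈ nobeling n := by
      rintro ⟨t, y⟩ hz
      rcases hz with h0 | h1 | hy
      · have : H (t, y) = (φ.comp a.1) y := by
          rw [show ((t, y) : I × (Fin k → I)) = ((0 : I), y) by simp [Prod.ext_iff]; exact h0]
          exact H.apply_zero y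
        show ((H (t, y) : ↥U) : Fin (2 * n + 1) → ℝ) ∈ nobeling n
        rw [this]
        exact (a.1 y).2.2
      · have : H (t, y) = (φ.comp b.1) y := by
          rw [show ((t, y) : I × (Fin k → I)) = ((1 : I), y) by simp [Prod.ext_iff]; exact h1]
          exact H.apply_one y
        show ((H (t, y) : ↥U) : Fin (2 * n + 1) → ℝ) ∈ nobeling n
        rw [this]
        exact (b.1 y).2.2
      · have : H (t, y) = (φ.comp a.1) y := H.prop' t y hy
        show ((H (t, y) : ↥U) : Fin (2 * n + 1) → ℝ) ∈ nobeling n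
        rw [this]
        exact (a.1 y).2.2
    -- a positive margin around the image
    have hsub : Set.range F ⊆ U := by
      rintro _ ⟨z, rfl⟩
      exact (H z).2
    obtain ⟨d, hd, hthick⟩ :=
      (isCompact_range F.continuous).exists_thickening_subset_open hU hsub
    have hεU : ∀ (w : Fin (2 * n + 1) → ℝ) (z : I × (Fin k → I)),
        dist w (F z) ≤ d / 2 → w ∈ U := by
      intro w z hwz
      apply hthick
      rw [Metric.mem_thickening_iff]
      exact ⟨F z, Set.mem_range_self z, lt_of_le_of_lt hwz (by linarith)⟩
    obtain ⟨g, hgd, hgB, hgν⟩ := compress (nullLip_prod (by omega : k + 1 ≤ n)) hBclosed F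
      (by linarith : (0:ℝ) < d / 2) hFB
    have hgU : ∀ z, g z ∈ U := fun z =>
      hεU _ z (le_trans (ContinuousMap.dist_apply_le_dist z) hgd)
    -- build a homotopy in U ∩ ν
    set K : ContinuousMap.HomotopyRel a.1 b.1 (Cube.boundary (Fin k)) :=
      { toFun := fun z => (⟨g z, hgU z, hgν z⟩ : ↥(U ∩ nobeling n)),
        continuous_toFun := g.continuous.subtype_mk _,
        map_zero_left := fun y => by
          apply Subtype.ext
          show g ((0 : I), y) = ((a.1 y : ↥(U ∩ nobeling n)) : Fin (2 * n + 1) → ℝ)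
          rw [hgB ((0 : I), y) (Or.inl rfl)]
          show ((H ((0 : I), y) : ↥U) : Fin (2 * n + 1) → ℝ) = ((a.1 y : ↥(U ∩ nobeling n)) : Fin (2 * n + 1) → ℝ)
          rw [H.apply_zero y]
          exact hval (a.1 y),
        map_one_left := fun y => by
          apply Subtype.ext
          show g ((1 : I), y) = ((b.1 y : ↥(U ∩ nobeling n)) : Fin (2 * n + 1) → ℝ)
          rw [hgB ((1 : I), y) (Or.inr (Or.inl rfl))]
          show ((H ((1 : I), y) : ↥U) : Fin (2 * n + 1) → ℝ) = ((b.1 y : ↥(U ∩ nobeling n)) : Fin (2 * n + 1) → ℝ)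
          rw [H.apply_one y]
          exact hval (b.1 y),
        prop' := fun t y hy => by
          apply Subtype.ext
          show g (t, y) = ((a.1 y : ↥(U ∩ nobeling n)) : Fin (2 * n + 1) → ℝ)
          rw [hgB (t, y) (Or.inr (Or.inr hy))]
          show ((H (t, y) : ↥U) : Fin (2 * n + 1) → ℝ) = ((a.1 y : ↥(U ∩ nobeling n)) : Fin (2 * n + 1) → ℝ)
          have hpy : H (t, y) = (φ.comp a.1) y := H.prop' t y hy
          rw [hpy]
          exact hval (a.1 y) }
    exact Quotient.sound ⟨K⟩
  · -- surjectivity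
    intro P
    refine Quotient.inductionOn P ?_
    intro p
    set F : C((Fin k → I), Fin (2 * n + 1) → ℝ) :=
      ⟨fun y => ((p.1 y : ↥U) : Fin (2 * n + 1) → ℝ),
        continuous_subtype_val.comp p.1.continuous⟩ with hF
    have hsub : Set.range F ⊆ U := by
      rintro _ ⟨y, rfl⟩
      exact (p.1 y).2
    obtain ⟨d, hd, hthick⟩ :=
      (isCompact_range F.continuous).exists_thickening_subset_open hU hsub
    have hεU : ∀ (w : Fin (2 * n + 1) → ℝ) (y : Fin k → I),
        dist w (F y) ≤ d / 2 → w ∈ U := by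
      intro w y hwy
      apply hthick
      rw [Metric.mem_thickening_iff]
      exact ⟨F y, Set.mem_range_self y, lt_of_le_of_lt hwy (by linarith)⟩
    have hFB : ∀ y ∈ Cube.boundary (Fin k), F y ∈ nobeling n := by
      intro y hy
      show ((p.1 y : ↥U) : Fin (2 * n + 1) → ℝ) ∈ nobeling n
      rw [p.2 y hy]
      exact x.2.2
    obtain ⟨g, hgd, hgB, hgν⟩ := compress (nullLip_cube hk.le) (boundary_closed k) F
      (by linarith : (0:ℝ) < d / 2) hFB
    have hgU : ∀ y, g y ∈ U := fun y =>
      hεU _ y (le_trans (ContinuousMap.dist_apply_le_dist y) hgd)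
    set Q : ↥(GenLoop (Fin k) (↥(U ∩ nobeling n)) x) :=
      ⟨⟨fun y => (⟨g y, hgU y, hgν y⟩ : ↥(U ∩ nobeling n)), g.continuous.subtype_mk _⟩,
        fun y hy => by
          apply Subtype.ext
          show g y = (x : Fin (2 * n + 1) → ℝ)
          rw [hgB y hy]
          show ((p.1 y : ↥U) : Fin (2 * n + 1) → ℝ) = (x : Fin (2 * n + 1) → ℝ)
          rw [p.2 y hy]
          rfl⟩ with hQ
    refine ⟨Quotient.mk _ Q, ?_⟩
    rw [inducedPi, Quotient.map_mk]
    apply Quotient.sound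
    -- homotopy from φ ∘ Q to p along straight lines
    have hmem : ∀ z : I × (Fin k → I),
        g z.2 + (z.1 : ℝ) • (F z.2 - g z.2) ∈ U := by
      intro z
      apply hεU _ z.2
      have hid : g z.2 + (z.1 : ℝ) • (F z.2 - g z.2) - F z.2
          = (1 - (z.1 : ℝ)) • (g z.2 - F z.2) := by module
      rw [dist_eq_norm, hid, norm_smul, Real.norm_eq_abs,
        abs_of_nonneg (by linarith [z.1.2.2] : (0:ℝ) ≤ 1 - (z.1 : ℝ))]
      calc (1 - (z.1 : ℝ)) * ‖g z.2 - F z.2‖ ≤ 1 * ‖g z.2 - F z.2‖ :=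
        mul_le_mul_of_nonneg_right (by linarith [z.1.2.1]) (norm_nonneg _)
      _ = dist (g z.2) (F z.2) := by rw [one_mul, dist_eq_norm]
      _ ≤ d / 2 := le_trans (ContinuousMap.dist_apply_le_dist z.2) hgd
    set K : ContinuousMap.HomotopyRel (φ.comp Q.1) p.1 (Cube.boundary (Fin k)) :=
      { toFun := fun z => (⟨g z.2 + (z.1 : ℝ) • (F z.2 - g z.2), hmem z⟩ : ↥U),
        continuous_toFun := by
          apply Continuous.subtype_mk
          exact (g.continuous.comp continuous_snd).add
            ((continuous_subtype_val.comp continuous_fst).smul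
              ((F.continuous.comp continuous_snd).sub (g.continuous.comp continuous_snd))),
        map_zero_left := fun y => by
          apply Subtype.ext
          show g y + ((0 : I) : ℝ) • (F y - g y) = (((φ.comp Q.1) y : ↥U) : Fin (2 * n + 1) → ℝ)
          simp only [Icc.coe_zero, zero_smul, add_zero]
          rfl,
        map_one_left := fun y => by
          apply Subtype.ext
          show g y + ((1 : I) : ℝ) • (F y - g y) = ((p.1 y : ↥U) : Fin (2 * n + 1) → ℝ)
          simp only [Icc.coe_one, one_smul]
          abel,
        prop' := fun t y hy => by
          apply Subtype.ext
          show g y + (t : ℝ) • (F y - g y) = (((φ.comp Q.1) y : ↥U) : Fin (2 * n + 1) → ℝ)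
          rw [← hgB y hy]
          simp
          rfl }
    exact ⟨K⟩

end NobelingPaper
end

section
/- The $n$-dimensional Nöbeling space $\nu^n$ (the set of points of $\mathbb{R}^{2n+1}$ with at most $n$ rational coordinates) has vanishing homotopy groups in all dimensions less than $n$. -/
open Set ContinuousMap
open scoped ENNReal

namespace NobelingPaper

noncomputable section

open scoped unitInterval Classical

/-! ### A small theory of real-valued Lipschitz-on-a-set functions with real constants -/

section LipOn

variable {α : Type*} [PseudoMetricSpace α]

/-- Real-constant Lipschitz condition on a set. -/
def LipOn (C : ℝ) (f : α → ℝ) (s : Set α) : Prop :=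
  ∀ a ∈ s, ∀ b ∈ s, |f a - f b| ≤ C * dist a b

theorem LipOn.mono {C C' : ℝ} {f : α → ℝ} {s : Set α} (h : LipOn C f s) (hC : C ≤ C') :
    LipOn C' f s := fun a ha b hb =>
  (h a ha b hb).trans (mul_le_mul_of_nonneg_right hC dist_nonneg)

theorem lipOn_const (c : ℝ) (s : Set α) : LipOn 0 (fun _ => c) s := by
  intro a _ b _; simp

theorem LipOn.add {C₁ C₂ : ℝ} {f g : α → ℝ} {s : Set α} (hf : LipOn C₁ f s) (hg : LipOn C₂ g s) :
    LipOn (C₁ + C₂) (fun a => f a + g a) s := by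
  intro a ha b hb
  have h1 := hf a ha b hb
  have h2 := hg a ha b hb
  have : f a + g a - (f b + g b) = (f a - f b) + (g a - g b) := by ring
  rw [this, add_mul]
  exact (abs_add_le _ _).trans (add_le_add h1 h2)

theorem LipOn.neg {C : ℝ} {f : α → ℝ} {s : Set α} (hf : LipOn C f s) :
    LipOn C (fun a => -f a) s := by
  intro a ha b hb
  have := hf a ha b hb
  rwa [show -f a - -f b = -(f a - f b) by ring, abs_neg]

theorem LipOn.sub {C₁ C₂ : ℝ} {f g : α → ℝ} {s : Set α} (hf : LipOn C₁ f s) (hg : LipOn C₂ g s) :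
    LipOn (C₁ + C₂) (fun a => f a - g a) s := by
  have := hf.add hg.neg
  simpa [sub_eq_add_neg] using this

theorem LipOn.mul {C₁ C₂ A B : ℝ} {f g : α → ℝ} {s : Set α} (hf : LipOn C₁ f s) (hg : LipOn C₂ g s)
    (hA : ∀ a ∈ s, |f a| ≤ A) (hB : ∀ a ∈ s, |g a| ≤ B) :
    LipOn (A * C₂ + B * C₁) (fun a => f a * g a) s := by
  intro a ha b hb
  have h1 := hf a ha b hb
  have h2 := hg a ha b hb
  have hA' := hA a ha
  have hB' := hB b hb
  have key : f a * g a - f b * g b = f a * (g a - g b) + g b * (f a - f b) := by ring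
  rw [key]
  refine (abs_add_le _ _).trans ?_
  rw [abs_mul, abs_mul]
  have e1 : |f a| * |g a - g b| ≤ A * (C₂ * dist a b) :=
    mul_le_mul hA' h2 (abs_nonneg _) ((abs_nonneg _).trans hA')
  have e2 : |g b| * |f a - f b| ≤ B * (C₁ * dist a b) :=
    mul_le_mul hB' h1 (abs_nonneg _) ((abs_nonneg _).trans hB')
  calc |f a| * |g a - g b| + |g b| * |f a - f b|
      ≤ A * (C₂ * dist a b) + B * (C₁ * dist a b) := add_le_add e1 e2
    _ = (A * C₂ + B * C₁) * dist a b := by ring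

theorem LipOn.inv {C ε : ℝ} {f : α → ℝ} {s : Set α} (hf : LipOn C f s) (hC0 : 0 ≤ C)
    (hε : 0 < ε) (hfe : ∀ a ∈ s, ε ≤ f a) :
    LipOn (C / (ε * ε)) (fun a => 1 / f a) s := by
  intro a ha b hb
  have hfa := hfe a ha
  have hfb := hfe b hb
  have hfa0 : 0 < f a := lt_of_lt_of_le hε hfa
  have hfb0 : 0 < f b := lt_of_lt_of_le hε hfb
  have key : 1 / f a - 1 / f b = (f b - f a) / (f a * f b) := by
    field_simp
  rw [key, abs_div, abs_mul, abs_of_pos hfa0, abs_of_pos hfb0]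
  rw [div_le_iff₀ (by positivity)]
  have h1 : |f b - f a| ≤ C * dist a b := by
    rw [abs_sub_comm]; exact hf a ha b hb
  have h2 : ε * ε ≤ f a * f b := by
    have := mul_le_mul hfa hfb hε.le hfa0.le
    linarith
  have hnn : 0 ≤ C / (ε * ε) * dist a b :=
    mul_nonneg (div_nonneg hC0 (by positivity)) dist_nonneg
  calc |f b - f a| ≤ C * dist a b := h1
    _ = C / (ε * ε) * dist a b * (ε * ε) := by field_simp
    _ ≤ C / (ε * ε) * dist a b * (f a * f b) := by
        exact mul_le_mul_of_nonneg_left h2 hnn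

theorem LipOn.prod_finset {ι : Type*} (t : Finset ι) {f : ι → α → ℝ} {s : Set α}
    (h1 : ∀ i ∈ t, LipOn 1 (f i) s) (h2 : ∀ i ∈ t, ∀ a ∈ s, 0 ≤ f i a ∧ f i a ≤ 1) :
    LipOn (t.card) (fun a => ∏ i ∈ t, f i a) s := by
  classical
  induction t using Finset.induction_on with
  | empty => simpa using lipOn_const 1 s
  | @insert j t hj IH =>
    have hstep : LipOn (1 * (t.card : ℝ) + 1 * 1)
        (fun a => f j a * ∏ i ∈ t, f i a) s := by
      refine LipOn.mul (h1 j (Finset.mem_insert_self j t))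
        (IH (fun i hi => h1 i (Finset.mem_insert_of_mem hi))
            (fun i hi => h2 i (Finset.mem_insert_of_mem hi))) ?_ ?_
      · intro a ha
        have := h2 j (Finset.mem_insert_self j t) a ha
        rw [abs_of_nonneg this.1]; exact this.2
      · intro a ha
        have hnn : 0 ≤ ∏ i ∈ t, f i a :=
          Finset.prod_nonneg fun i hi => (h2 i (Finset.mem_insert_of_mem hi) a ha).1
        have hle : ∏ i ∈ t, f i a ≤ 1 :=
          Finset.prod_le_one (fun i hi => (h2 i (Finset.mem_insert_of_mem hi) a ha).1)
            (fun i hi => (h2 i (Finset.mem_insert_of_mem hi) a ha).2)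
        rw [abs_of_nonneg hnn]; exact hle
    have hcard : ((insert j t).card : ℝ) = (t.card : ℝ) + 1 := by
      rw [Finset.card_insert_of_notMem hj]; push_cast; ring
    intro a ha b hb
    have := hstep a ha b hb
    simp only [Finset.prod_insert hj]
    rw [hcard]
    calc |f j a * ∏ i ∈ t, f i a - f j b * ∏ i ∈ t, f i b|
        ≤ (1 * (t.card : ℝ) + 1 * 1) * dist a b := this
      _ = ((t.card : ℝ) + 1) * dist a b := by ring

end LipOn

/-! ### McShane/inf-convolution smoothing on the cube -/

section McShane

variable {k : ℕ}

theorem cube_dist_le_one (y z : Fin k → I) : dist y z ≤ 1 := by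
  rw [dist_pi_le_iff zero_le_one]
  intro i
  rw [Subtype.dist_eq, Real.dist_eq, abs_le]
  constructor
  · have := (y i).2.1; have := (z i).2.2; linarith
  · have := (y i).2.2; have := (z i).2.1; linarith

/-- The McShane inf-convolution of `g` at Lipschitz scale `L`. -/
def mcf (g : (Fin k → I) → ℝ) (L : ℝ) (y : Fin k → I) : ℝ :=
  ⨅ z : Fin k → I, (g z + L * dist y z)

variable {g : (Fin k → I) → ℝ} {B : ℝ}

theorem mcf_bddBelow (hB : ∀ z, |g z| ≤ B) {L : ℝ} (hL : 0 ≤ L) (y : Fin k → I) :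
    BddBelow (Set.range fun z => g z + L * dist y z) := by
  refine ⟨-B, ?_⟩
  rintro _ ⟨z, rfl⟩
  show -B ≤ g z + L * dist y z
  have h1 := (abs_le.mp (hB z)).1
  have h2 : 0 ≤ L * dist y z := mul_nonneg hL dist_nonneg
  linarith

theorem mcf_le (hB : ∀ z, |g z| ≤ B) {L : ℝ} (hL : 0 ≤ L) (y z : Fin k → I) :
    mcf g L y ≤ g z + L * dist y z :=
  ciInf_le (mcf_bddBelow hB hL y) z

theorem mcf_le_self (hB : ∀ z, |g z| ≤ B) {L : ℝ} (hL : 0 ≤ L) (y : Fin k → I) :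
    mcf g L y ≤ g y := by
  have := mcf_le hB hL y y
  simpa using this

theorem le_mcf {L : ℝ} {c : ℝ} (y : Fin k → I) (h : ∀ z, c ≤ g z + L * dist y z) :
    c ≤ mcf g L y :=
  le_ciInf h

theorem neg_le_mcf (hB : ∀ z, |g z| ≤ B) {L : ℝ} (hL : 0 ≤ L) (y : Fin k → I) :
    -B ≤ mcf g L y := by
  refine le_mcf y fun z => ?_
  have h1 := (abs_le.mp (hB z)).1
  have h2 : 0 ≤ L * dist y z := mul_nonneg hL dist_nonneg
  linarith

theorem abs_mcf_le (hB : ∀ z, |g z| ≤ B) {L : ℝ} (hL : 0 ≤ L) (y : Fin k → I) :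
    |mcf g L y| ≤ B := by
  rw [abs_le]
  refine ⟨neg_le_mcf hB hL y, (mcf_le_self hB hL y).trans ?_⟩
  exact (abs_le.mp (hB y)).2

/-- Lipschitz estimate in the space variable. -/
theorem mcf_lip_y (hB : ∀ z, |g z| ≤ B) {L : ℝ} (hL : 0 ≤ L) (y y' : Fin k → I) :
    |mcf g L y - mcf g L y'| ≤ L * dist y y' := by
  have key : ∀ u v : Fin k → I, mcf g L u ≤ mcf g L v + L * dist u v := by
    intro u v
    have : mcf g L u - L * dist u v ≤ mcf g L v := by
      refine le_mcf v fun z => ?_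
      have h1 := mcf_le hB hL u z
      have h2 : dist u z ≤ dist u v + dist v z := dist_triangle u v z
      have h3 : L * dist u z ≤ L * (dist u v + dist v z) := by
        exact mul_le_mul_of_nonneg_left h2 hL
      linarith
    linarith
  rw [abs_sub_le_iff]
  constructor
  · have := key y y'; linarith
  · have := key y' y; rw [dist_comm] at this; linarith

/-- Lipschitz estimate in the scale variable. -/
theorem mcf_lip_L (hB : ∀ z, |g z| ≤ B) {L L' : ℝ} (hL : 0 ≤ L) (hL' : 0 ≤ L') (y : Fin k → I) :
    |mcf g L y - mcf g L' y| ≤ |L - L'| := by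
  have key : ∀ M M' : ℝ, 0 ≤ M → 0 ≤ M' → mcf g M y ≤ mcf g M' y + |M - M'| := by
    intro M M' hM hM'
    have : mcf g M y - |M - M'| ≤ mcf g M' y := by
      refine le_mcf y fun z => ?_
      have h1 := mcf_le hB hM y z
      have h2 : M * dist y z ≤ M' * dist y z + |M - M'| := by
        have hd0 : 0 ≤ dist y z := dist_nonneg
        have hd1 : dist y z ≤ 1 := cube_dist_le_one y z
        have : (M - M') * dist y z ≤ |M - M'| * dist y z := by
          exact mul_le_mul_of_nonneg_right (le_abs_self _) hd0
        nlinarith [abs_nonneg (M - M')]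
      linarith
    linarith
  rw [abs_sub_le_iff]
  constructor
  · have := key L L' hL hL'; linarith
  · have := key L' L hL' hL; rw [abs_sub_comm] at this; linarith

/-- Uniform approximation: for large `L`, `mcf g L` is uniformly close to `g`. -/
theorem mcf_approx (hg : Continuous g) (hB : ∀ z, |g z| ≤ B) {ε : ℝ} (hε : 0 < ε) :
    ∃ L₀ : ℝ, 0 ≤ L₀ ∧ ∀ L, L₀ ≤ L → ∀ y, |mcf g L y - g y| ≤ ε := by
  have hB0 : 0 ≤ B := (abs_nonneg _).trans (hB (fun _ => 0))
  have huc : UniformContinuous g := CompactSpace.uniformContinuous_of_continuous hg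
  obtain ⟨δ, hδ, hδε⟩ := Metric.uniformContinuous_iff.mp huc ε hε
  refine ⟨(2 * B + 1) / δ, by positivity, fun L hL y => ?_⟩
  have hL0 : 0 ≤ L := le_trans (by positivity) hL
  rw [abs_le]
  constructor
  · -- mcf ≥ g y - ε
    have : g y - ε ≤ mcf g L y := by
      refine le_mcf y fun z => ?_
      by_cases hz : dist y z < δ
      · have := hδε (by rwa [dist_comm] at hz)
        rw [Real.dist_eq, abs_lt] at this
        have h2 : 0 ≤ L * dist y z := mul_nonneg hL0 dist_nonneg
        linarith
      · push_neg at hz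
        have h1 : (2 * B + 1) / δ * δ ≤ L * dist y z := by
          calc (2 * B + 1) / δ * δ ≤ L * δ := by
                apply mul_le_mul_of_nonneg_right hL hδ.le
            _ ≤ L * dist y z := by
                exact mul_le_mul_of_nonneg_left hz hL0
        have h2 : (2 * B + 1) / δ * δ = 2 * B + 1 := by field_simp
        have h3 := (abs_le.mp (hB z)).1
        have h4 := (abs_le.mp (hB y)).2
        nlinarith
    linarith
  · have h := mcf_le_self hB hL0 y
    linarith

end McShane

/-! ### The homotopy formula -/

section Main

variable {n k : ℕ}

/-- Bump function vanishing exactly on the boundary of the cube. -/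
def phik (y : Fin k → I) : ℝ := ∏ i, ((y i : ℝ) * (1 - (y i : ℝ)))

theorem phik_mem (y : Fin k → I) : 0 ≤ phik y ∧ phik y ≤ 1 := by
  constructor
  · refine Finset.prod_nonneg fun i _ => ?_
    have h1 := (y i).2.1; have h2 := (y i).2.2
    nlinarith
  · refine Finset.prod_le_one (fun i _ => ?_) (fun i _ => ?_)
    · have h1 := (y i).2.1; have h2 := (y i).2.2; nlinarith
    · have h1 := (y i).2.1; have h2 := (y i).2.2; nlinarith

theorem phik_eq_zero_iff (y : Fin k → I) :
    phik y = 0 ↔ ∃ i, y i = 0 ∨ y i = 1 := by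
  rw [phik, Finset.prod_eq_zero_iff]
  constructor
  · rintro ⟨i, -, hi⟩
    rcases mul_eq_zero.mp hi with h | h
    · exact ⟨i, Or.inl (by ext; simpa using h)⟩
    · exact ⟨i, Or.inr (by ext; simp only [Set.Icc.coe_one]; linarith)⟩
  · rintro ⟨i, hi | hi⟩
    · exact ⟨i, Finset.mem_univ i, by rw [hi]; simp⟩
    · exact ⟨i, Finset.mem_univ i, by rw [hi]; simp⟩

/-- The damping factor. -/
def tauk (p : I × (Fin k → I)) : ℝ := (p.1 : ℝ) * (1 - (p.1 : ℝ)) * phik p.2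

theorem tauk_nonneg (p : I × (Fin k → I)) : 0 ≤ tauk p := by
  have h1 := p.1.2.1; have h2 := p.1.2.2
  have h3 := (phik_mem p.2).1
  have : (0:ℝ) ≤ (p.1 : ℝ) * (1 - (p.1 : ℝ)) := by nlinarith
  exact mul_nonneg this h3

theorem tauk_le_one (p : I × (Fin k → I)) : tauk p ≤ 1 := by
  have h1 := p.1.2.1; have h2 := p.1.2.2
  have h3 := (phik_mem p.2).1; have h4 := (phik_mem p.2).2
  have h5 : (p.1 : ℝ) * (1 - (p.1 : ℝ)) ≤ 1 := by nlinarith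
  have h6 : (0:ℝ) ≤ (p.1 : ℝ) * (1 - (p.1 : ℝ)) := by nlinarith
  calc tauk p ≤ (p.1 : ℝ) * (1 - (p.1 : ℝ)) * 1 := by
        exact mul_le_mul_of_nonneg_left h4 h6
    _ ≤ 1 := by nlinarith

theorem tauk_eq_zero_cases {p : I × (Fin k → I)} (h : tauk p = 0) :
    p.1 = 0 ∨ p.1 = 1 ∨ phik p.2 = 0 := by
  rcases mul_eq_zero.mp h with h1 | h1
  · rcases mul_eq_zero.mp h1 with h2 | h2
    · exact Or.inl (by ext; simpa using h2)
    · exact Or.inr (Or.inl (by ext; simp only [Set.Icc.coe_one]; linarith))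
  · exact Or.inr (Or.inr h1)

variable (F : (Fin k → I) → Fin (2 * n + 1) → ℝ) (xb : Fin (2 * n + 1) → ℝ)

/-- The smoothed version of `F`, at damping scale `tauk p`. -/
def Qmap (p : I × (Fin k → I)) (i : Fin (2 * n + 1)) : ℝ :=
  if tauk p = 0 then F p.2 i else mcf (fun z => F z i) (1 / tauk p) p.2

/-- The homotopy formula. -/
def Kmap (a : Fin (2 * n + 1) → ℝ) (p : I × (Fin k → I)) (i : Fin (2 * n + 1)) : ℝ :=
  (1 - (p.1 : ℝ)) * Qmap F p i + (p.1 : ℝ) * xb i + tauk p * a i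

/-- The "forbidden translations" map. -/
def Psimap (q : Fin (2 * n + 1) → ℚ) (p : I × (Fin k → I)) (i : Fin (2 * n + 1)) : ℝ :=
  (1 / tauk p) * ((q i : ℝ) - (1 - (p.1 : ℝ)) * Qmap F p i - (p.1 : ℝ) * xb i)

/-- The region where the damping factor is not too small. -/
def Dset (k : ℕ) (m : ℕ) : Set (I × (Fin k → I)) := {p | 1 / ((m : ℝ) + 1) ≤ tauk p}

/-- Index type for the countable family of bad sets. -/
def BadIdx (n : ℕ) : Type :=
  {S : Finset (Fin (2 * n + 1)) // S.card = n + 1} × (Fin (2 * n + 1) → ℚ) × ℕ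

instance (n : ℕ) : Countable (BadIdx n) := by
  unfold BadIdx; infer_instance

/-- The bad set of translation vectors for a given index. -/
def BadSet (z : BadIdx n) : Set (Fin (2 * n + 1) → ℝ) :=
  {a | (fun i : {i // i ∈ z.1.1} => a i.1) ∈
    (fun p (i : {i // i ∈ z.1.1}) => Psimap F xb z.2.1 p i.1) '' (Dset k z.2.2)}

end Main

section NullSet

variable {n k : ℕ} (F : (Fin k → I) → Fin (2 * n + 1) → ℝ) (xb : Fin (2 * n + 1) → ℝ)

theorem dist_fst_le' (p p' : I × (Fin k → I)) : dist (p.1 : ℝ) (p'.1 : ℝ) ≤ dist p p' := by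
  rw [← Subtype.dist_eq]
  rw [Prod.dist_eq]
  exact le_max_left _ _

theorem dist_coord_le' (p p' : I × (Fin k → I)) (i : Fin k) :
    dist ((p.2 i : ℝ)) ((p'.2 i : ℝ)) ≤ dist p p' := by
  rw [← Subtype.dist_eq]
  calc dist (p.2 i) (p'.2 i) ≤ dist p.2 p'.2 := dist_le_pi_dist _ _ i
    _ ≤ dist p p' := by rw [Prod.dist_eq]; exact le_max_right _ _

theorem dist_snd_le' (p p' : I × (Fin k → I)) : dist p.2 p'.2 ≤ dist p p' := by
  rw [Prod.dist_eq]; exact le_max_right _ _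

/-- Lipschitz estimate for `tauk`. -/
theorem tauk_lipOn (s : Set (I × (Fin k → I))) : LipOn ((k : ℝ) + 2) tauk s := by
  have h_t : LipOn 1 (fun p : I × (Fin k → I) => (p.1 : ℝ)) s := by
    intro a _ b _
    rw [← Real.dist_eq]
    simpa using dist_fst_le' a b
  have h_1t : LipOn 1 (fun p : I × (Fin k → I) => 1 - (p.1 : ℝ)) s := by
    have := ((lipOn_const (α := I × (Fin k → I)) 1 s).sub h_t)
    simpa using this
  have htb : ∀ p ∈ s, |(p.1 : ℝ)| ≤ 1 := by
    intro p _
    rw [abs_le]; exact ⟨by linarith [p.1.2.1], p.1.2.2⟩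
  have h1tb : ∀ p ∈ s, |1 - (p.1 : ℝ)| ≤ 1 := by
    intro p _
    rw [abs_le]; constructor <;> [skip; skip] <;>
      [linarith [p.1.2.2]; linarith [p.1.2.1]]
  have h_tt : LipOn 2 (fun p : I × (Fin k → I) => (p.1 : ℝ) * (1 - (p.1 : ℝ))) s := by
    have := h_t.mul h_1t htb h1tb
    simpa using (this.mono (by norm_num))
  have h_phi : LipOn (k : ℝ) (fun p : I × (Fin k → I) => phik p.2) s := by
    have := LipOn.prod_finset (Finset.univ : Finset (Fin k))
      (f := fun i (p : I × (Fin k → I)) => (p.2 i : ℝ) * (1 - (p.2 i : ℝ)))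
      (s := s) ?_ ?_
    · have hc : ((Finset.univ : Finset (Fin k)).card : ℝ) = (k : ℝ) := by simp
      rw [hc] at this
      convert this using 2
      rfl
    · intro i _
      intro a ha b hb
      have hd := dist_coord_le' a b i
      rw [Real.dist_eq] at hd
      set u := ((a.2 i : ℝ)); set v := ((b.2 i : ℝ))
      have hu1 := (a.2 i).2.1; have hu2 := (a.2 i).2.2
      have hv1 := (b.2 i).2.1; have hv2 := (b.2 i).2.2
      have key : u * (1 - u) - v * (1 - v) = (u - v) * (1 - u - v) := by ring
      rw [key, abs_mul]
      have h1 : |1 - u - v| ≤ 1 := by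
        rw [abs_le]; constructor <;> simp only [u, v] at * <;> nlinarith
      calc |u - v| * |1 - u - v| ≤ |u - v| * 1 := by
            exact mul_le_mul_of_nonneg_left h1 (abs_nonneg _)
        _ = |u - v| := by ring
        _ ≤ dist a b := hd
        _ = 1 * dist a b := by ring
    · intro i _ a _
      have h1 := (a.2 i).2.1
      have h2 := (a.2 i).2.2
      refine ⟨?_, ?_⟩
      · show (0:ℝ) ≤ (a.2 i : ℝ) * (1 - (a.2 i : ℝ))
        nlinarith
      · show ((a.2 i : ℝ) * (1 - (a.2 i : ℝ))) ≤ 1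
        nlinarith
  have htt_b : ∀ p ∈ s, |(p.1 : ℝ) * (1 - (p.1 : ℝ))| ≤ 1 := by
    intro p _
    rw [abs_le]
    have h1 := p.1.2.1; have h2 := p.1.2.2
    constructor <;> nlinarith
  have hphi_b : ∀ p ∈ s, |phik p.2| ≤ 1 := by
    intro p _
    rw [abs_le]
    have := phik_mem p.2
    exact ⟨by linarith [this.1], this.2⟩
  have final := h_tt.mul (A := 1) (B := 1) h_phi htt_b hphi_b
  have : (1 : ℝ) * (k : ℝ) + 1 * 2 = (k : ℝ) + 2 := by ring
  rw [this] at final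
  exact final.mono (le_refl _)

/-- The pieces of `Psimap` are Lipschitz on `Dset k m`, with a common constant. -/
theorem psimap_lipOn (hFc : Continuous F) (q : Fin (2 * n + 1) → ℚ) (m : ℕ) :
    ∃ C : ℝ, 0 ≤ C ∧ ∀ i, LipOn C (fun p => Psimap F xb q p i) (Dset k m) := by
  obtain ⟨B, hBmem⟩ := IsCompact.exists_bound_of_continuousOn isCompact_univ hFc.continuousOn
  have hB : ∀ (i : Fin (2 * n + 1)) (z : Fin k → I), |F z i| ≤ B := by
    intro i z
    have h1 : ‖F z i‖ ≤ ‖F z‖ := norm_le_pi_norm (F z) i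
    have h2 := hBmem z (Set.mem_univ z)
    rw [Real.norm_eq_abs] at h1
    linarith
  have hB0 : 0 ≤ B := (abs_nonneg _).trans (hB 0 (fun _ => 0))
  set Bx : ℝ := ‖xb‖ with hBx_def
  have hBx : ∀ i, |xb i| ≤ Bx := by
    intro i
    have := norm_le_pi_norm xb i
    rwa [Real.norm_eq_abs] at this
  have hBx0 : 0 ≤ Bx := norm_nonneg _
  set Bq : ℝ := ‖(fun i => (q i : ℝ))‖ with hBq_def
  have hBq : ∀ i, |(q i : ℝ)| ≤ Bq := by
    intro i
    have := norm_le_pi_norm (fun i => (q i : ℝ)) i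
    rwa [Real.norm_eq_abs] at this
  have hBq0 : 0 ≤ Bq := norm_nonneg _
  set em : ℝ := (m : ℝ) + 1 with hem_def
  have hem : 0 < em := by positivity
  set s := Dset k m with hs_def
  have hτlb : ∀ p ∈ s, 1 / em ≤ tauk p := fun p hp => hp
  have hτpos : ∀ p ∈ s, 0 < tauk p := fun p hp =>
    lt_of_lt_of_le (div_pos one_pos hem) (hτlb p hp)
  have hτub : ∀ p ∈ s, 1 / tauk p ≤ em := by
    intro p hp
    rw [div_le_iff₀ (hτpos p hp)]
    have h := hτlb p hp
    rw [div_le_iff₀ hem] at h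
    linarith
  have hτinv0 : ∀ p ∈ s, 0 ≤ 1 / tauk p := fun p hp => (div_pos one_pos (hτpos p hp)).le
  -- Lipschitz of 1/tauk
  have hCinv : LipOn (((k : ℝ) + 2) / ((1 / em) * (1 / em))) (fun p => 1 / tauk p) s :=
    (tauk_lipOn s).inv (by positivity) (div_pos one_pos hem) hτlb
  set Cinv : ℝ := ((k : ℝ) + 2) / ((1 / em) * (1 / em)) with hCinv_def
  have hCinv0 : 0 ≤ Cinv := by rw [hCinv_def, hem_def]; positivity
  -- Lipschitz of Qmap
  have hQ : ∀ i, LipOn (Cinv + em) (fun p => Qmap F p i) s := by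
    intro i a ha b hb
    have hτa := hτpos a ha
    have hτb := hτpos b hb
    simp only [Qmap, if_neg hτa.ne', if_neg hτb.ne']
    have step1 : |mcf (fun z => F z i) (1 / tauk a) a.2 - mcf (fun z => F z i) (1 / tauk b) a.2|
        ≤ |1 / tauk a - 1 / tauk b| :=
      mcf_lip_L (hB i) (hτinv0 a ha) (hτinv0 b hb) a.2
    have step2 : |mcf (fun z => F z i) (1 / tauk b) a.2 - mcf (fun z => F z i) (1 / tauk b) b.2|
        ≤ (1 / tauk b) * dist a.2 b.2 :=
      mcf_lip_y (hB i) (hτinv0 b hb) a.2 b.2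
    have step3 := hCinv a ha b hb
    have step4 : (1 / tauk b) * dist a.2 b.2 ≤ em * dist a b := by
      have h1 := hτub b hb
      have h2 := dist_snd_le' a b
      have h3 := hτinv0 b hb
      nlinarith [dist_nonneg (x := a.2) (y := b.2), dist_nonneg (x := a) (y := b)]
    calc |mcf (fun z => F z i) (1 / tauk a) a.2 - mcf (fun z => F z i) (1 / tauk b) b.2|
        ≤ |mcf (fun z => F z i) (1 / tauk a) a.2 - mcf (fun z => F z i) (1 / tauk b) a.2| +
          |mcf (fun z => F z i) (1 / tauk b) a.2 - mcf (fun z => F z i) (1 / tauk b) b.2| := by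
          have := abs_sub_le (mcf (fun z => F z i) (1 / tauk a) a.2)
            (mcf (fun z => F z i) (1 / tauk b) a.2) (mcf (fun z => F z i) (1 / tauk b) b.2)
          linarith
      _ ≤ Cinv * dist a b + em * dist a b := by
          refine add_le_add (step1.trans step3) (step2.trans step4)
      _ = (Cinv + em) * dist a b := by ring
  have hQb : ∀ (i : Fin (2 * n + 1)), ∀ p ∈ s, |Qmap F p i| ≤ B := by
    intro i p hp
    simp only [Qmap, if_neg (hτpos p hp).ne']
    exact abs_mcf_le (hB i) (hτinv0 p hp) p.2
  -- Lipschitz of the inner linear expression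
  have h_t : LipOn 1 (fun p : I × (Fin k → I) => (p.1 : ℝ)) s := by
    intro a _ b _
    rw [← Real.dist_eq]
    simpa using dist_fst_le' a b
  have h_1t : LipOn 1 (fun p : I × (Fin k → I) => 1 - (p.1 : ℝ)) s := by
    have := ((lipOn_const (α := I × (Fin k → I)) 1 s).sub h_t)
    simpa using this
  have htb : ∀ p ∈ s, |(p.1 : ℝ)| ≤ 1 := by
    intro p _
    rw [abs_le]; exact ⟨by linarith [p.1.2.1], p.1.2.2⟩
  have h1tb : ∀ p ∈ s, |1 - (p.1 : ℝ)| ≤ 1 := by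
    intro p _
    rw [abs_le]; constructor
    · linarith [p.1.2.2]
    · linarith [p.1.2.1]
  have hA1 : (0:ℝ) ≤ (0 + (1 * (Cinv + em) + B * 1)) + (1 * 0 + Bx * 1) := by nlinarith
  have hA2 : (0:ℝ) ≤ em * ((0 + (1 * (Cinv + em) + B * 1)) + (1 * 0 + Bx * 1)) :=
    mul_nonneg hem.le hA1
  have hA3 : (0:ℝ) ≤ (Bq + B + Bx) * Cinv := mul_nonneg (by linarith) hCinv0
  refine ⟨em * ((0 + (1 * (Cinv + em) + B * 1)) + (1 * 0 + Bx * 1)) +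
      (Bq + B + Bx) * Cinv, by linarith, fun i => ?_⟩
  -- inner = q i - (1-t) * Q - t * xb i
  have hinner : LipOn ((0 + (1 * (Cinv + em) + B * 1)) + (1 * 0 + Bx * 1))
      (fun p => (q i : ℝ) - (1 - (p.1 : ℝ)) * Qmap F p i - (p.1 : ℝ) * xb i) s := by
    have t1 : LipOn (0 + (1 * (Cinv + em) + B * 1))
        (fun p => (q i : ℝ) - (1 - (p.1 : ℝ)) * Qmap F p i) s :=
      (lipOn_const _ s).sub (h_1t.mul (hQ i) h1tb (fun p hp => hQb i p hp))
    have t2 : LipOn (1 * 0 + Bx * 1) (fun p : I × (Fin k → I) => (p.1 : ℝ) * xb i) s := by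
      refine h_t.mul (lipOn_const _ s) htb (fun p _ => hBx i)
    exact t1.sub t2
  have hinnerb : ∀ p ∈ s, |(q i : ℝ) - (1 - (p.1 : ℝ)) * Qmap F p i - (p.1 : ℝ) * xb i|
      ≤ Bq + B + Bx := by
    intro p hp
    have h1 := hBq i
    have h2 : |(1 - (p.1 : ℝ)) * Qmap F p i| ≤ B := by
      rw [abs_mul]
      have := hQb i p hp
      have h3 := h1tb p hp
      nlinarith [abs_nonneg (Qmap F p i), abs_nonneg (1 - (p.1 : ℝ))]
    have h3 : |(p.1 : ℝ) * xb i| ≤ Bx := by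
      rw [abs_mul]
      have := hBx i
      have h4 := htb p hp
      nlinarith [abs_nonneg (xb i), abs_nonneg ((p.1 : ℝ))]
    calc |(q i : ℝ) - (1 - (p.1 : ℝ)) * Qmap F p i - (p.1 : ℝ) * xb i|
        ≤ |(q i : ℝ) - (1 - (p.1 : ℝ)) * Qmap F p i| + |(p.1 : ℝ) * xb i| := abs_sub _ _
      _ ≤ (|(q i : ℝ)| + |(1 - (p.1 : ℝ)) * Qmap F p i|) + Bx := by
          have := abs_sub (q i : ℝ) ((1 - (p.1 : ℝ)) * Qmap F p i)
          linarith
      _ ≤ Bq + B + Bx := by linarith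
  have hτinvb : ∀ p ∈ s, |1 / tauk p| ≤ em := by
    intro p hp
    rw [abs_of_nonneg (hτinv0 p hp)]
    exact hτub p hp
  have := hCinv.mul hinner hτinvb hinnerb
  -- Psimap = (1/tauk) * inner, constant: em * C_inner + (Bq+B+Bx) * Cinv
  exact this.mono (le_refl _)

/-- The pi volume on `ι → ℝ` does not depend on the `Fintype` instance. -/
theorem volume_pi_fintype_indep {ι : Type*} (inst1 inst2 : Fintype ι) (s : Set (ι → ℝ)) :
    @MeasureTheory.volume _
        (@MeasureTheory.MeasureSpace.pi ι inst1 (fun _ => ℝ) (fun _ => Real.measureSpace)) s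
      = @MeasureTheory.volume _
        (@MeasureTheory.MeasureSpace.pi ι inst2 (fun _ => ℝ) (fun _ => Real.measureSpace)) s := by
  cases Subsingleton.elim inst1 inst2
  rfl

/-- Each bad set is Lebesgue-null. -/
theorem badSet_null (hk : k < n) (hFc : Continuous F) (z : BadIdx n) :
    MeasureTheory.volume (BadSet F xb z) = 0 := by
  classical
  obtain ⟨⟨S, hS⟩, q, m⟩ := z
  obtain ⟨C, hC0, hC⟩ := psimap_lipOn F xb hFc q m
  set Φ : I × (Fin k → I) → ({i // i ∈ S} → ℝ) :=
    fun p i => Psimap F xb q p i.1 with hΦ_def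
  have hΦlip : LipschitzOnWith C.toNNReal Φ (Dset k m) := by
    apply LipschitzOnWith.of_dist_le'
    intro a ha b hb
    rw [dist_pi_le_iff (by positivity)]
    intro i
    rw [Real.dist_eq]
    exact hC i.1 a ha b hb
  -- Hausdorff dimension bound
  have hiso : Isometry (fun p : I × (Fin k → I) => ((p.1 : ℝ), fun i => (p.2 i : ℝ))) := by
    apply Isometry.of_dist_eq
    intro a b
    have hsnd : dist (fun i => ((a.2 i : ℝ))) (fun i => ((b.2 i : ℝ))) = dist a.2 b.2 := by
      apply le_antisymm
      · apply (dist_pi_le_iff dist_nonneg).mpr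
        intro i
        exact dist_le_pi_dist a.2 b.2 i
      · apply (dist_pi_le_iff dist_nonneg).mpr
        intro i
        exact dist_le_pi_dist (fun j => ((a.2 j : ℝ))) (fun j => ((b.2 j : ℝ))) i
    rw [Prod.dist_eq, Prod.dist_eq, hsnd]
    rfl
  have hdim : dimH (Φ '' (Dset k m)) ≤ ((k + 1 : ℕ) : ℝ≥0∞) := by
    refine le_trans (hΦlip.dimH_image_le) ?_
    rw [← hiso.dimH_image (Dset k m)]
    refine le_trans (dimH_mono (Set.subset_univ _)) ?_
    rw [Real.dimH_univ_eq_finrank (ℝ × (Fin k → ℝ))]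
    have : Module.finrank ℝ (ℝ × (Fin k → ℝ)) = k + 1 := by
      rw [Module.finrank_prod, Module.finrank_self, Module.finrank_fintype_fun_eq_card]
      simp [Fintype.card_fin, add_comm]
    rw [this]
  have hlt : dimH (Φ '' (Dset k m)) < (((n + 1 : ℕ) : NNReal) : ℝ≥0∞) := by
    refine lt_of_le_of_lt hdim ?_
    have h1 : (((n + 1 : ℕ) : NNReal) : ℝ≥0∞) = ((n + 1 : ℕ) : ℝ≥0∞) := by
      simp
    rw [h1]
    exact Nat.cast_lt.mpr (by omega)
  have hnull0 : MeasureTheory.volume (Φ '' (Dset k m)) = 0 := by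
    have h := hausdorffMeasure_of_dimH_lt hlt
    have hcard : (Fintype.card {i // i ∈ S}) = n + 1 := by
      rw [Fintype.card_of_subtype S (fun x => Iff.rfl)]; exact hS
    have h2 : ((((n + 1 : ℕ) : NNReal)) : ℝ) = ((Fintype.card {i // i ∈ S} : ℕ) : ℝ) := by
      rw [hcard]; simp
    rw [h2] at h
    rwa [MeasureTheory.hausdorffMeasure_pi_real] at h
  have hnull : ∀ (inst : Fintype {i // i ∈ S}),
      @MeasureTheory.volume _
        (@MeasureTheory.MeasureSpace.pi _ inst (fun _ => ℝ) (fun _ => Real.measureSpace))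
        (Φ '' (Dset k m)) = 0 := by
    intro inst
    rw [volume_pi_fintype_indep inst (Finset.Subtype.fintype S)]
    exact hnull0
  -- Transfer to the full space by Fubini
  set e := MeasurableEquiv.piEquivPiSubtypeProd (fun _ : Fin (2 * n + 1) => ℝ) (· ∈ S) with he_def
  have hmp := MeasureTheory.volume_preserving_piEquivPiSubtypeProd
    (fun _ : Fin (2 * n + 1) => ℝ) (· ∈ S)
  have hsub : BadSet F xb ⟨⟨S, hS⟩, q, m⟩ ⊆
      e ⁻¹' ((Φ '' (Dset k m)) ×ˢ Set.univ) := by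
    intro a ha
    simp only [Set.mem_preimage, Set.mem_prod, Set.mem_univ, and_true]
    exact ha
  have h3 := MeasureTheory.measure_mono (μ := (MeasureTheory.volume : MeasureTheory.Measure (Fin (2 * n + 1) → ℝ))) hsub
  have h2 := hmp.measure_preimage_equiv ((Φ '' (Dset k m)) ×ˢ (Set.univ))
  rw [h2] at h3
  refine le_antisymm (le_trans h3 (le_of_eq ?_)) zero_le
  rw [MeasureTheory.Measure.volume_eq_prod, MeasureTheory.Measure.prod_prod]
  rw [hnull]
  exact zero_mul _

/-- One can choose a translation vector avoiding all bad sets. -/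
theorem exists_good_a (hk : k < n) (hFc : Continuous F) :
    ∃ a : Fin (2 * n + 1) → ℝ, ∀ z : BadIdx n, a ∉ BadSet F xb z := by
  have hnull : MeasureTheory.volume (⋃ z : BadIdx n, BadSet F xb z) = 0 :=
    MeasureTheory.measure_iUnion_null fun z => badSet_null F xb hk hFc z
  by_contra h
  push_neg at h
  have huniv : (Set.univ : Set (Fin (2 * n + 1) → ℝ)) ⊆ ⋃ z : BadIdx n, BadSet F xb z := by
    intro a _
    obtain ⟨z, hz⟩ := h a
    exact Set.mem_iUnion.mpr ⟨z, hz⟩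
  have : MeasureTheory.volume (Set.univ : Set (Fin (2 * n + 1) → ℝ)) = 0 :=
    le_antisymm (hnull ▸ MeasureTheory.measure_mono huniv) zero_le
  exact (isOpen_univ.measure_ne_zero MeasureTheory.volume Set.univ_nonempty) this

end NullSet

section Membership

variable {n k : ℕ} (F : (Fin k → I) → Fin (2 * n + 1) → ℝ) (xb : Fin (2 * n + 1) → ℝ)

theorem Kmap_mem (hk : k < n) (hFm : ∀ y, F y ∈ nobeling n) (hxm : xb ∈ nobeling n)
    (hbd : ∀ y, phik y = 0 → F y = xb) {a : Fin (2 * n + 1) → ℝ}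
    (ha : ∀ z : BadIdx n, a ∉ BadSet F xb z) (p : I × (Fin k → I)) :
    Kmap F xb a p ∈ nobeling n := by
  classical
  rcases eq_or_lt_of_le (tauk_nonneg p) with h0 | hpos
  · -- boundary case: tauk p = 0
    have h0 : tauk p = 0 := h0.symm
    have hQ : ∀ i, Qmap F p i = F p.2 i := fun i => if_pos h0
    rcases tauk_eq_zero_cases h0 with ht | ht | ht
    · have : Kmap F xb a p = F p.2 := by
        funext i
        rw [Kmap, hQ i, h0, ht]
        norm_num
      rw [this]; exact hFm p.2
    · have : Kmap F xb a p = xb := by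
        funext i
        rw [Kmap, hQ i, h0, ht]
        norm_num
      rw [this]; exact hxm
    · have hFxb : F p.2 = xb := hbd p.2 ht
      have : Kmap F xb a p = xb := by
        funext i
        rw [Kmap, hQ i, hFxb, h0]
        ring
      rw [this]; exact hxm
  · -- interior case: tauk p > 0; use genericity of a
    by_contra hnot
    rw [nobeling, Set.mem_setOf_eq, not_le] at hnot
    set R := {i | ∃ q : ℚ, Kmap F xb a p i = (q : ℝ)} with hR_def
    have hfin : R.Finite := Set.toFinite R
    have hcard : n + 1 ≤ hfin.toFinset.card := by
      rw [← Set.ncard_eq_toFinset_card R hfin]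
      omega
    obtain ⟨S, hSsub, hScard⟩ := Finset.exists_subset_card_eq hcard
    set q : Fin (2 * n + 1) → ℚ :=
      fun i => if h : ∃ qq : ℚ, Kmap F xb a p i = (qq : ℝ) then h.choose else 0 with hq_def
    have hqS : ∀ i ∈ S, Kmap F xb a p i = (q i : ℝ) := by
      intro i hi
      have hiR : i ∈ R := by
        have := hSsub hi
        rwa [Set.Finite.mem_toFinset] at this
      obtain ⟨qq, hqq⟩ := hiR
      simp only [hq_def]
      rw [dif_pos ⟨qq, hqq⟩]
      exact (⟨qq, hqq⟩ : ∃ qq : ℚ, Kmap F xb a p i = (qq : ℝ)).choose_spec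
    set m : ℕ := ⌈1 / tauk p⌉₊ with hm_def
    have hpD : p ∈ Dset k m := by
      have h1 : 1 / tauk p ≤ (m : ℝ) + 1 := le_trans (Nat.le_ceil _) (by linarith)
      show 1 / ((m : ℝ) + 1) ≤ tauk p
      rw [div_le_iff₀ (by positivity)]
      rw [div_le_iff₀ hpos] at h1
      linarith
    have hmem : a ∈ BadSet F xb ⟨⟨S, hScard⟩, q, m⟩ := by
      refine ⟨p, hpD, ?_⟩
      funext i
      show Psimap F xb q p i.1 = a i.1
      have hKi := hqS i.1 i.2
      simp only [Kmap] at hKi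
      have hτne : tauk p ≠ 0 := hpos.ne'
      simp only [Psimap]
      field_simp
      linarith
    exact ha ⟨⟨S, hScard⟩, q, m⟩ hmem

end Membership

section Continuity

variable {n k : ℕ} (F : (Fin k → I) → Fin (2 * n + 1) → ℝ) (xb : Fin (2 * n + 1) → ℝ)

theorem tauk_continuous : Continuous (tauk : I × (Fin k → I) → ℝ) := by
  apply Continuous.mul
  · apply Continuous.mul
    · exact continuous_subtype_val.comp continuous_fst
    · exact continuous_const.sub (continuous_subtype_val.comp continuous_fst)
  · apply continuous_finset_prod
    intro i _
    exact ((continuous_subtype_val.comp ((continuous_apply i).comp continuous_snd)).mul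
      (continuous_const.sub
        (continuous_subtype_val.comp ((continuous_apply i).comp continuous_snd))))

theorem Qmap_continuous (hFc : Continuous F) (i : Fin (2 * n + 1)) :
    Continuous (fun p => Qmap F p i) := by
  classical
  set g : (Fin k → I) → ℝ := fun z => F z i with hg_def
  have hgc : Continuous g := (continuous_apply i).comp hFc
  obtain ⟨B, hBmem⟩ := IsCompact.exists_bound_of_continuousOn isCompact_univ hFc.continuousOn
  have hB : ∀ z, |g z| ≤ B := by
    intro z
    have h1 : ‖F z i‖ ≤ ‖F z‖ := norm_le_pi_norm (F z) i
    have h2 := hBmem z (Set.mem_univ z)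
    rw [Real.norm_eq_abs] at h1
    exact h1.trans h2
  rw [continuous_iff_continuousAt]
  intro p₀
  rcases eq_or_lt_of_le (tauk_nonneg p₀) with h0 | hpos
  · -- continuity at a point where tauk vanishes
    have h0 : tauk p₀ = 0 := h0.symm
    rw [Metric.continuousAt_iff]
    intro ε hε
    obtain ⟨L₀, hL₀0, hL₀⟩ := mcf_approx hgc hB (show (0:ℝ) < ε/4 by linarith)
    -- continuity of g at p₀.2
    obtain ⟨δ₁, hδ₁, hδ₁impl⟩ := Metric.continuousAt_iff.mp
      (hgc.continuousAt : ContinuousAt g p₀.2) (ε/4) (by linarith)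
    -- continuity of tauk at p₀
    have h1L : (0:ℝ) < 1 / (L₀ + 1) := by positivity
    obtain ⟨δ₂, hδ₂, hδ₂impl⟩ := Metric.continuousAt_iff.mp
      ((tauk_continuous).continuousAt : ContinuousAt tauk p₀) (1 / (L₀ + 1)) h1L
    refine ⟨min δ₁ δ₂, lt_min hδ₁ hδ₂, ?_⟩
    intro p hp
    have hp1 : dist p p₀ < δ₁ := lt_of_lt_of_le hp (min_le_left _ _)
    have hp2 : dist p p₀ < δ₂ := lt_of_lt_of_le hp (min_le_right _ _)
    have hpy : dist p.2 p₀.2 < δ₁ := lt_of_le_of_lt (dist_snd_le' p p₀) hp1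
    have hgcl : |g p.2 - g p₀.2| < ε/4 := by
      have := hδ₁impl hpy
      rwa [Real.dist_eq] at this
    have hτcl : tauk p < 1 / (L₀ + 1) := by
      have := hδ₂impl hp2
      rw [Real.dist_eq, h0] at this
      have h2 := abs_lt.mp this
      linarith [h2.1, h2.2]
    have hQ₀ : Qmap F p₀ i = g p₀.2 := if_pos h0
    rw [Real.dist_eq, hQ₀]
    by_cases hz : tauk p = 0
    · rw [show Qmap F p i = g p.2 from if_pos hz]
      linarith
    · rw [show Qmap F p i = mcf g (1 / tauk p) p.2 from if_neg hz]
      have hτp : 0 < tauk p := lt_of_le_of_ne (tauk_nonneg p) (Ne.symm hz)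
      have hLbig : L₀ ≤ 1 / tauk p := by
        have h2 : L₀ + 1 < 1 / tauk p := by
          rw [lt_div_iff₀ hτp]
          rw [lt_div_iff₀ (by positivity : (0:ℝ) < L₀ + 1)] at hτcl
          linarith
        linarith
      have happrox := hL₀ (1 / tauk p) hLbig p.2
      calc |mcf g (1 / tauk p) p.2 - g p₀.2|
          ≤ |mcf g (1 / tauk p) p.2 - g p.2| + |g p.2 - g p₀.2| := by
            have := abs_sub_le (mcf g (1 / tauk p) p.2) (g p.2) (g p₀.2)
            linarith
        _ < ε/4 + ε/4 := by
            have := happrox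
            linarith
        _ < ε := by linarith
  · -- continuity at a point where tauk > 0
    have hopen : {p : I × (Fin k → I) | 0 < tauk p} ∈ nhds p₀ :=
      (isOpen_lt continuous_const tauk_continuous).mem_nhds hpos
    have heq : (fun p => Qmap F p i) =ᶠ[nhds p₀] fun p => mcf g (1 / tauk p) p.2 := by
      filter_upwards [hopen] with p hp
      exact if_neg (ne_of_gt hp)
    rw [continuousAt_congr heq]
    -- continuity of the smooth formula at p₀
    rw [Metric.continuousAt_iff]
    intro ε hε
    set L₀ : ℝ := 1 / tauk p₀ with hL₀_def
    have hL₀0 : 0 ≤ L₀ := by positivity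
    have hinvc : ContinuousAt (fun p => 1 / tauk p) p₀ :=
      (continuousAt_const.div tauk_continuous.continuousAt hpos.ne')
    obtain ⟨δ₂, hδ₂, hδ₂impl⟩ := Metric.continuousAt_iff.mp hinvc (ε/4) (by linarith)
    set δ₃ : ℝ := ε / (4 * (L₀ + 1)) with hδ₃_def
    have hδ₃ : 0 < δ₃ := by positivity
    refine ⟨min δ₂ δ₃, lt_min hδ₂ hδ₃, ?_⟩
    intro p hp
    have hp2 : dist p p₀ < δ₂ := lt_of_lt_of_le hp (min_le_left _ _)
    have hp3 : dist p p₀ < δ₃ := lt_of_lt_of_le hp (min_le_right _ _)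
    have hinvcl : |1 / tauk p - 1 / tauk p₀| < ε/4 := by
      have := hδ₂impl hp2
      rwa [Real.dist_eq] at this
    have hLp0 : 0 ≤ 1 / tauk p := by
      have := tauk_nonneg p
      positivity
    have step1 : |mcf g (1 / tauk p) p.2 - mcf g L₀ p.2| ≤ |1 / tauk p - L₀| :=
      mcf_lip_L hB hLp0 hL₀0 p.2
    have step2 : |mcf g L₀ p.2 - mcf g L₀ p₀.2| ≤ L₀ * dist p.2 p₀.2 :=
      mcf_lip_y hB hL₀0 p.2 p₀.2
    have step3 : L₀ * dist p.2 p₀.2 < ε/2 := by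
      have h1 : dist p.2 p₀.2 ≤ dist p p₀ := dist_snd_le' p p₀
      have h2 : dist p.2 p₀.2 < δ₃ := lt_of_le_of_lt h1 hp3
      have h3 : L₀ * dist p.2 p₀.2 ≤ L₀ * δ₃ := by
        apply mul_le_mul_of_nonneg_left h2.le hL₀0
      have h4 : L₀ * δ₃ < ε/2 := by
        rw [hδ₃_def, mul_div_assoc', div_lt_div_iff₀ (by positivity) (by norm_num : (0:ℝ) < 2)]
        nlinarith
      linarith
    rw [Real.dist_eq]
    calc |mcf g (1 / tauk p) p.2 - mcf g (1 / tauk p₀) p₀.2|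
        ≤ |mcf g (1 / tauk p) p.2 - mcf g L₀ p.2| + |mcf g L₀ p.2 - mcf g L₀ p₀.2| := by
          have := abs_sub_le (mcf g (1 / tauk p) p.2) (mcf g L₀ p.2) (mcf g L₀ p₀.2)
          simp only [hL₀_def] at *
          linarith
      _ < ε/4 + ε/2 := by
          have h6 : |mcf g (1 / tauk p) p.2 - mcf g L₀ p.2| < ε/4 := lt_of_le_of_lt step1 hinvcl
          linarith
      _ < ε := by linarith

theorem Kmap_continuous (hFc : Continuous F) (a : Fin (2 * n + 1) → ℝ) :
    Continuous (fun p => Kmap F xb a p) := by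
  apply continuous_pi
  intro i
  unfold Kmap
  have h1 : Continuous (fun p : I × (Fin k → I) => (p.1 : ℝ)) :=
    continuous_subtype_val.comp continuous_fst
  exact (((continuous_const.sub h1).mul (Qmap_continuous F hFc i)).add
    (h1.mul continuous_const)).add (tauk_continuous.mul continuous_const)

end Continuity

/-! ### The main construction: every generalized loop in the Nöbeling space is nullhomotopic -/

open scoped Topology.Homotopy in
theorem genLoop_homotopic_const {n k : ℕ} (hk : k < n) (x : nobeling n)
    (f : GenLoop (Fin k) (nobeling n) x) : GenLoop.Homotopic f GenLoop.const := by
  classical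
  set F : (Fin k → I) → Fin (2 * n + 1) → ℝ := fun y => ((f y : nobeling n) : Fin (2 * n + 1) → ℝ)
    with hF_def
  set xb : Fin (2 * n + 1) → ℝ := (x : Fin (2 * n + 1) → ℝ) with hxb_def
  have hFc : Continuous F := continuous_subtype_val.comp (map_continuous f.1)
  have hFm : ∀ y, F y ∈ nobeling n := fun y => (f y : nobeling n).2
  have hxm : xb ∈ nobeling n := x.2
  have hbd : ∀ y, phik y = 0 → F y = xb := by
    intro y hy
    obtain ⟨i, hi⟩ := (phik_eq_zero_iff y).mp hy
    have hbdy : y ∈ Cube.boundary (Fin k) := ⟨i, hi⟩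
    exact congrArg Subtype.val (f.2 y hbdy)
  obtain ⟨a, ha⟩ := exists_good_a F xb hk hFc
  have hmem : ∀ p : I × (Fin k → I), Kmap F xb a p ∈ nobeling n :=
    Kmap_mem F xb hk hFm hxm hbd ha
  refine ⟨⟨⟨⟨fun p => ⟨Kmap F xb a p, hmem p⟩, ?_⟩, ?_, ?_⟩, ?_⟩⟩
  · exact (Kmap_continuous F xb hFc a).subtype_mk _
  · -- at time 0 we recover f
    intro y
    apply Subtype.ext
    show Kmap F xb a (0, y) = F y
    funext i
    have hτ : tauk ((0 : I), y) = 0 := by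
      rw [tauk]
      norm_num
    rw [Kmap, show Qmap F ((0 : I), y) i = F ((0 : I), y).2 i from if_pos hτ, hτ]
    norm_num
  · -- at time 1 we get the constant loop
    intro y
    apply Subtype.ext
    show Kmap F xb a (1, y) = xb
    funext i
    have hτ : tauk ((1 : I), y) = 0 := by
      rw [tauk]
      norm_num
    rw [Kmap, show Qmap F ((1 : I), y) i = F ((1 : I), y).2 i from if_pos hτ, hτ]
    norm_num
  · -- the homotopy is relative to the boundary
    intro t y hy
    have hφ : phik y = 0 := by
      obtain ⟨i, hi⟩ := hy
      rw [phik_eq_zero_iff]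
      exact ⟨i, hi⟩
    have hτ : tauk (t, y) = 0 := by
      rw [tauk]
      show (t : ℝ) * (1 - (t : ℝ)) * phik y = 0
      rw [hφ, mul_zero]
    have hFxb : F y = xb := hbd y hφ
    apply Subtype.ext
    show Kmap F xb a (t, y) = F y
    funext i
    rw [Kmap, show Qmap F (t, y) i = F (t, y).2 i from if_pos hτ, hτ]
    show (1 - (t : ℝ)) * F y i + (t : ℝ) * xb i + 0 * a i = F y i
    rw [hFxb]
    ring

end

/-- The `n`-dimensional Nöbeling space has vanishing homotopy groups in all
dimensions less than `n`. -/
theorem nobeling_homotopy_groups_trivial (n : ℕ) (k : ℕ) (hk : k < n)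
    (x : nobeling n) :
    Subsingleton (HomotopyGroup (Fin k) (nobeling n) x) := by
  have key : ∀ f : GenLoop (Fin k) (nobeling n) x, GenLoop.Homotopic f GenLoop.const :=
    genLoop_homotopic_const hk x
  exact ⟨fun A B => Quotient.inductionOn₂ A B fun f g =>
    Quotient.sound ((key f).trans (key g).symm)⟩

end NobelingPaper
end

section
/- Every compact subset of an $\mathcal{N}_n$-space is a $Z$-set; consequently (combined with locality of the $Z$-set property) every closed, locally compact subset of an $\mathcal{N}_n$-space is a $Z$-set. -/
open Set ContinuousMap
open scoped ENNReal

namespace NobelingPaper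

/-- Covering dimension at most `n`: every open cover admits an open refinement in
which every point lies in at most `n + 1` elements. -/
def CovDimLE (X : Type) [TopologicalSpace X] (n : ℕ) : Prop :=
  ∀ (ι : Type) (U : ι → Set X), (∀ i, IsOpen (U i)) → (⋃ i, U i) = univ →
    ∃ (κ : Type) (W : κ → Set X), (∀ j, IsOpen (W j)) ∧ (⋃ j, W j) = univ ∧
      (∀ j, ∃ i, W j ⊆ U i) ∧
      ∀ s : Finset κ, (∃ x, ∀ j ∈ s, x ∈ W j) → s.card ≤ n + 1

/-- Covering dimension exactly `n`. -/
def CovDimEq (X : Type) [TopologicalSpace X] (n : ℕ) : Prop :=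
  CovDimLE X n ∧ ∀ m, CovDimLE X m → n ≤ m

/-- `Y` is an absolute neighborhood extensor in dimension `n`: every map into `Y`
from a closed subset of an at most `n`-dimensional metric space extends over an open
neighborhood of that subset. -/
def IsANE (n : ℕ) (Y : Type) [MetricSpace Y] : Prop :=
  ∀ (X : Type) [MetricSpace X], CovDimLE X n → ∀ (A : Set X), IsClosed A →
    ∀ f : C(A, Y), ∃ U : Set X, ∃ (_ : IsOpen U) (hAU : A ⊆ U),
      ∃ g : C(U, Y), ∀ a : A, g (Set.inclusion hAU a) = f a

/-- `g` is `U`-close to `f`. -/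
def UClose {Z X ι : Type} (U : ι → Set X) (f g : Z → X) : Prop :=
  ∀ z, ∃ i, f z ∈ U i ∧ g z ∈ U i

/-- A `Z`-set: a closed subset `A` such that the identity is approximable, with
respect to every open cover, by maps into the complement of `A`. -/
def IsZSet (X : Type) [TopologicalSpace X] (A : Set X) : Prop :=
  IsClosed A ∧ ∀ (ι : Type) (U : ι → Set X), (∀ i, IsOpen (U i)) → (⋃ i, U i) = univ →
    ∃ f : C(X, X), UClose U id f ∧ ∀ x, f x ∉ A

/-- `X` is strongly universal in dimension `n`: every map from an at most
`n`-dimensional Polish space into `X` is approximable by closed embeddings. -/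
def StronglyUniversal (n : ℕ) (X : Type) [MetricSpace X] : Prop :=
  ∀ (P : Type) [MetricSpace P], PolishSpace P → CovDimLE P n →
    ∀ f : C(P, X), ∀ (ι : Type) (U : ι → Set X), (∀ i, IsOpen (U i)) → (⋃ i, U i) = univ →
      ∃ g : C(P, X), UClose U f g ∧ Topology.IsClosedEmbedding g

/-- An `N_n`-space: an `n`-dimensional Polish `ANE(n)`-space that is strongly
universal in dimension `n`. -/
def IsNnSpace (n : ℕ) (X : Type) [MetricSpace X] : Prop :=
  PolishSpace X ∧ CovDimEq X n ∧ IsANE n X ∧ StronglyUniversal n X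

lemma covDimLE_prod_nat (X : Type) [TopologicalSpace X] (n : ℕ) (h : CovDimLE X n) :
    CovDimLE (X × ℕ) n := by
  intro ι U hUo hUc
  have key : ∀ m : ℕ, ∃ (κ : Type) (W : κ → Set X), (∀ j, IsOpen (W j)) ∧
      (⋃ j, W j) = univ ∧ (∀ j, ∃ i, W j ⊆ {x | (x, m) ∈ U i}) ∧
      ∀ s : Finset κ, (∃ x, ∀ j ∈ s, x ∈ W j) → s.card ≤ n + 1 := by
    intro m
    refine h ι (fun i => {x | (x, m) ∈ U i}) (fun i => ?_) ?_
    · exact (hUo i).preimage (continuous_id.prodMk continuous_const)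
    · apply eq_univ_of_forall
      intro x
      have hx : ((x, m) : X × ℕ) ∈ ⋃ i, U i := by rw [hUc]; trivial
      obtain ⟨i, hi⟩ := mem_iUnion.1 hx
      exact mem_iUnion.2 ⟨i, hi⟩
  choose κ W hWo hWc hWr hWcard using key
  refine ⟨(Σ m : ℕ, κ m), fun p => (W p.1 p.2) ×ˢ ({p.1} : Set ℕ), ?_, ?_, ?_, ?_⟩
  · intro p
    exact (hWo p.1 p.2).prod (isOpen_discrete _)
  · apply eq_univ_of_forall
    rintro ⟨x, m⟩
    have hx : x ∈ ⋃ j, W m j := by rw [hWc m]; trivial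
    obtain ⟨j, hj⟩ := mem_iUnion.1 hx
    exact mem_iUnion.2 ⟨⟨m, j⟩, hj, rfl⟩
  · rintro ⟨m, j⟩
    obtain ⟨i, hi⟩ := hWr m j
    refine ⟨i, ?_⟩
    rintro ⟨x, m'⟩ ⟨h1, h2⟩
    rcases h2 with rfl
    exact hi h1
  · classical
    rintro s ⟨⟨x, m⟩, hx⟩
    rcases s.eq_empty_or_nonempty with rfl | ⟨p₀, hp₀⟩
    · simp
    have hfst : ∀ p ∈ s, p.1 = m := by
      intro p hp
      have h2 := (hx p hp).2
      simpa using h2.symm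
    have hj₀ : κ m := cast (congrArg κ (hfst p₀ hp₀)) p₀.2
    set F : (Σ m', κ m') → κ m := fun p => if hp : p.1 = m then cast (congrArg κ hp) p.2 else hj₀ with hF
    have hinj : Set.InjOn F s := by
      rintro ⟨pm, pj⟩ hp ⟨qm, qj⟩ hq hFpq
      have hpm := hfst _ hp
      have hqm := hfst _ hq
      dsimp at hpm hqm
      subst hpm; subst hqm
      simp only [hF, dif_pos rfl, cast_eq] at hFpq
      simp [hFpq]
    have hcard : (s.image F).card = s.card := Finset.card_image_of_injOn hinj
    rw [← hcard]
    refine hWcard m (s.image F) ⟨x, ?_⟩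
    intro j hj
    obtain ⟨p, hp, rfl⟩ := Finset.mem_image.1 hj
    have h1 := (hx p hp).1
    have hpm := hfst p hp
    obtain ⟨pm, pj⟩ := p
    dsimp at hpm
    subst hpm
    simpa [hF] using h1

lemma exists_closedEmbedding_avoiding (n : ℕ) (X : Type) [MetricSpace X]
    (hX : IsNnSpace n X) (K : Set X) (hK : IsCompact K)
    (ι : Type) (U : ι → Set X) (hU : ∀ i, IsOpen (U i)) (hUc : (⋃ i, U i) = univ) :
    ∃ f : X → X, Continuous f ∧ Topology.IsClosedEmbedding f ∧
      (∀ x, ∃ i, x ∈ U i ∧ f x ∈ U i) ∧ ∀ x, f x ∉ K := by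
  obtain ⟨hPol, hdim, hane, hsu⟩ := hX
  haveI := hPol
  have hdimP : CovDimLE (X × ℕ) n := covDimLE_prod_nat X n hdim.1
  obtain ⟨g, hgcl, hgemb⟩ :=
    hsu (X × ℕ) inferInstance hdimP ⟨Prod.fst, continuous_fst⟩ ι U hU hUc
  have hclosed : ∀ (x : ℕ → X) (M : Set ℕ),
      IsClosed ((fun m => ((x m, m) : X × ℕ)) '' M) := by
    intro x M
    rw [← isOpen_compl_iff, isOpen_iff_forall_mem_open]
    rintro ⟨y, m⟩ hy
    by_cases hmM : m ∈ M
    · have hyx : y ≠ x m := by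
        rintro rfl
        exact hy ⟨m, hmM, rfl⟩
      refine ⟨({x m}ᶜ : Set X) ×ˢ {m}, ?_, ?_, ?_⟩
      · rintro ⟨y', m'⟩ ⟨h1, h2⟩ ⟨m'', hm'', he⟩
        rcases h2 with rfl
        have he1 : x m'' = y' := congrArg Prod.fst he
        have he2 : m'' = m' := congrArg Prod.snd he
        subst he2
        exact h1 (by simp [← he1])
      · exact (isClosed_singleton.isOpen_compl).prod (isOpen_discrete _)
      · exact ⟨hyx, rfl⟩
    · refine ⟨(univ : Set X) ×ˢ {m}, ?_, ?_, ?_⟩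
      · rintro ⟨y', m'⟩ ⟨h1, h2⟩ ⟨m'', hm'', he⟩
        rcases h2 with rfl
        have he2 : m'' = m' := congrArg Prod.snd he
        subst he2
        exact hmM hm''
      · exact isOpen_univ.prod (isOpen_discrete _)
      · exact ⟨trivial, rfl⟩
  have hm : ∃ m : ℕ, ∀ x : X, g (x, m) ∉ K := by
    by_contra hcon
    push_neg at hcon
    choose x hx using hcon
    obtain ⟨p, hpK, φ, hφ, hconv⟩ := hK.tendsto_subseq (x := fun m => g (x m, m)) hx
    have hS1 : IsClosed (g '' ((fun m => ((x m, m) : X × ℕ)) '' univ)) :=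
      hgemb.isClosedMap _ (hclosed x univ)
    have hp1 : p ∈ g '' ((fun m => ((x m, m) : X × ℕ)) '' univ) := by
      refine hS1.mem_of_tendsto hconv (Filter.Eventually.of_forall fun j => ?_)
      exact ⟨(x (φ j), φ j), ⟨φ j, trivial, rfl⟩, rfl⟩
    obtain ⟨z, ⟨k, -, hzk⟩, hgz⟩ := hp1
    have hS2 : IsClosed (g '' ((fun m => ((x m, m) : X × ℕ)) '' {m | m ≠ k})) :=
      hgemb.isClosedMap _ (hclosed x _)
    have hp2 : p ∈ g '' ((fun m => ((x m, m) : X × ℕ)) '' {m | m ≠ k}) := by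
      refine hS2.mem_of_tendsto hconv ?_
      rw [Filter.eventually_atTop]
      refine ⟨k + 1, fun j hj => ?_⟩
      have hjk : φ j ≠ k := by
        have : j ≤ φ j := hφ.le_apply
        omega
      exact ⟨(x (φ j), φ j), ⟨φ j, hjk, rfl⟩, rfl⟩
    obtain ⟨z', ⟨k', hk'ne, hzk'⟩, hgz'⟩ := hp2
    have : z' = z := by
      apply hgemb.injective
      rw [hgz, hgz']
    rw [← hzk, ← hzk'] at this
    have : k' = k := congrArg Prod.snd this
    exact hk'ne this
  obtain ⟨m, hmK⟩ := hm
  have hemb0 : Topology.IsClosedEmbedding (fun x : X => ((x, m) : X × ℕ)) := by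
    refine Topology.IsClosedEmbedding.of_continuous_injective_isClosedMap
      (continuous_id.prodMk continuous_const) (fun a b hab => congrArg Prod.fst hab) ?_
    intro F hF
    have : (fun x : X => ((x, m) : X × ℕ)) '' F = F ×ˢ ({m} : Set ℕ) := by
      ext ⟨y, m'⟩
      constructor
      · rintro ⟨y', hy', he⟩
        have h1 : y' = y := congrArg Prod.fst he
        have h2 : m = m' := congrArg Prod.snd he
        subst h1; subst h2
        exact ⟨hy', rfl⟩
      · rintro ⟨h1, h2⟩
        rcases h2 with rfl
        exact ⟨y, h1, rfl⟩
    rw [this]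
    exact hF.prod isClosed_singleton
  refine ⟨fun x => g (x, m), g.continuous.comp (continuous_id.prodMk continuous_const),
    hgemb.comp hemb0, fun x => ?_, hmK⟩
  obtain ⟨i, h1, h2⟩ := hgcl (x, m)
  exact ⟨i, h1, h2⟩

lemma core (X : Type) [MetricSpace X] [CompleteSpace X] [Nonempty X]
    (hpart1 : ∀ C : Set X, IsCompact C → ∀ (ι : Type) (U : ι → Set X), (∀ i, IsOpen (U i)) →
      (⋃ i, U i) = univ → ∃ f : X → X, Continuous f ∧ Topology.IsClosedEmbedding f ∧
      (∀ x, ∃ i, x ∈ U i ∧ f x ∈ U i) ∧ ∀ x, f x ∉ C)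
    (K : ℕ → Set X) (hK : ∀ j, IsCompact (K j))
    (ι : Type) (U : ι → Set X) (hU : ∀ i, IsOpen (U i)) (hUc : (⋃ i, U i) = univ) :
    ∃ f : X → X, Continuous f ∧ (∀ x, ∃ i, x ∈ U i ∧ f x ∈ U i) ∧ ∀ j x, f x ∉ K j := by
  classical
  -- metric-form push
  have push : ∀ (C : Set X), IsCompact C → ∀ ε : X → ℝ, Continuous ε → (∀ x, 0 < ε x) →
      ∃ f : X → X, Continuous f ∧ Topology.IsClosedEmbedding f ∧
        (∀ x, dist (f x) x < ε x) ∧ ∀ x, f x ∉ C := by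
    intro C hC ε hεc hεp
    have hcov : (⋃ p : X × ℚ, (Metric.ball p.1 (p.2 : ℝ) ∩ {x | (3:ℝ) * p.2 < ε x})) = univ := by
      apply eq_univ_of_forall
      intro x
      obtain ⟨q, hq1, hq2⟩ := exists_rat_btwn (show ε x / 4 < ε x / 3 by linarith [hεp x])
      have hq0 : (0:ℝ) < q := lt_trans (by linarith [hεp x]) hq1
      refine mem_iUnion.2 ⟨(x, q), Metric.mem_ball_self hq0, ?_⟩
      show (3:ℝ) * q < ε x
      linarith
    obtain ⟨f, hfc, hfe, hfcl, hfC⟩ := hpart1 C hC (X × ℚ)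
      (fun p => Metric.ball p.1 (p.2 : ℝ) ∩ {x | (3:ℝ) * p.2 < ε x})
      (fun p => (Metric.isOpen_ball).inter (isOpen_lt continuous_const hεc)) hcov
    refine ⟨f, hfc, hfe, ?_, hfC⟩
    intro x
    obtain ⟨⟨y, q⟩, ⟨hx1, hx2⟩, ⟨hf1, -⟩⟩ := hfcl x
    have hq : (0:ℝ) < q := lt_of_le_of_lt dist_nonneg (Metric.mem_ball.1 hx1)
    have h1 : dist x y < q := Metric.mem_ball.1 hx1
    have h2 : dist (f x) y < q := Metric.mem_ball.1 hf1
    have h3 : (3:ℝ) * q < ε x := hx2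
    calc dist (f x) x ≤ dist (f x) y + dist x y := by
          rw [dist_comm x y]; exact dist_triangle _ _ _
      _ < q + q := by linarith
      _ < ε x := by linarith
  -- radius function g
  have hne : ∀ x : X, ∃ i, x ∈ U i := fun x => mem_iUnion.1 (by rw [hUc]; trivial)
  set S : X → Set ℝ := fun x => {r | r ≤ 1 ∧ ∃ i, Metric.ball x r ⊆ U i} with hSdef
  have hSr : ∀ x, ∃ r, 0 < r ∧ r ∈ S x := by
    intro x
    obtain ⟨i, hi⟩ := hne x
    obtain ⟨r, hr0, hr⟩ := Metric.isOpen_iff.1 (hU i) x hi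
    refine ⟨min r 1, lt_min hr0 one_pos, min_le_right _ _, i, ?_⟩
    exact (Metric.ball_subset_ball (min_le_left _ _)).trans hr
  have hSbdd : ∀ x, BddAbove (S x) := fun x => ⟨1, fun r hr => hr.1⟩
  have hSne : ∀ x, (S x).Nonempty := fun x => ⟨(hSr x).choose, (hSr x).choose_spec.2⟩
  set g : X → ℝ := fun x => sSup (S x) with hgdef
  have hgpos : ∀ x, 0 < g x := by
    intro x
    obtain ⟨r, hr0, hrS⟩ := hSr x
    exact lt_of_lt_of_le hr0 (le_csSup (hSbdd x) hrS)
  have hgle1 : ∀ x, g x ≤ 1 := fun x => csSup_le (hSne x) fun r hr => hr.1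
  have hglip : ∀ x y, g x ≤ g y + dist x y := by
    intro x y
    refine csSup_le (hSne x) fun r hr => ?_
    rcases le_or_gt r (dist x y) with h | h
    · linarith [(hgpos y).le]
    · have hrS : r - dist x y ∈ S y := by
        refine ⟨by linarith [dist_nonneg (x := x) (y := y), hr.1], hr.2.choose, ?_⟩
        refine (Metric.ball_subset_ball' ?_).trans hr.2.choose_spec
        rw [dist_comm]; linarith
      linarith [le_csSup (hSbdd y) hrS]
  have hgcont : Continuous g := by
    have : LipschitzWith 1 g := by
      refine LipschitzWith.of_dist_le_mul fun x y => ?_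
      rw [NNReal.coe_one, one_mul, Real.dist_eq, abs_sub_le_iff]
      constructor
      · linarith [hglip x y]
      · rw [dist_comm]; linarith [hglip y x]
    exact this.continuous
  have hgU : ∀ x y, dist y x < g x → ∃ i, x ∈ U i ∧ y ∈ U i := by
    intro x y h
    obtain ⟨r, hrS, hlt⟩ := exists_lt_of_lt_csSup (hSne x) h
    have hr0 : 0 < r := lt_of_le_of_lt dist_nonneg hlt
    obtain ⟨-, i, hball⟩ := hrS
    exact ⟨i, hball (Metric.mem_ball_self hr0), hball (Metric.mem_ball.2 hlt)⟩
  -- clearance functions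
  set c : ℕ → X → ℝ := fun j y => if (K j).Nonempty then Metric.infDist y (K j) else 1
    with hcdef
  have hccont : ∀ j, Continuous (c j) := by
    intro j
    by_cases h : (K j).Nonempty <;> simp only [hcdef, h, if_true, if_false]
    · exact Metric.continuous_infDist_pt _
    · exact continuous_const
  have hcnn : ∀ j y, 0 ≤ c j y := by
    intro j y
    by_cases h : (K j).Nonempty <;> simp only [hcdef, h, if_true, if_false]
    · exact Metric.infDist_nonneg
    · norm_num
  have hcmem : ∀ j y, c j y = 0 → y ∈ K j := by
    intro j y h
    by_cases hn : (K j).Nonempty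
    · simp only [hcdef, hn, if_true] at h
      by_contra hy
      have := ((hK j).isClosed.notMem_iff_infDist_pos hn).1 hy
      linarith
    · simp [hcdef, hn] at h
  -- minima
  set M : ℕ → X → ℝ := fun k => Nat.rec (fun _ => (1:ℝ)) (fun k' Mk y => min (Mk y) (c k' y)) k
    with hMdef
  have hMsucc : ∀ k y, M (k+1) y = min (M k y) (c k y) := fun k y => rfl
  have hMcont : ∀ k, Continuous (M k) := by
    intro k
    induction k with
    | zero => exact continuous_const
    | succ k ih => exact ih.min (hccont k)
  have hMnn : ∀ k y, 0 ≤ M k y := by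
    intro k
    induction k with
    | zero => intro y; norm_num [hMdef]
    | succ k ih => intro y; exact le_min (ih y) (hcnn k y)
  have hMle1 : ∀ k y, M k y ≤ 1 := by
    intro k
    induction k with
    | zero => intro y; norm_num [hMdef]
    | succ k ih => intro y; exact (min_le_left _ _).trans (ih y)
  have hMc : ∀ j k, j < k → ∀ y, M k y ≤ c j y := by
    intro j k
    induction k with
    | zero => omega
    | succ k ih =>
      intro hj y
      rcases Nat.lt_succ_iff_lt_or_eq.1 hj with hj | rfl
      · exact (min_le_left _ _).trans (ih hj y)
      · exact min_le_right _ _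
  have hM0 : ∀ k y, M k y = 0 → ∃ j, j < k ∧ c j y = 0 := by
    intro k
    induction k with
    | zero => intro y h; norm_num [hMdef] at h
    | succ k ih =>
      intro y h
      rw [hMsucc] at h
      rcases min_eq_iff.1 h with ⟨h1, -⟩ | ⟨h1, -⟩
      · obtain ⟨j, hj, hc⟩ := ih y h1
        exact ⟨j, by omega, hc⟩
      · exact ⟨k, by omega, h1⟩
  -- epsilon
  set q : ℕ → ℝ := fun k => (1/4 : ℝ)^k with hqdef
  have hqpos : ∀ k, 0 < q k := fun k => pow_pos (by norm_num) k
  have hqle : ∀ k, q k ≤ 1 := fun k => pow_le_one₀ (by norm_num) (by norm_num)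
  have hqsucc : ∀ k, q (k+1) = q k / 4 := by
    intro k; rw [hqdef]; ring
  set εd : ℕ → (X → X) → X → ℝ := fun k f y =>
    q (k+1) * min (min 1 (g y / 3)) (M k y + Metric.infDist y (Set.range f)) with hεdef
  have hεcont : ∀ k f, Continuous (εd k f) :=
    fun k f => continuous_const.mul (((continuous_const.min (hgcont.div_const 3)).min
      ((hMcont k).add (Metric.continuous_infDist_pt _))))
  have hεpos : ∀ k (f : X → X), Topology.IsClosedEmbedding f →
      (∀ j, j < k → ∀ x, f x ∉ K j) → ∀ y, 0 < εd k f y := by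
    intro k f hfe hfK y
    refine mul_pos (hqpos (k+1)) (lt_min (lt_min one_pos (by linarith [hgpos y])) ?_)
    rcases lt_or_eq_of_le (hMnn k y) with h | h
    · exact lt_of_lt_of_le h (le_add_of_nonneg_right Metric.infDist_nonneg)
    · obtain ⟨j, hj, hc⟩ := hM0 k y h.symm
      have hyK : y ∈ K j := hcmem j y hc
      have hynr : y ∉ Set.range f := by
        rintro ⟨x, rfl⟩
        exact hfK j hj x hyK
      have hpos : 0 < Metric.infDist y (Set.range f) :=
        (hfe.isClosed_range.notMem_iff_infDist_pos (Set.range_nonempty f)).1 hynr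
      rw [← h, zero_add]
      exact hpos

  -- one step of the construction
  have step : ∀ (k : ℕ) (f : X → X), Continuous f → Topology.IsClosedEmbedding f →
      (∀ j, j < k → ∀ x, f x ∉ K j) →
      ∃ f' : X → X, Continuous f' ∧ Topology.IsClosedEmbedding f' ∧
        (∀ j, j < k + 1 → ∀ x, f' x ∉ K j) ∧
        ∀ x, dist (f' x) (f x) < εd k f (f x) := by
    intro k f hfc hfe hfK
    obtain ⟨p, hpc, hpe, hpd, hpC⟩ := push (K k) (hK k) (εd k f) (hεcont k f) (hεpos k f hfe hfK)
    refine ⟨fun x => p (f x), hpc.comp hfc, hpe.comp hfe, ?_, fun x => hpd (f x)⟩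
    intro j hj x
    rcases Nat.lt_succ_iff_lt_or_eq.1 hj with hj' | rfl
    · by_cases hKj : (K j).Nonempty
      · intro hmem
        have h1 : Metric.infDist (f x) (K j) ≤ dist (f x) (p (f x)) :=
          Metric.infDist_le_dist_of_mem hmem
        have h2 : dist (p (f x)) (f x) < εd k f (f x) := hpd (f x)
        have h3 : εd k f (f x) ≤ q (k+1) * c j (f x) := by
          have hz : Metric.infDist (f x) (Set.range f) = 0 :=
            Metric.infDist_zero_of_mem (Set.mem_range_self x)
          have hmin : min (min 1 (g (f x) / 3))
              (M k (f x) + Metric.infDist (f x) (Set.range f)) ≤ c j (f x) := by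
            refine (min_le_right _ _).trans ?_
            rw [hz, add_zero]
            exact hMc j k hj' (f x)
          exact mul_le_mul_of_nonneg_left hmin (hqpos (k+1)).le
        have h4 : 0 < c j (f x) := by
          have hnm : f x ∉ K j := hfK j hj' x
          have := ((hK j).isClosed.notMem_iff_infDist_pos hKj).1 hnm
          simpa [hcdef, hKj] using this
        have h5 : c j (f x) = Metric.infDist (f x) (K j) := by simp [hcdef, hKj]
        have hq4 : q (k+1) ≤ 1/4 := by rw [hqsucc]; linarith [hqle k]
        have hmul : q (k+1) * c j (f x) ≤ (1/4) * c j (f x) :=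
          mul_le_mul_of_nonneg_right hq4 h4.le
        rw [dist_comm] at h2
        linarith
      · intro hmem; exact hKj ⟨_, hmem⟩
    · exact fun hmem => hpC (f x) hmem
  choose F hFc hFe hFK hFd using step
  let T : ℕ → Type := fun k => {f : X → X // Continuous f ∧ Topology.IsClosedEmbedding f ∧
    ∀ j, j < k → ∀ x, f x ∉ K j}
  let fs : ∀ k, T k := fun k => Nat.rec
    (⟨id, continuous_id, Topology.IsClosedEmbedding.id,
      fun j hj => absurd hj (Nat.not_lt_zero j)⟩ : T 0)
    (fun k ih => ⟨F k ih.1 ih.2.1 ih.2.2.1 ih.2.2.2,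
      hFc k ih.1 ih.2.1 ih.2.2.1 ih.2.2.2,
      hFe k ih.1 ih.2.1 ih.2.2.1 ih.2.2.2,
      hFK k ih.1 ih.2.1 ih.2.2.1 ih.2.2.2⟩) k
  let fk : ℕ → X → X := fun k => (fs k).1
  have hfkc : ∀ k, Continuous (fk k) := fun k => (fs k).2.1
  have hfkK : ∀ k j, j < k → ∀ x, fk k x ∉ K j := fun k => (fs k).2.2.2
  have hmove : ∀ k x, dist (fk (k+1) x) (fk k x) < εd k (fk k) (fk k x) :=
    fun k x => hFd k (fs k).1 (fs k).2.1 (fs k).2.2.1 (fs k).2.2.2 x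
  have hmoveb : ∀ k x, dist (fk (k+1) x) (fk k x) ≤ q (k+1) := by
    intro k x
    refine (hmove k x).le.trans ?_
    calc εd k (fk k) (fk k x)
        ≤ q (k+1) * 1 := mul_le_mul_of_nonneg_left
          ((min_le_left _ _).trans (min_le_left _ _)) (hqpos (k+1)).le
      _ = q (k+1) := mul_one _
  have hcauchy : ∀ x, ∃ y, Filter.Tendsto (fun k => fk k x) Filter.atTop (nhds y) := by
    intro x
    apply cauchySeq_tendsto_of_complete
    refine cauchySeq_of_le_geometric (1/4) 1 (by norm_num) fun k => ?_
    rw [dist_comm]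
    refine (hmoveb k x).trans ?_
    have h1 : q (k+1) = q k / 4 := hqsucc k
    have h2 : q k = (1/4:ℝ)^k := rfl
    have h0 : (0:ℝ) ≤ (1/4)^k := pow_nonneg (by norm_num) k
    rw [h1, h2]
    linarith
  choose flim hflim using hcauchy
  have htail : ∀ k x, dist (flim x) (fk k x) ≤ q k / 3 := by
    intro k x
    have hgen : ∀ d, dist (fk (k+d) x) (fk k x) ≤ q k / 3 - q (k+d) / 3 := by
      intro d
      induction d with
      | zero => simp
      | succ d ih =>
        have h1 := hmoveb (k+d) x
        have h2 : q (k+d+1) = q (k+d)/4 := hqsucc _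
        calc dist (fk (k+d+1) x) (fk k x)
            ≤ dist (fk (k+d+1) x) (fk (k+d) x) + dist (fk (k+d) x) (fk k x) :=
              dist_triangle _ _ _
          _ ≤ q (k+d+1) + (q k / 3 - q (k+d)/3) := by
              have := hmoveb (k+d) x
              linarith
          _ = q k / 3 - q (k+d+1)/3 := by rw [h2]; ring
    have hlim : Filter.Tendsto (fun m => dist (fk m x) (fk k x)) Filter.atTop
        (nhds (dist (flim x) (fk k x))) := (hflim x).dist tendsto_const_nhds
    refine le_of_tendsto hlim ?_
    rw [Filter.eventually_atTop]
    refine ⟨k, fun m hm => ?_⟩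
    obtain ⟨d, rfl⟩ := Nat.exists_eq_add_of_le hm
    have := hgen d
    linarith [hqpos (k+d)]
  have hdisp : ∀ k x, dist (fk k x) x ≤ g x * (1/2) * (1 - q k) := by
    intro k
    induction k with
    | zero =>
      intro x
      have hq0 : q 0 = 1 := by rw [hqdef]; norm_num
      have hd0 : dist (fk 0 x) x = 0 := by
        show dist x x = 0
        exact dist_self x
      rw [hq0, hd0]
      ring_nf
      exact le_refl 0
    | succ k ih =>
      intro x
      have h1 := hmove k x
      have h2 : εd k (fk k) (fk k x) ≤ q (k+1) * (g (fk k x) / 3) :=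
        mul_le_mul_of_nonneg_left ((min_le_left _ _).trans (min_le_right _ _)) (hqpos _).le
      have h3 : g (fk k x) ≤ g x + dist (fk k x) x := hglip (fk k x) x
      have h4 := ih x
      have h5 : dist (fk (k+1) x) x ≤ dist (fk (k+1) x) (fk k x) + dist (fk k x) x :=
        dist_triangle _ _ _
      have h6 : q (k+1) = q k / 4 := hqsucc k
      have hgx := hgpos x
      have hqk := hqpos k
      have hql := hqle k
      have hB : dist (fk k x) x ≤ g x / 2 := by nlinarith
      have hmov2 : dist (fk (k+1) x) (fk k x) ≤ q (k+1) * (g x * (3/2) / 3) := by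
        refine (h1.le.trans h2).trans ?_
        refine mul_le_mul_of_nonneg_left ?_ (hqpos _).le
        linarith
      nlinarith [mul_nonneg hqk.le hgx.le]
  have hclose : ∀ x, ∃ i, x ∈ U i ∧ flim x ∈ U i := by
    intro x
    have hb : dist (flim x) x ≤ g x / 2 := by
      have hlim : Filter.Tendsto (fun k => dist (fk k x) x) Filter.atTop
          (nhds (dist (flim x) x)) := (hflim x).dist tendsto_const_nhds
      refine le_of_tendsto hlim (Filter.Eventually.of_forall fun k => ?_)
      have := hdisp k x
      nlinarith [hqpos k, hgpos x, hqle k]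
    exact hgU x (flim x) (by linarith [hgpos x])
  have hunif : TendstoUniformly (fun k x => fk k x) flim Filter.atTop := by
    rw [Metric.tendstoUniformly_iff]
    intro ε hε
    have hq0 : Filter.Tendsto q Filter.atTop (nhds 0) := by
      rw [hqdef]
      exact tendsto_pow_atTop_nhds_zero_of_lt_one (by norm_num) (by norm_num)
    have hev : ∀ᶠ k in Filter.atTop, q k < ε := hq0.eventually_lt_const hε
    filter_upwards [hev] with k hk x
    have := htail k x
    linarith [hqpos k]
  have hflimc : Continuous flim := hunif.continuous (Filter.Eventually.of_forall hfkc).frequently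
  have havoid : ∀ j x, flim x ∉ K j := by
    intro j x
    by_cases hKj : (K j).Nonempty
    · have hnotmem : fk (j+1) x ∉ K j := hfkK (j+1) j (Nat.lt_succ_self j) x
      set δ := Metric.infDist (fk (j+1) x) (K j) with hδ
      have hδpos : 0 < δ := ((hK j).isClosed.notMem_iff_infDist_pos hKj).1 hnotmem
      have hstep : ∀ k, j + 1 ≤ k → δ * (1/2 + q k) ≤ Metric.infDist (fk k x) (K j) := by
        intro k hk
        induction k, hk using Nat.le_induction with
        | base =>
          have hq1 : q (j+1) ≤ 1/4 := by rw [hqsucc]; linarith [hqle j]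
          nlinarith [hδpos]
        | succ k hk ih =>
          have h1 := hmove k x
          have hj' : j < k := by omega
          have h2 : εd k (fk k) (fk k x) ≤ q (k+1) * Metric.infDist (fk k x) (K j) := by
            have hz : Metric.infDist (fk k x) (Set.range (fk k)) = 0 :=
              Metric.infDist_zero_of_mem (Set.mem_range_self x)
            have hmin : min (min 1 (g (fk k x) / 3))
                (M k (fk k x) + Metric.infDist (fk k x) (Set.range (fk k)))
                ≤ Metric.infDist (fk k x) (K j) := by
              refine (min_le_right _ _).trans ?_
              rw [hz, add_zero]
              have := hMc j k hj' (fk k x)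
              simpa [hcdef, hKj] using this
            exact mul_le_mul_of_nonneg_left hmin (hqpos _).le
          have h3 : Metric.infDist (fk k x) (K j)
              ≤ Metric.infDist (fk (k+1) x) (K j) + dist (fk k x) (fk (k+1) x) :=
            Metric.infDist_le_infDist_add_dist
          have h4 : dist (fk k x) (fk (k+1) x) < q (k+1) * Metric.infDist (fk k x) (K j) := by
            rw [dist_comm]; exact lt_of_lt_of_le h1 h2
          have hk2 : 2 ≤ k + 1 := by omega
          have h5 : q (k+1) ≤ 1/16 := by
            rw [hqdef]
            calc (1/4:ℝ)^(k+1) ≤ (1/4)^2 :=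
              pow_le_pow_of_le_one (by norm_num) (by norm_num) hk2
              _ = 1/16 := by norm_num
          have h6 : q (k+1) = q k / 4 := hqsucc k
          have hu0 := hqpos (k+1)
          have hmulih : δ * (1/2 + q k) * (1 - q (k+1))
              ≤ Metric.infDist (fk k x) (K j) * (1 - q (k+1)) :=
            mul_le_mul_of_nonneg_right ih (by linarith)
          have key : δ * (1/2 + q (k+1)) ≤ δ * (1/2 + q k) * (1 - q (k+1)) := by
            nlinarith [mul_nonneg hδpos.le hu0.le,
              mul_le_mul_of_nonneg_left h5 (mul_nonneg hδpos.le hu0.le)]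
          linarith [key, hmulih, h3, h4]
      have hlim : Filter.Tendsto (fun k => Metric.infDist (fk k x) (K j)) Filter.atTop
          (nhds (Metric.infDist (flim x) (K j))) :=
        ((Metric.continuous_infDist_pt (K j)).tendsto (flim x)).comp (hflim x)
      have hge : δ / 2 ≤ Metric.infDist (flim x) (K j) := by
        refine ge_of_tendsto hlim ?_
        rw [Filter.eventually_atTop]
        exact ⟨j+1, fun k hk => by nlinarith [hstep k hk, hqpos k, hδpos]⟩
      intro hmem
      rw [Metric.infDist_zero_of_mem hmem] at hge
      linarith
    · exact fun hmem => hKj ⟨_, hmem⟩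
  exact ⟨flim, hflimc, hclose, havoid⟩

/-- Every compact subset of an `N_n`-space is a `Z`-set; consequently every closed,
locally compact subset of an `N_n`-space is a `Z`-set. -/
theorem isZSet_of_compact_and_of_closed_locallyCompact (n : ℕ) (X : Type)
    [MetricSpace X] (hX : IsNnSpace n X) :
    (∀ A : Set X, IsCompact A → IsZSet X A) ∧
      ∀ A : Set X, IsClosed A → LocallyCompactSpace A → IsZSet X A := by
  constructor
  · intro A hA
    refine ⟨hA.isClosed, ?_⟩
    intro ι U hU hUc
    obtain ⟨f, hfc, -, hfcl, hfA⟩ := exists_closedEmbedding_avoiding n X hX A hA ι U hU hUc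
    exact ⟨⟨f, hfc⟩, fun z => hfcl z, hfA⟩
  · intro A hA hloc
    refine ⟨hA, ?_⟩
    intro ι U hU hUc
    by_cases hXe : IsEmpty X
    · exact ⟨ContinuousMap.id X, fun z => (hXe.false z).elim, fun x => (hXe.false x).elim⟩
    rw [not_isEmpty_iff] at hXe
    have hpol : PolishSpace X := hX.1
    haveI := hpol
    haveI : SecondCountableTopology X := hpol.toSecondCountableTopology
    haveI : SigmaCompactSpace A := inferInstance
    set K : ℕ → Set X := fun j => (Subtype.val : A → X) '' (compactCovering A j) with hKdef
    have hKcomp : ∀ j, IsCompact (K j) :=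
      fun j => (isCompact_compactCovering A j).image continuous_subtype_val
    have hKcover : ∀ x ∈ A, ∃ j, x ∈ K j := by
      intro x hx
      have hmem : (⟨x, hx⟩ : A) ∈ ⋃ j, compactCovering A j := by
        rw [iUnion_compactCovering]; trivial
      obtain ⟨j, hj⟩ := mem_iUnion.1 hmem
      exact ⟨j, ⟨⟨x, hx⟩, hj, rfl⟩⟩
    have hpart1 : ∀ C : Set X, IsCompact C → ∀ (κ : Type) (V : κ → Set X),
        (∀ i, IsOpen (V i)) → (⋃ i, V i) = univ →
        ∃ f : X → X, Continuous f ∧ Topology.IsClosedEmbedding f ∧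
        (∀ x, ∃ i, x ∈ V i ∧ f x ∈ V i) ∧ ∀ x, f x ∉ C :=
      fun C hC κ V hV hVc => exists_closedEmbedding_avoiding n X hX C hC κ V hV hVc
    have key : ∃ f : X → X, Continuous f ∧ (∀ x, ∃ i, x ∈ U i ∧ f x ∈ U i) ∧
        ∀ j x, f x ∉ K j := by
      obtain ⟨m2, hm2, hc2⟩ := hpol.complete
      have hpart1' : ∀ C : Set X, @IsCompact X m2.toUniformSpace.toTopologicalSpace C →
        ∀ (κ : Type) (V : κ → Set X),
        (∀ i, @IsOpen X m2.toUniformSpace.toTopologicalSpace (V i)) →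
        (⋃ i, V i) = univ → ∃ f : X → X,
          @Continuous X X m2.toUniformSpace.toTopologicalSpace
            m2.toUniformSpace.toTopologicalSpace f ∧
          @Topology.IsClosedEmbedding X X m2.toUniformSpace.toTopologicalSpace
            m2.toUniformSpace.toTopologicalSpace f ∧
          (∀ x, ∃ i, x ∈ V i ∧ f x ∈ V i) ∧ ∀ x, f x ∉ C := by
        rw [hm2]; exact hpart1
      have hKcomp' : ∀ j, @IsCompact X m2.toUniformSpace.toTopologicalSpace (K j) := by
        rw [hm2]; exact hKcomp
      have hU' : ∀ i, @IsOpen X m2.toUniformSpace.toTopologicalSpace (U i) := by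
        rw [hm2]; exact hU
      obtain ⟨f, hfc, hfcl, hfK⟩ := @core X m2 hc2 ⟨hXe.some⟩ hpart1' K hKcomp' ι U hU' hUc
      rw [hm2] at hfc
      exact ⟨f, hfc, hfcl, hfK⟩
    obtain ⟨f, hfc, hfcl, hfK⟩ := key
    refine ⟨⟨f, hfc⟩, fun z => hfcl z, ?_⟩
    intro x hxA
    obtain ⟨j, hj⟩ := hKcover _ hxA
    exact hfK j x hj

end NobelingPaper
end

section
/- Gluing of local homeomorphism approximations: Let $U$ be an open subset of a metric space $Y$ and let $A = Y \setminus U$. Let $\mathcal{U}$ be the cover of $U$ by open balls whose radius equals one fifth of the distance from their center to $A$. If $V$ is an open neighborhood of $A$, $f$ is a map from a metric space $X$ into $Y$ whose restriction to $f^{-1}(V)$ is an embedding into $V$, and $g: f^{-1}(U) \to U$ is a $\mathcal{U}$-approximation of $f|_{f^{-1}(U)}$ that is an embedding into $U$, then the map $h = f|_{f^{-1}(A)} \cup g$ is an embedding of $X$ into $Y$. Moreover, if $f|_{f^{-1}(V)}$ and $g$ are closed embeddings, then $h$ is a closed embedding. -/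
open Set ContinuousMap Filter Topology
open scoped ENNReal

namespace NobelingPaper

private lemma inducing_eps {α β : Type*} [MetricSpace α] [MetricSpace β] {F : α → β}
    (hF : Topology.IsInducing F) (a : α) {ε : ℝ} (hε : 0 < ε) :
    ∃ δ > 0, ∀ x, dist (F x) (F a) < δ → dist x a < ε := by
  have h1 : Metric.ball a ε ∈ 𝓝 a := Metric.ball_mem_nhds a hε
  rw [hF.nhds_eq_comap] at h1
  obtain ⟨t, ht, hsub⟩ := Filter.mem_comap.1 h1
  obtain ⟨δ, hδ, hball⟩ := Metric.mem_nhds_iff.1 ht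
  exact ⟨δ, hδ, fun x hx => hsub (hball hx)⟩

private lemma closed_in_sub {Y : Type*} [TopologicalSpace Y] {W : Set Y} {S : Set W}
    (hS : IsClosed S) {y : Y} (hy : y ∈ closure (Subtype.val '' S)) (hyW : y ∈ W) :
    (⟨y, hyW⟩ : W) ∈ S := by
  obtain ⟨C, hC, hCpre⟩ := isClosed_induced_iff.1 hS
  have hsub : Subtype.val '' S ⊆ C := by
    rintro z ⟨p, hp, rfl⟩
    rw [← hCpre] at hp
    exact hp
  have hyC : y ∈ C := hC.closure_subset ((closure_mono hsub) hy)
  rw [← hCpre]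
  exact hyC

/-- **Gluing of local approximations.**  Let `U` be an open subset of a metric space
`Y`, let `A = Y \ U`, and let `V` be an open neighborhood of `A`.  Suppose the map
`f : X → Y` restricts to an embedding of `f⁻¹(V)` into `V`, and `g` is an embedding
of `f⁻¹(U)` into `U` that approximates `f` with respect to the cover of `U` by the
balls whose radius is one fifth of the distance from the center to `A`.  Then the
combined map `h = f|_(f⁻¹(A)) ∪ g` is an embedding of `X` into `Y`; if moreover the
two restrictions are closed embeddings, then `h` is a closed embedding. -/
theorem glue_embedding {X Y : Type} [MetricSpace X] [MetricSpace Y]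
    (U : Set Y) (hU : IsOpen U) (V : Set Y) (hV : IsOpen V) (hAV : Uᶜ ⊆ V)
    (f : C(X, Y))
    (g : (f ⁻¹' U : Set X) → U) (hgc : Continuous g)
    (hclose : ∀ x : (f ⁻¹' U : Set X), ∃ c ∈ U,
      f x ∈ Metric.ball c (Metric.infDist c Uᶜ / 5) ∧
        (g x : Y) ∈ Metric.ball c (Metric.infDist c Uᶜ / 5))
    (hfV : Topology.IsEmbedding fun x : (f ⁻¹' V : Set X) => (⟨f x, x.2⟩ : V))
    (hg : Topology.IsEmbedding g)
    (h : X → Y)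
    (hdef : ∀ x : X, (∀ hx : f x ∈ U, h x = g ⟨x, hx⟩) ∧ (f x ∉ U → h x = f x)) :
    Topology.IsEmbedding h ∧
      ((Topology.IsClosedEmbedding fun x : (f ⁻¹' V : Set X) => (⟨f x, x.2⟩ : V)) →
        Topology.IsClosedEmbedding g → Topology.IsClosedEmbedding h) := by
  -- key metric estimate
  have hgap : ∀ (x : X) (hx : f x ∈ U), ∀ y ∉ U,
      2 * dist (f x) ((g ⟨x, hx⟩ : U) : Y) ≤ dist (f x) y := by
    intro x hx y hy
    obtain ⟨c, hcU, hfc, hgc'⟩ := hclose ⟨x, hx⟩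
    rw [Metric.mem_ball] at hfc hgc'
    have h1 : Metric.infDist c Uᶜ ≤ dist c y := Metric.infDist_le_dist_of_mem hy
    have h2 := dist_triangle (f x) c ((g ⟨x, hx⟩ : U) : Y)
    have h3 := dist_triangle c (f x) y
    have h4 : dist c (f x) = dist (f x) c := dist_comm _ _
    have h5 : dist c ((g ⟨x, hx⟩ : U) : Y) = dist ((g ⟨x, hx⟩ : U) : Y) c := dist_comm _ _
    linarith
  have hfh : ∀ (x : X), ∀ y ∉ U, 2 * dist (f x) (h x) ≤ dist (f x) y := by
    intro x y hy
    by_cases hx : f x ∈ U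
    · rw [(hdef x).1 hx]; exact hgap x hx y hy
    · rw [(hdef x).2 hx, dist_self]
      simpa using dist_nonneg
  have est1 : ∀ (x : X), ∀ y ∉ U, dist (f x) y ≤ 2 * dist (h x) y := by
    intro x y hy
    have h1 := hfh x y hy
    have h2 := dist_triangle (f x) (h x) y
    linarith
  have est2 : ∀ (x : X), ∀ y ∉ U, dist (h x) y ≤ 2 * dist (f x) y := by
    intro x y hy
    have h1 := hfh x y hy
    have h2 := dist_triangle (h x) (f x) y
    have h3 : dist (h x) (f x) = dist (f x) (h x) := dist_comm _ _
    have h4 : (0:ℝ) ≤ dist (f x) y := dist_nonneg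
    linarith
  -- continuity
  have hcont : Continuous h := by
    rw [continuous_iff_continuousAt]
    intro x₀
    by_cases hx₀ : f x₀ ∈ U
    · have hopen : IsOpen (f ⁻¹' U) := hU.preimage f.continuous
      have hco : ContinuousOn h (f ⁻¹' U) := by
        rw [continuousOn_iff_continuous_restrict]
        have heq : Set.domRestrict (f ⁻¹' U) h = fun p => ((g p : U) : Y) := by
          funext p
          exact (hdef p.1).1 p.2
        rw [heq]
        exact continuous_subtype_val.comp hgc
      exact hco.continuousAt (hopen.mem_nhds hx₀)
    · rw [Metric.continuousAt_iff]
      intro ε hε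
      obtain ⟨δ, hδ, hd⟩ := Metric.continuousAt_iff.1 f.continuous.continuousAt (ε / 2)
        (by linarith)
      refine ⟨δ, hδ, fun {x} hx => ?_⟩
      have h1 := est2 x (f x₀) hx₀
      have h2 := hd hx
      rw [(hdef x₀).2 hx₀]
      linarith
  -- the key ε-δ criterion
  have crit : ∀ (x₀ : X), ∀ ε > (0:ℝ), ∃ δ > 0, ∀ x,
      dist (h x) (h x₀) < δ → dist x x₀ < ε := by
    intro x₀ ε hε
    by_cases hx₀ : f x₀ ∈ U
    · obtain ⟨δ₁, hδ₁, hd₁⟩ := inducing_eps hg.toIsInducing ⟨x₀, hx₀⟩ hε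
      obtain ⟨r, hr, hball⟩ := Metric.isOpen_iff.1 hU _ (g ⟨x₀, hx₀⟩).2
      refine ⟨min δ₁ r, lt_min hδ₁ hr, fun x hx => ?_⟩
      have hhx₀ : h x₀ = ((g ⟨x₀, hx₀⟩ : U) : Y) := (hdef x₀).1 hx₀
      have hxU : f x ∈ U := by
        by_contra hxA
        have : h x ∈ U := by
          apply hball
          rw [Metric.mem_ball, ← hhx₀]
          exact lt_of_lt_of_le hx (min_le_right _ _)
        rw [(hdef x).2 hxA] at this
        exact hxA this
      have hd : dist (g ⟨x, hxU⟩) (g ⟨x₀, hx₀⟩) < δ₁ := by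
        rw [Subtype.dist_eq, ← (hdef x).1 hxU, ← hhx₀]
        exact lt_of_lt_of_le hx (min_le_left _ _)
      have := hd₁ ⟨x, hxU⟩ hd
      rwa [Subtype.dist_eq] at this
    · have hx₀V : f x₀ ∈ V := hAV hx₀
      obtain ⟨δ₁, hδ₁, hd₁⟩ := inducing_eps hfV.toIsInducing ⟨x₀, hx₀V⟩ hε
      obtain ⟨r, hr, hball⟩ := Metric.isOpen_iff.1 hV _ hx₀V
      refine ⟨min δ₁ r / 2, by positivity, fun x hx => ?_⟩
      have hhx₀ : h x₀ = f x₀ := (hdef x₀).2 hx₀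
      rw [hhx₀] at hx
      have hf1 : dist (f x) (f x₀) < min δ₁ r := by
        have := est1 x (f x₀) hx₀
        linarith
      have hxV : f x ∈ V := hball (by
        rw [Metric.mem_ball]
        exact lt_of_lt_of_le hf1 (min_le_right _ _))
      have hd : dist ((⟨f (⟨x, hxV⟩ : (f ⁻¹' V : Set X)), (⟨x, hxV⟩ : (f ⁻¹' V : Set X)).2⟩ : V))
          ((⟨f (⟨x₀, hx₀V⟩ : (f ⁻¹' V : Set X)), (⟨x₀, hx₀V⟩ : (f ⁻¹' V : Set X)).2⟩ : V)) < δ₁ := by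
        rw [Subtype.dist_eq]
        exact lt_of_lt_of_le hf1 (min_le_left _ _)
      have := hd₁ ⟨x, hxV⟩ hd
      rwa [Subtype.dist_eq] at this
  -- injectivity
  have hinj : Function.Injective h := by
    intro a b hab
    by_cases ha : f a ∈ U <;> by_cases hb : f b ∈ U
    · have : g ⟨a, ha⟩ = g ⟨b, hb⟩ := by
        apply Subtype.ext
        rw [← (hdef a).1 ha, ← (hdef b).1 hb, hab]
      have := hg.injective this
      exact congrArg Subtype.val this
    · exfalso
      have hmem : ((g ⟨a, ha⟩ : U) : Y) ∈ U := (g ⟨a, ha⟩).2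
      rw [← (hdef a).1 ha, hab, (hdef b).2 hb] at hmem
      exact hb hmem
    · exfalso
      have hmem : ((g ⟨b, hb⟩ : U) : Y) ∈ U := (g ⟨b, hb⟩).2
      rw [← (hdef b).1 hb, ← hab, (hdef a).2 ha] at hmem
      exact ha hmem
    · have hfab : f a = f b := by rw [← (hdef a).2 ha, ← (hdef b).2 hb, hab]
      have : (⟨f (⟨a, hAV ha⟩ : (f ⁻¹' V : Set X)), (⟨a, hAV ha⟩ : (f ⁻¹' V : Set X)).2⟩ : V)
          = ⟨f (⟨b, hAV hb⟩ : (f ⁻¹' V : Set X)), (⟨b, hAV hb⟩ : (f ⁻¹' V : Set X)).2⟩ := by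
        exact Subtype.ext hfab
      have := hfV.injective this
      exact congrArg Subtype.val this
  have hind : Topology.IsInducing h := by
    rw [Topology.isInducing_iff_nhds]
    intro x₀
    refine le_antisymm ((hcont.tendsto x₀).le_comap) ?_
    intro s hs
    obtain ⟨ε, hε, hballs⟩ := Metric.mem_nhds_iff.1 hs
    obtain ⟨δ, hδ, hc⟩ := crit x₀ ε hε
    exact Filter.mem_comap.2 ⟨Metric.ball (h x₀) δ, Metric.ball_mem_nhds _ hδ,
      fun x hx => hballs (hc x hx)⟩
  have hemb : Topology.IsEmbedding h := ⟨hind, hinj⟩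
  refine ⟨hemb, fun hfVc hgcl => ⟨hemb, ?_⟩⟩
  -- closed range
  apply isClosed_of_closure_subset
  intro y hy
  by_cases hyU : y ∈ U
  · -- y comes from g
    have himg : U ∩ Set.range h ⊆ Subtype.val '' (Set.range g) := by
      rintro z ⟨hzU, x, rfl⟩
      have hxU : f x ∈ U := by
        by_contra hxA
        rw [(hdef x).2 hxA] at hzU
        exact hxA hzU
      exact ⟨g ⟨x, hxU⟩, ⟨⟨x, hxU⟩, rfl⟩, ((hdef x).1 hxU).symm⟩
    have h2 : y ∈ closure (Subtype.val '' (Set.range g)) := by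
      have := hU.inter_closure (t := Set.range h) ⟨hyU, hy⟩
      exact closure_mono himg this
    have h3 := closed_in_sub hgcl.isClosed_range h2 hyU
    obtain ⟨p, hp⟩ := h3
    refine ⟨p.1, ?_⟩
    rw [(hdef p.1).1 p.2]
    exact congrArg Subtype.val hp
  · -- y ∈ A, comes from f
    have hyV : y ∈ V := hAV hyU
    obtain ⟨r, hr, hball⟩ := Metric.isOpen_iff.1 hV y hyV
    set F : (f ⁻¹' V : Set X) → V := fun x => (⟨f x, x.2⟩ : V) with hF
    have h1 : y ∈ closure (Subtype.val '' (Set.range F)) := by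
      rw [Metric.mem_closure_iff]
      intro ε hε
      obtain ⟨z, hz, hdz⟩ := Metric.mem_closure_iff.1 hy (min ε r / 2) (by positivity)
      obtain ⟨x, rfl⟩ := hz
      have e1 : dist (f x) y ≤ 2 * dist (h x) y := est1 x y hyU
      have e2 : dist (h x) y = dist y (h x) := dist_comm _ _
      have hfy : dist (f x) y < min ε r := by linarith
      have hfxV : f x ∈ V := hball (by
        rw [Metric.mem_ball]
        exact lt_of_lt_of_le hfy (min_le_right _ _))
      refine ⟨f x, ⟨F ⟨x, hfxV⟩, ⟨⟨x, hfxV⟩, rfl⟩, rfl⟩, ?_⟩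
      rw [dist_comm]
      exact lt_of_lt_of_le hfy (min_le_left _ _)
    have h3 := closed_in_sub hfVc.isClosed_range h1 hyV
    obtain ⟨p, hp⟩ := h3
    have hfp : f p.1 = y := congrArg Subtype.val hp
    refine ⟨p.1, ?_⟩
    rw [(hdef p.1).2 (by rw [hfp]; exact hyU)]
    exact hfp

end NobelingPaper
end
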